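/- arXiv:1212.3413 — 16 statements merged into one kernel-verified Lean document; each statement's English description precedes it below -/
import Mathlib

section
/- Let T be a nonzero real number and let Γ = (V, E, s, t) be an oriented graph admitting a fair and balanced T-cost. Then for every vertex v ∈ V, the set {e ∈ E : s(e) = v} of edges emanating from v is finite and has cardinality at most T². -/
/-- A fair and balanced `T`-cost on the oriented graph with vertex set `V`,
edge set `E`, source map `s` and target map `t`. -/
def FairBalancedCost {V E : Type*} (s t : E → V) (T : ℝ) (W : E → ℝ) : Prop :=
  (∀ e, 0 < W e) ∧
  (∃ σ : E → E, Function.Involutive σ ∧ (∀ e, s (σ e) = t e) ∧ (∀ e, t (σ e) = s e) ∧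
      ∀ e, W e * W (σ e) = 1) ∧
  (∀ v : V, HasSum (fun e : {e : E // s e = v} => W e.1) |T|) ∧
  (0 < T → ∀ v : V,
    {e : E | s e = v ∧ t e = v}.Finite ∧ Even (Nat.card {e : E | s e = v ∧ t e = v}))

theorem degree_bound_of_fairBalancedCost {V E : Type*} (s t : E → V) (T : ℝ) (hT : T ≠ 0)
    (W : E → ℝ) (h : FairBalancedCost s t T W) :
    ∀ v : V, {e : E | s e = v}.Finite ∧ (Nat.card {e : E | s e = v} : ℝ) ≤ T ^ 2 := by
  obtain ⟨hpos, ⟨σ, hinv, hσs, hσt, hσW⟩, hsum, -⟩ := h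
  have habs : 0 < |T| := abs_pos.mpr hT
  -- every edge weight is at most |T|
  have hle : ∀ e : E, W e ≤ |T| := fun e =>
    le_hasSum (hsum (s e)) ⟨e, rfl⟩ (fun j _ => (hpos j.1).le)
  -- hence every edge weight is at least |T|⁻¹
  have hlb : ∀ e : E, |T|⁻¹ ≤ W e := by
    intro e
    have h1 := hσW e
    have h2 := hle (σ e)
    have h3 := hpos (σ e)
    have h4 := hpos e
    rw [inv_le_iff_one_le_mul₀ habs]
    nlinarith
  intro v
  haveI hfin : Finite {e : E // s e = v} := by
    by_contra hinf
    have hcof := (hsum v).summable.tendsto_cofinite_zero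
    have hev : ∀ᶠ x : {e : E // s e = v} in Filter.cofinite, W x.1 < |T|⁻¹ :=
      hcof.eventually_lt_const (inv_pos.mpr habs)
    have hfin' : {x : {e : E // s e = v} | ¬ W x.1 < |T|⁻¹}.Finite := hev
    have huniv : {x : {e : E // s e = v} | ¬ W x.1 < |T|⁻¹} = Set.univ := by
      ext x
      simp only [Set.mem_setOf_eq, Set.mem_univ, iff_true, not_lt]
      exact hlb x.1
    rw [huniv, Set.finite_univ_iff] at hfin'
    exact hinf hfin'
  have hSfin : {e : E | s e = v}.Finite := Set.finite_coe_iff.mp hfin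
  refine ⟨hSfin, ?_⟩
  haveI : Fintype {e : E // s e = v} := Fintype.ofFinite _
  have hsumeq : ∑ e : {e : E // s e = v}, W e.1 = |T| :=
    (hasSum_fintype _).unique (hsum v)
  have hcard : (Fintype.card {e : E // s e = v} : ℝ) * |T|⁻¹ ≤
      ∑ e : {e : E // s e = v}, W e.1 := by
    calc (Fintype.card {e : E // s e = v} : ℝ) * |T|⁻¹
        = ∑ _e : {e : E // s e = v}, |T|⁻¹ := by
          rw [Finset.sum_const, Finset.card_univ, nsmul_eq_mul]
      _ ≤ ∑ e : {e : E // s e = v}, W e.1 := Finset.sum_le_sum fun e _ => hlb e.1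
  rw [hsumeq] at hcard
  have hnc : Nat.card {e : E | s e = v} = Fintype.card {e : E // s e = v} := by
    show Nat.card {e : E // s e = v} = _
    exact Nat.card_eq_fintype_card
  rw [hnc, ← sq_abs, sq]
  calc (Fintype.card {e : E // s e = v} : ℝ)
      = (Fintype.card {e : E // s e = v} : ℝ) * |T|⁻¹ * |T| := by
        field_simp
    _ ≤ |T| * |T| := mul_le_mul_of_nonneg_right hcard habs.le
end

section
/- Let Γ = (V, E, s, t) be a finite connected symmetric oriented graph with at least one edge. Then there exists c : V → ℝ with c_v > 0 for every vertex v such that A(Γ)·c = ‖Γ‖·c, and the cost W defined by W(e) = c_{t(e)}/c_{s(e)} is a fair and balanced (−‖Γ‖)-cost on Γ. If moreover every vertex of Γ has an even number of loops, then W is also a fair and balanced ‖Γ‖-cost on Γ. -/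
/-- Connectedness of an oriented graph: any two vertices are joined by a finite
chain of edges, traversed in either direction. -/
def GraphConnected {V E : Type*} (s t : E → V) : Prop :=
  ∀ v w : V, Relation.ReflTransGen
    (fun a b => ∃ e : E, (s e = a ∧ t e = b) ∨ (s e = b ∧ t e = a)) v w

/-- The adjacency matrix of a finite oriented graph. -/
noncomputable def adjMatrix {V E : Type*} [Fintype V] (s t : E → V) : Matrix V V ℝ :=
  Matrix.of fun v w => (Nat.card {e : E // s e = v ∧ t e = w} : ℝ)

/-- The norm of a finite oriented graph: the operator norm of the linear map on the
Euclidean space `ℝ^V` induced by the adjacency matrix. -/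
noncomputable def graphNorm {V E : Type*} [Fintype V] [DecidableEq V] (s t : E → V) : ℝ :=
  ‖Matrix.toEuclideanCLM (𝕜 := ℝ) (adjMatrix s t)‖

set_option maxHeartbeats 2000000 in
theorem exists_perron_cost {V E : Type*} [Fintype V] [DecidableEq V] [Fintype E]
    (s t : E → V) (hE : Nonempty E)
    (hsym : ∃ σ : E → E, Function.Involutive σ ∧ (∀ e, s (σ e) = t e) ∧ ∀ e, t (σ e) = s e)
    (hconn : GraphConnected s t) :
    ∃ c : V → ℝ, (∀ v, 0 < c v) ∧
      (adjMatrix s t).mulVec c = graphNorm s t • c ∧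
      FairBalancedCost s t (-(graphNorm s t)) (fun e => c (t e) / c (s e)) ∧
      ((∀ v : V, Even (Nat.card {e : E | s e = v ∧ t e = v})) →
        FairBalancedCost s t (graphNorm s t) (fun e => c (t e) / c (s e))) := by
  classical
  obtain ⟨σ, hσinv, hσs, hσt⟩ := hsym
  set A := adjMatrix s t with hA
  -- basic facts about A
  have hAdef : ∀ v w, A v w = ((Finset.univ.filter (fun e => s e = v ∧ t e = w)).card : ℝ) := by
    intro v w
    simp [hA, adjMatrix, Nat.card_eq_fintype_card, Fintype.card_subtype]
  have hA0 : ∀ v w, 0 ≤ A v w := by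
    intro v w; rw [hAdef]; positivity
  have hAsym : ∀ v w, A w v = A v w := by
    intro v w
    simp only [hA, adjMatrix, Matrix.of_apply]
    congr 1
    exact Nat.card_congr
      ⟨fun e => ⟨σ e.1, by rw [hσs, hσt]; exact ⟨e.2.2, e.2.1⟩⟩,
       fun e => ⟨σ e.1, by rw [hσs, hσt]; exact ⟨e.2.2, e.2.1⟩⟩,
       fun e => Subtype.ext (hσinv e.1), fun e => Subtype.ext (hσinv e.1)⟩
  -- mulVec as a sum over edges with given source
  have hmv : ∀ (c : V → ℝ) (v : V),
      A.mulVec c v = ∑ e ∈ Finset.univ.filter (fun e => s e = v), c (t e) := by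
    intro c v
    rw [← Finset.sum_fiberwise (Finset.univ.filter (fun e => s e = v)) t (fun e => c (t e))]
    rw [Matrix.mulVec, dotProduct]
    refine Finset.sum_congr rfl fun w _ => ?_
    rw [Finset.filter_filter, hAdef]
    have hconst : ∀ e ∈ Finset.univ.filter (fun e => s e = v ∧ t e = w), c (t e) = c w :=
      fun e he => by rw [(Finset.mem_filter.mp he).2.2]
    rw [Finset.sum_congr rfl hconst, Finset.sum_const, nsmul_eq_mul]
  -- the operator
  set T := Matrix.toEuclideanCLM (𝕜 := ℝ) A with hTdef
  have hip : ∀ x y : EuclideanSpace ℝ V, (inner ℝ x y : ℝ) = ∑ v, x v * y v := by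
    intro x y; simp [PiLp.inner_apply, RCLike.inner_apply]
    exact Finset.sum_congr rfl fun _ _ => mul_comm _ _
  have hTapp : ∀ (x : EuclideanSpace ℝ V) (v : V), T x v = A.mulVec x v := fun _ _ => rfl
  set f : EuclideanSpace ℝ V → ℝ := fun x => (inner ℝ (T x) x : ℝ) with hfdef
  have hf : ∀ x : EuclideanSpace ℝ V, f x = ∑ v, ∑ w, A v w * x w * x v := by
    intro x
    rw [hfdef]
    simp only [hip, hTapp, Matrix.mulVec, dotProduct, Finset.sum_mul]
  -- self-adjointness
  have hsa : IsSelfAdjoint T := by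
    rw [ContinuousLinearMap.isSelfAdjoint_iff_isSymmetric]
    intro x y
    show (inner ℝ (T x) y : ℝ) = inner ℝ x (T y)
    rw [hip, hip]
    simp only [hTapp, Matrix.mulVec, dotProduct, Finset.sum_mul, Finset.mul_sum]
    rw [Finset.sum_comm]
    exact Finset.sum_congr rfl fun v _ => Finset.sum_congr rfl fun w _ => by
      rw [hAsym v w]; ring
  have hsymm : ∀ a b : EuclideanSpace ℝ V, (inner ℝ (T a) b : ℝ) = inner ℝ (T b) a := by
    intro a b
    have := (ContinuousLinearMap.isSelfAdjoint_iff_isSymmetric.mp hsa) a b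
    rw [show ((T : EuclideanSpace ℝ V →ₗ[ℝ] EuclideanSpace ℝ V) a) = T a from rfl,
      show ((T : EuclideanSpace ℝ V →ₗ[ℝ] EuclideanSpace ℝ V) b) = T b from rfl] at this
    rw [this, real_inner_comm]
  -- find a maximizer of f on the unit sphere
  obtain ⟨e₀⟩ := hE
  have hVne : Nonempty V := ⟨s e₀⟩
  have hcont : Continuous f := by
    exact Continuous.inner T.continuous continuous_id
  have hsph : (Metric.sphere (0 : EuclideanSpace ℝ V) 1).Nonempty := by
    refine ⟨EuclideanSpace.single (s e₀) 1, ?_⟩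
    simp [EuclideanSpace.norm_single]
  obtain ⟨x₀, hx₀S, hx₀max⟩ :=
    (isCompact_sphere (0 : EuclideanSpace ℝ V) 1).exists_isMaxOn hsph hcont.continuousOn
  have hx₀norm : ‖x₀‖ = 1 := mem_sphere_zero_iff_norm.mp hx₀S
  -- replace by the componentwise absolute value
  set y : EuclideanSpace ℝ V := (WithLp.equiv 2 (V → ℝ)).symm (fun v => |x₀ v|) with hydef
  have hyv : ∀ v, y v = |x₀ v| := fun _ => rfl
  have habs_norm : ∀ x : EuclideanSpace ℝ V,
      ‖((WithLp.equiv 2 (V → ℝ)).symm (fun v => |x v|) : EuclideanSpace ℝ V)‖ = ‖x‖ := by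
    intro x
    rw [EuclideanSpace.norm_eq, EuclideanSpace.norm_eq]
    congr 1
    exact Finset.sum_congr rfl fun v _ => by
      simp [Real.norm_eq_abs, abs_abs]
  have hynorm : ‖y‖ = 1 := by rw [hydef, habs_norm, hx₀norm]
  have hy0 : y ≠ 0 := by
    intro h; rw [h, norm_zero] at hynorm; exact one_ne_zero hynorm.symm
  have habs_f : ∀ x : EuclideanSpace ℝ V,
      |f x| ≤ f ((WithLp.equiv 2 (V → ℝ)).symm (fun v => |x v|)) := by
    intro x
    rw [hf, hf]
    refine le_trans (Finset.abs_sum_le_sum_abs _ _) (Finset.sum_le_sum fun v _ => ?_)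
    refine le_trans (Finset.abs_sum_le_sum_abs _ _) (Finset.sum_le_sum fun w _ => ?_)
    have : |A v w * x w * x v| = A v w * |x w| * |x v| := by
      rw [abs_mul, abs_mul, abs_of_nonneg (hA0 v w)]
    rw [this]
    exact le_of_eq rfl
  have hymax : IsMaxOn f (Metric.sphere (0 : EuclideanSpace ℝ V) 1) y := by
    intro z hz
    calc f z ≤ f x₀ := hx₀max hz
      _ ≤ |f x₀| := le_abs_self _
      _ ≤ f y := habs_f x₀
  -- eigenvector
  have heigvec := hsa.hasEigenvector_of_isMaxOn hy0 (by
    rw [hynorm]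
    exact hymax)
  set μ₀ : ℝ := ⨆ x : {x : EuclideanSpace ℝ V // x ≠ 0}, T.rayleighQuotient x with hμ₀
  have hTy : T y = μ₀ • y := by
    have := heigvec.1
    rw [Module.End.mem_eigenspace_iff] at this
    exact this
  set μ : ℝ := f y with hμdef
  have hμeq : μ = μ₀ := by
    rw [hμdef, hfdef]
    simp only [hTy]
    rw [real_inner_smul_left, real_inner_self_eq_norm_sq, hynorm]
    ring
  -- μ is positive
  have hfsmul : ∀ (a : ℝ) (u : EuclideanSpace ℝ V), f (a • u) = a * a * f u := by
    intro a u
    rw [hfdef]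
    simp only [map_smul, real_inner_smul_left, real_inner_smul_right]
    ring
  set u : EuclideanSpace ℝ V := (WithLp.equiv 2 (V → ℝ)).symm (fun _ => 1) with hudef
  have hfu : f u = (Fintype.card E : ℝ) := by
    rw [hf]
    have : ∀ v, ∑ w, A v w * u w * u v = A.mulVec (fun _ => 1) v := by
      intro v
      rw [Matrix.mulVec, dotProduct]
      exact Finset.sum_congr rfl fun w _ => by
        show A v w * 1 * 1 = A v w * 1
        ring
    rw [Finset.sum_congr rfl fun v _ => this v]
    have : ∀ v, A.mulVec (fun _ => 1) v
        = ∑ e ∈ Finset.univ.filter (fun e => s e = v), (1 : ℝ) := by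
      intro v; exact hmv _ v
    rw [Finset.sum_congr rfl fun v _ => this v,
      Finset.sum_fiberwise Finset.univ s (fun _ => (1 : ℝ))]
    simp
  have hunorm : ‖u‖ ≠ 0 := by
    intro h
    have hu0 : u = 0 := norm_eq_zero.mp h
    have : (1 : ℝ) = 0 := by
      have := congrArg (fun z : EuclideanSpace ℝ V => z (s e₀)) hu0
      exact this
    norm_num at this
  have hμpos : 0 < μ := by
    have hz : (‖u‖⁻¹ • u) ∈ Metric.sphere (0 : EuclideanSpace ℝ V) 1 := by
      rw [mem_sphere_zero_iff_norm, norm_smul, norm_inv, norm_norm]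
      field_simp
    have h1 : f (‖u‖⁻¹ • u) ≤ μ := hymax hz
    rw [hfsmul, hfu] at h1
    have hcard : 0 < (Fintype.card E : ℝ) := by
      have : 0 < Fintype.card E := Fintype.card_pos_iff.mpr ⟨e₀⟩
      exact_mod_cast this
    have hpos : 0 < ‖u‖⁻¹ * ‖u‖⁻¹ * (Fintype.card E : ℝ) := by
      have : 0 < ‖u‖⁻¹ := by positivity
      positivity
    linarith
  -- the candidate vector
  set c : V → ℝ := fun v => y v with hcdef
  have hc0 : ∀ v, 0 ≤ c v := fun v => by show (0:ℝ) ≤ |x₀ v|; exact abs_nonneg _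
  have heig : ∀ v, A.mulVec c v = μ * c v := by
    intro v
    calc A.mulVec c v = T y v := (hTapp y v).symm
      _ = (μ₀ • y) v := by rw [hTy]
      _ = μ₀ * y v := rfl
      _ = μ * c v := by rw [hμeq]
  -- positivity of c
  obtain ⟨v₀, hv₀⟩ : ∃ v₀, 0 < c v₀ := by
    by_contra h
    push_neg at h
    have hc0' : ∀ v, c v = 0 := fun v => le_antisymm (h v) (hc0 v)
    have : ‖y‖ = 0 := by
      rw [EuclideanSpace.norm_eq]
      have : ∀ v, ‖y v‖ ^ 2 = 0 := fun v => by
        rw [show y v = c v from rfl, hc0' v]; simp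
      rw [Finset.sum_congr rfl fun v _ => this v]
      simp
    rw [hynorm] at this; norm_num at this
  have hstep : ∀ a b : V, 0 < c a →
      (∃ e : E, (s e = a ∧ t e = b) ∨ (s e = b ∧ t e = a)) → 0 < c b := by
    rintro a b ha ⟨e, he⟩
    have hba : 0 < A b a := by
      have hne : Nonempty {e : E // s e = b ∧ t e = a} := by
        rcases he with ⟨h1, h2⟩ | ⟨h1, h2⟩
        · exact ⟨σ e, by rw [hσs, hσt]; exact ⟨h2, h1⟩⟩
        · exact ⟨e, h1, h2⟩
      show (0 : ℝ) < (Nat.card {e : E // s e = b ∧ t e = a} : ℝ)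
      exact_mod_cast Nat.card_pos
    have hsum : 0 < A.mulVec c b := by
      rw [Matrix.mulVec, dotProduct]
      refine Finset.sum_pos' (fun w _ => mul_nonneg (hA0 b w) (hc0 w)) ⟨a, Finset.mem_univ a, ?_⟩
      exact mul_pos hba ha
    rw [heig] at hsum
    by_contra h
    push_neg at h
    nlinarith
  have hcpos : ∀ v, 0 < c v := by
    have key : ∀ w, Relation.ReflTransGen
        (fun a b => ∃ e : E, (s e = a ∧ t e = b) ∨ (s e = b ∧ t e = a)) v₀ w → 0 < c w := by
      intro w h
      induction h with
      | refl => exact hv₀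
      | tail _ hab ih => exact hstep _ _ ih hab
    exact fun v => key v (hconn v₀ v)
  -- operator norm equals μ
  have hclaimB : ∀ x : EuclideanSpace ℝ V, |f x| ≤ μ * ‖x‖ ^ 2 := by
    intro x
    rcases eq_or_ne x 0 with rfl | hx
    · simp only [norm_zero]
      have : f 0 = 0 := by rw [hfdef]; simp
      rw [this]; simp
    · set xa : EuclideanSpace ℝ V := (WithLp.equiv 2 (V → ℝ)).symm (fun v => |x v|) with hxa
      have hxanorm : ‖xa‖ = ‖x‖ := habs_norm x
      have hxnorm : ‖x‖ ≠ 0 := norm_ne_zero_iff.mpr hx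
      have hz : (‖x‖⁻¹ • xa) ∈ Metric.sphere (0 : EuclideanSpace ℝ V) 1 := by
        rw [mem_sphere_zero_iff_norm, norm_smul, norm_inv, norm_norm, hxanorm]
        field_simp
      have h1 : f (‖x‖⁻¹ • xa) ≤ μ := hymax hz
      rw [hfsmul] at h1
      have h2 : f xa ≤ μ * ‖x‖ ^ 2 := by
        have hx2 : 0 < ‖x‖ ^ 2 := by positivity
        have := mul_le_mul_of_nonneg_left h1 hx2.le
        calc f xa = ‖x‖ ^ 2 * (‖x‖⁻¹ * ‖x‖⁻¹ * f xa) := by field_simp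
          _ ≤ ‖x‖ ^ 2 * μ := this
          _ = μ * ‖x‖ ^ 2 := by ring
      exact le_trans (habs_f x) h2
  have hpolar : ∀ p q : EuclideanSpace ℝ V, (inner ℝ (T p) q : ℝ) ≤ μ / 2 * (‖p‖ ^ 2 + ‖q‖ ^ 2) := by
    intro p q
    have h1 : f (p + q) - f (p - q) = 4 * inner ℝ (T p) q := by
      rw [hfdef]
      simp only [map_add, map_sub, inner_add_left, inner_add_right, inner_sub_left,
        inner_sub_right]
      have := hsymm p q
      linarith
    have h2 := (abs_le.mp (hclaimB (p + q))).2
    have h3 := (abs_le.mp (hclaimB (p - q))).1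
    have h4 := parallelogram_law_with_norm ℝ p q
    have h4' : ‖p + q‖ ^ 2 + ‖p - q‖ ^ 2 = 2 * (‖p‖ ^ 2 + ‖q‖ ^ 2) := by
      rw [sq, sq, sq, sq]; linarith
    have h5 : μ * ‖p + q‖ ^ 2 + μ * ‖p - q‖ ^ 2 = 2 * μ * ‖p‖ ^ 2 + 2 * μ * ‖q‖ ^ 2 := by
      linear_combination μ * h4'
    linarith
  have hople : ∀ x : EuclideanSpace ℝ V, ‖T x‖ ≤ μ * ‖x‖ := by
    intro x
    rcases eq_or_ne (T x) 0 with h | h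
    · rw [h, norm_zero]; positivity
    rcases eq_or_ne x 0 with rfl | hx
    · rw [map_zero] at h; exact absurd rfl h
    have hTx : 0 < ‖T x‖ := norm_pos_iff.mpr h
    have hxp : 0 < ‖x‖ := norm_pos_iff.mpr hx
    have key := hpolar x ((‖x‖ / ‖T x‖) • T x)
    rw [real_inner_smul_right, real_inner_self_eq_norm_sq] at key
    rw [norm_smul, Real.norm_eq_abs, abs_of_nonneg (by positivity : (0:ℝ) ≤ ‖x‖ / ‖T x‖)] at key
    have hq : ‖x‖ / ‖T x‖ * ‖T x‖ = ‖x‖ := by field_simp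
    rw [hq] at key
    have key2 : ‖x‖ * ‖T x‖ ≤ μ * ‖x‖ ^ 2 := by
      have : ‖x‖ / ‖T x‖ * ‖T x‖ ^ 2 = ‖x‖ * ‖T x‖ := by field_simp
      nlinarith
    nlinarith
  have hnorm_le : ‖T‖ ≤ μ := ContinuousLinearMap.opNorm_le_bound T hμpos.le hople
  have hnorm_ge : μ ≤ ‖T‖ := by
    calc μ = inner ℝ (T y) y := hμdef
      _ ≤ ‖T y‖ * ‖y‖ := real_inner_le_norm _ _
      _ ≤ (‖T‖ * ‖y‖) * ‖y‖ := by
          exact mul_le_mul_of_nonneg_right (T.le_opNorm y) (norm_nonneg y)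
      _ = ‖T‖ := by rw [hynorm]; ring
  have hgn : graphNorm s t = μ := le_antisymm hnorm_le hnorm_ge
  -- the sum of costs at a vertex
  have hcne : ∀ v, c v ≠ 0 := fun v => (hcpos v).ne'
  have hsumW : ∀ v : V, ∑ e : {e : E // s e = v}, c (t e.1) / c (s e.1) = μ := by
    intro v
    have h1 : ∀ e : {e : E // s e = v}, c (t e.1) / c (s e.1) = c (t e.1) / c v := by
      intro e; rw [e.2]
    rw [Finset.sum_congr rfl fun e _ => h1 e, ← Finset.sum_div]
    have h2 : ∑ e ∈ Finset.univ.filter (fun e => s e = v), c (t e)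
        = ∑ e : {e : E // s e = v}, c (t e.1) :=
      Finset.sum_subtype _ (fun x => by simp) (fun e => c (t e))
    rw [← h2, ← hmv, heig, mul_div_assoc, div_self (hcne v), mul_one]
  have hWpos : ∀ e : E, 0 < c (t e) / c (s e) := fun e => div_pos (hcpos (t e)) (hcpos (s e))
  have hbal : ∃ σ' : E → E, Function.Involutive σ' ∧ (∀ e, s (σ' e) = t e) ∧
      (∀ e, t (σ' e) = s e) ∧ ∀ e, (fun e => c (t e) / c (s e)) e *
        (fun e => c (t e) / c (s e)) (σ' e) = 1 := by
    refine ⟨σ, hσinv, hσs, hσt, fun e => ?_⟩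
    simp only
    rw [hσs e, hσt e, div_mul_div_comm, mul_comm (c (t e))]
    exact div_self (by exact mul_pos (hcpos (s e)) (hcpos (t e)) |>.ne')
  have hhs : ∀ v : V, HasSum (fun e : {e : E // s e = v} => c (t e.1) / c (s e.1)) μ := by
    intro v
    have := hasSum_fintype (fun e : {e : E // s e = v} => c (t e.1) / c (s e.1))
    rwa [hsumW v] at this
  refine ⟨c, hcpos, ?_, ?_, ?_⟩
  · funext v
    rw [hgn]
    show A.mulVec c v = μ * c v
    exact heig v
  · refine ⟨hWpos, hbal, ?_, ?_⟩
    · intro v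
      have habs : |-(graphNorm s t)| = μ := by
        rw [abs_neg, hgn, abs_of_pos hμpos]
      rw [habs]
      exact hhs v
    · intro h
      exfalso
      rw [hgn] at h
      linarith
  · intro hloops
    refine ⟨hWpos, hbal, ?_, ?_⟩
    · intro v
      have habs : |graphNorm s t| = μ := by rw [hgn, abs_of_pos hμpos]
      rw [habs]
      exact hhs v
    · intro _ v
      exact ⟨Set.toFinite _, hloops v⟩
end

section
/- Let T be a nonzero real number and let Γ = (V, E, s, t) be an oriented graph endowed with a fair and balanced T-cost W. Fix a positive integer n and let Γ^{(n)} be the oriented graph with the same vertex set V whose edges are the n-tuples (e₁, …, eₙ) of edges of Γ satisfying t(eᵢ) = s(e_{i+1}) for 1 ≤ i < n, with source s(e₁) and target t(eₙ). Then the cost W^{(n)}(e₁, …, eₙ) = W(e₁)·W(e₂)⋯W(eₙ) is a fair and balanced ((−1)^{n+1} Tⁿ)-cost on Γ^{(n)}. -/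
open Function

namespace FBCaux

/-- Parity of the cardinality is preserved by passing to fixed points of an involution. -/
theorem even_card_iff_fixed {α : Type*} [Finite α] {f : α → α} (hf : Function.Involutive f) :
    Even (Nat.card α) ↔ Even (Nat.card {x : α // f x = x}) := by
  classical
  cases nonempty_fintype α
  rw [Nat.card_eq_fintype_card, Nat.card_eq_fintype_card]
  have hsplit := Finset.card_filter_add_card_filter_not
    (s := (Finset.univ : Finset α)) (p := fun x => f x = x)
  have hcardfix : Fintype.card {x : α // f x = x}
      = (Finset.univ.filter (fun x => f x = x)).card := Fintype.card_subtype _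
  have hz : ∑ _x ∈ Finset.univ.filter (fun x => ¬ f x = x), (1 : ZMod 2) = 0 :=
    Finset.sum_involution (fun a _ => f a)
      (fun a _ => by decide)
      (fun a ha _ => (Finset.mem_filter.mp ha).2)
      (fun a ha => Finset.mem_filter.mpr
        ⟨Finset.mem_univ _, fun h => (Finset.mem_filter.mp ha).2 (((hf a).symm.trans h).symm)⟩)
      (fun a _ => hf a)
  rw [Finset.sum_const, nsmul_eq_mul, mul_one] at hz
  have h2 : 2 ∣ (Finset.univ.filter (fun x => ¬ f x = x)).card :=
    (ZMod.natCast_eq_zero_iff _ 2).mp hz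
  rw [Finset.card_univ] at hsplit
  rw [hcardfix, Nat.even_iff, Nat.even_iff]
  omega

variable {V E : Type*}

/-- Paths with `n+1` edges in the graph. -/
abbrev P (s t : E → V) (n : ℕ) :=
  {p : Fin (n+1) → E // ∀ i : Fin n, t (p i.castSucc) = s (p i.succ)}

variable {s t : E → V} {σ : E → E} {W : E → ℝ} {c : ℝ}

lemma P_adj {n : ℕ} (p : P s t n) {a b : Fin (n+1)} (hab : (b : ℕ) = (a : ℕ) + 1) :
    t (p.1 a) = s (p.1 b) := by
  have hb := b.isLt
  have ha : (a : ℕ) < n := by omega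
  have h := p.2 ⟨(a : ℕ), ha⟩
  have e1 : (⟨(a : ℕ), ha⟩ : Fin n).castSucc = a := Fin.ext (by simp)
  have e2 : (⟨(a : ℕ), ha⟩ : Fin n).succ = b := Fin.ext (by simp; omega)
  rwa [e1, e2] at h

lemma sym_val {k : ℕ} (p : P s t k) (hsym : ∀ i, σ (p.1 i.rev) = p.1 i)
    {a b : Fin (k+1)} (hab : (a : ℕ) + (b : ℕ) = k) : σ (p.1 a) = p.1 b := by
  have hb := b.isLt
  have h := hsym b
  have e1 : b.rev = a := Fin.ext (by simp [Fin.val_rev]; omega)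
  rwa [e1] at h

/-- One-edge paths are edges. -/
def pathOne (v : V) : {p : P s t 0 // s (p.1 0) = v} ≃ {e : E // s e = v} where
  toFun p := ⟨p.1.1 0, p.2⟩
  invFun e := ⟨⟨fun _ => e.1, fun i => i.elim0⟩, e.2⟩
  left_inv p := Subtype.ext (Subtype.ext (funext fun i =>
    congrArg p.1.1 (Fin.ext (by omega) : (0 : Fin 1) = i)))
  right_inv e := rfl

/-- Prepending an edge to a path. -/
def consP (n : ℕ) (e : E) (q : P s t n) (hq : s (q.1 0) = t e) : P s t (n+1) :=
  ⟨Fin.cons e q.1, fun i => by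
    refine Fin.cases ?_ ?_ i
    · rw [Fin.castSucc_zero, Fin.cons_zero, Fin.cons_succ]
      exact hq.symm
    · intro j
      rw [← Fin.succ_castSucc, Fin.cons_succ, Fin.cons_succ]
      exact q.2 j⟩

lemma consP_zero (n : ℕ) (e : E) (q : P s t n) (hq : s (q.1 0) = t e) :
    (consP n e q hq).1 0 = e :=
  Fin.cons_zero (α := fun _ => E) e q.1

lemma consP_succ (n : ℕ) (e : E) (q : P s t n) (hq : s (q.1 0) = t e) (j : Fin (n+1)) :
    (consP n e q hq).1 j.succ = q.1 j :=
  Fin.cons_succ (α := fun _ => E) e q.1 j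

/-- Splitting off the first edge of a path. -/
def consE (v : V) (n : ℕ) :
    {p : P s t (n+1) // s (p.1 0) = v} ≃
      (e : {e : E // s e = v}) × {q : P s t n // s (q.1 0) = t e.1} where
  toFun p := ⟨⟨p.1.1 0, p.2⟩,
    ⟨⟨fun i => p.1.1 i.succ, fun j => P_adj p.1 (by simp)⟩,
      (P_adj p.1 (by simp)).symm⟩⟩
  invFun x := ⟨consP n x.1.1 x.2.1 x.2.2,
    (congrArg s (consP_zero n x.1.1 x.2.1 x.2.2)).trans x.1.2⟩
  left_inv p := Subtype.ext (Subtype.ext (Fin.cons_self_tail p.1.1))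
  right_inv x := by
    refine Sigma.subtype_ext (Subtype.ext ?_) (Subtype.ext (funext fun j => ?_))
    · exact consP_zero n x.1.1 x.2.1 x.2.2
    · exact consP_succ n x.1.1 x.2.1 x.2.2 j

lemma W_le (hpos : ∀ e, 0 < W e)
    (hsum : ∀ v : V, HasSum (fun e : {e : E // s e = v} => W e.1) c) (e : E) : W e ≤ c :=
  le_hasSum (hsum (s e)) ⟨e, rfl⟩ (fun b _ => (hpos b.1).le)

lemma W_ge (hpos : ∀ e, 0 < W e) (hσW : ∀ e, W e * W (σ e) = 1)
    (hsum : ∀ v : V, HasSum (fun e : {e : E // s e = v} => W e.1) c) (hc : 0 < c) (e : E) :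
    c⁻¹ ≤ W e := by
  have h1 : W (σ e) ≤ c := W_le hpos hsum (σ e)
  have h2 := hσW e
  have h3 : 1 ≤ W e * c := by nlinarith [hpos e, hpos (σ e)]
  rw [← one_div]
  exact (div_le_iff₀ hc).mpr h3

lemma finite_out (hpos : ∀ e, 0 < W e) (hσW : ∀ e, W e * W (σ e) = 1)
    (hsum : ∀ v : V, HasSum (fun e : {e : E // s e = v} => W e.1) c) (hc : 0 < c) (v : V) :
    Finite {e : E // s e = v} := by
  have htend := (hsum v).summable.tendsto_cofinite_zero
  have hlt := htend.eventually_lt_const (by positivity : (0:ℝ) < c⁻¹)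
  rw [Filter.eventually_cofinite] at hlt
  have huniv : (Set.univ : Set {e : E // s e = v}).Finite :=
    hlt.subset (fun x _ => not_lt.mpr (W_ge hpos hσW hsum hc x.1))
  exact Set.finite_univ_iff.mp huniv

lemma path_hasSum (hpos : ∀ e, 0 < W e)
    (hsum : ∀ v : V, HasSum (fun e : {e : E // s e = v} => W e.1) c) :
    ∀ (n : ℕ) (v : V),
      HasSum (fun p : {p : P s t n // s (p.1 0) = v} => ∏ i, W (p.1.1 i)) (c ^ (n+1)) := by
  intro n
  induction n with
  | zero =>
    intro v
    rw [pow_one]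
    have he : (fun p : {p : P s t 0 // s (p.1 0) = v} => ∏ i, W (p.1.1 i))
        = (fun e : {e : E // s e = v} => W e.1) ∘ (pathOne v) := by
      funext p
      simp [pathOne, Fin.prod_univ_one]
    rw [he]
    exact (Equiv.hasSum_iff (pathOne v)).mpr (hsum v)
  | succ n ih =>
    intro v
    set F : ((e : {e : E // s e = v}) × {q : P s t n // s (q.1 0) = t e.1}) → ℝ :=
      fun x => W x.1.1 * ∏ i, W (x.2.1.1 i) with hF
    have hfib : ∀ e : {e : E // s e = v},
        HasSum (fun q : {q : P s t n // s (q.1 0) = t e.1} => F ⟨e, q⟩) (W e.1 * c ^ (n+1)) :=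
      fun e => (ih (t e.1)).mul_left _
    have htot : HasSum (fun e : {e : E // s e = v} => W e.1 * c ^ (n+1)) (c * c ^ (n+1)) :=
      (hsum v).mul_right _
    have hsummable : Summable F := by
      rw [summable_sigma_of_nonneg
        (fun x => mul_nonneg (hpos _).le (Finset.prod_nonneg fun i _ => (hpos _).le))]
      refine ⟨fun e => (hfib e).summable, ?_⟩
      have he : (fun e : {e : E // s e = v} => ∑' q, F ⟨e, q⟩)
          = fun e => W e.1 * c ^ (n+1) := funext fun e => (hfib e).tsum_eq
      rw [he]
      exact htot.summable
    have hFsum : HasSum F (c * c ^ (n+1)) := htot.sigma_of_hasSum hfib hsummable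
    have he : (fun p : {p : P s t (n+1) // s (p.1 0) = v} => ∏ i, W (p.1.1 i))
        = F ∘ (consE v n) := by
      funext p
      rw [Fin.prod_univ_succ]
      simp only [hF, consE, Equiv.coe_fn_mk, Function.comp_apply]
    rw [he, pow_succ']
    exact (Equiv.hasSum_iff (consE v n)).mpr hFsum

lemma finite_path (hpos : ∀ e, 0 < W e) (hσW : ∀ e, W e * W (σ e) = 1)
    (hsum : ∀ v : V, HasSum (fun e : {e : E // s e = v} => W e.1) c) (hc : 0 < c) :
    ∀ (n : ℕ) (v : V), Finite {p : P s t n // s (p.1 0) = v} := by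
  intro n
  induction n with
  | zero =>
    intro v
    haveI := finite_out hpos hσW hsum hc v
    exact Finite.of_equiv _ (pathOne v).symm
  | succ n ih =>
    intro v
    haveI := finite_out hpos hσW hsum hc v
    haveI : ∀ e : {e : E // s e = v}, Finite {q : P s t n // s (q.1 0) = t e.1} :=
      fun e => ih (t e.1)
    exact Finite.of_equiv _ (consE v n).symm

/-- The reversed path. -/
def revPath (hσs : ∀ e, s (σ e) = t e) (hσt : ∀ e, t (σ e) = s e) {n : ℕ} (p : P s t n) :
    P s t n :=
  ⟨fun i => σ (p.1 i.rev), fun i => by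
    show t (σ (p.1 i.castSucc.rev)) = s (σ (p.1 i.succ.rev))
    rw [Fin.rev_castSucc, Fin.rev_succ, hσt, hσs]
    exact (p.2 i.rev).symm⟩

lemma revPath_invol (hσ : Involutive σ) (hσs : ∀ e, s (σ e) = t e) (hσt : ∀ e, t (σ e) = s e)
    {n : ℕ} (p : P s t n) : revPath hσs hσt (revPath hσs hσt p) = p :=
  Subtype.ext (funext fun i => by
    show σ (σ (p.1 i.rev.rev)) = p.1 i
    rw [Fin.rev_rev, hσ (p.1 i)])

lemma s_revPath (hσs : ∀ e, s (σ e) = t e) (hσt : ∀ e, t (σ e) = s e) {n : ℕ} (p : P s t n) :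
    s ((revPath hσs hσt p).1 0) = t (p.1 (Fin.last n)) := by
  show s (σ (p.1 (0 : Fin (n+1)).rev)) = _
  rw [Fin.rev_zero, hσs]

lemma t_revPath (hσs : ∀ e, s (σ e) = t e) (hσt : ∀ e, t (σ e) = s e) {n : ℕ} (p : P s t n) :
    t ((revPath hσs hσt p).1 (Fin.last n)) = s (p.1 0) := by
  show t (σ (p.1 (Fin.last n).rev)) = _
  rw [Fin.rev_last, hσt]

lemma prod_revPath (hσs : ∀ e, s (σ e) = t e) (hσt : ∀ e, t (σ e) = s e)
    (hσW : ∀ e, W e * W (σ e) = 1) {n : ℕ} (p : P s t n) :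
    (∏ i, W (p.1 i)) * (∏ i, W ((revPath hσs hσt p).1 i)) = 1 := by
  have h1 : (∏ i, W ((revPath hσs hσt p).1 i)) = ∏ i, W (σ (p.1 i)) := by
    show (∏ i : Fin (n+1), W (σ (p.1 i.rev))) = _
    exact Fintype.prod_equiv ⟨Fin.rev, Fin.rev, Fin.rev_rev, Fin.rev_rev⟩ _ _ (fun x => rfl)
  rw [h1, ← Finset.prod_mul_distrib]
  exact Finset.prod_eq_one (fun i _ => hσW _)

/-- Symmetric closed paths. -/
def SymC (s t : E → V) (σ : E → E) (k : ℕ) (v : V) :=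
  {p : P s t k // s (p.1 0) = v ∧ t (p.1 (Fin.last k)) = v ∧ ∀ i, σ (p.1 i.rev) = p.1 i}

lemma finite_symC (hpos : ∀ e, 0 < W e) (hσW : ∀ e, W e * W (σ e) = 1)
    (hsum : ∀ v : V, HasSum (fun e : {e : E // s e = v} => W e.1) c) (hc : 0 < c)
    (k : ℕ) (v : V) : Finite (SymC s t σ k v) := by
  haveI : Finite {p : P s t k // s (p.1 0) = v} := finite_path hpos hσW hsum hc k v
  exact Finite.of_injective
    (fun x : SymC s t σ k v => (⟨x.1, x.2.1⟩ : {p : P s t k // s (p.1 0) = v}))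
    (fun a b h => by
      apply Subtype.ext
      have h2 := congrArg Subtype.val h
      exact h2)

/-- Symmetric closed one-edge paths are σ-fixed loops. -/
def symCZero (v : V) : SymC s t σ 0 v ≃ {e : E // (s e = v ∧ t e = v) ∧ σ e = e} where
  toFun p := ⟨p.1.1 0,
    ⟨⟨p.2.1,
      (congrArg (fun x => t (p.1.1 x)) ((Fin.ext (by omega)) : (0 : Fin 1) = Fin.last 0)).trans
        p.2.2.1⟩,
      sym_val p.1 p.2.2.2 (a := 0) (b := 0) (by simp)⟩⟩
  invFun e := ⟨⟨fun _ => e.1, fun i => i.elim0⟩,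
    ⟨e.2.1.1, e.2.1.2, fun i => e.2.2⟩⟩
  left_inv p := Subtype.ext (Subtype.ext (funext fun i =>
    congrArg p.1.1 (Fin.ext (by omega) : (0 : Fin 1) = i)))
  right_inv e := rfl

def glue (σ : E → E) (k : ℕ) (e : E) (q : Fin (k+1) → E) : Fin (k+3) → E := fun i =>
  if h0 : (i : ℕ) = 0 then e
  else if hl : (i : ℕ) = k + 2 then σ e
  else q ⟨(i : ℕ) - 1, by omega⟩

lemma glue_zero {k : ℕ} {e : E} {q : Fin (k+1) → E} (i : Fin (k+3)) (h : (i : ℕ) = 0) :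
    glue σ k e q i = e := by
  simp only [glue]
  rw [dif_pos h]

lemma glue_last {k : ℕ} {e : E} {q : Fin (k+1) → E} (i : Fin (k+3)) (h : (i : ℕ) = k + 2) :
    glue σ k e q i = σ e := by
  simp only [glue]
  rw [dif_neg (by omega), dif_pos h]

lemma glue_mid {k : ℕ} {e : E} {q : Fin (k+1) → E} (i : Fin (k+3)) (a : ℕ) (ha : a < k + 1)
    (h : (i : ℕ) = a + 1) : glue σ k e q i = q ⟨a, ha⟩ := by
  have hi := i.isLt
  simp only [glue]
  rw [dif_neg (by omega), dif_neg (by omega)]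
  congr 1
  exact Fin.ext (by simp [h])

/-- The inner part of a path. -/
def trimP (k : ℕ) (p : P s t (k+2)) : P s t k :=
  ⟨fun j : Fin (k+1) => p.1 j.succ.castSucc, fun j => P_adj p (by simp)⟩

lemma trim_src (k : ℕ) (p : P s t (k+2)) : s ((trimP k p).1 0) = t (p.1 0) := by
  show s (p.1 ((0 : Fin (k+1)).succ.castSucc)) = t (p.1 0)
  exact (P_adj p (by simp)).symm

lemma trim_tgt (hσt : ∀ e, t (σ e) = s e) (k : ℕ) (p : P s t (k+2))
    (hsym : ∀ i, σ (p.1 i.rev) = p.1 i) :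
    t ((trimP k p).1 (Fin.last k)) = t (p.1 0) := by
  show t (p.1 ((Fin.last k).succ.castSucc)) = t (p.1 0)
  have hs := sym_val p hsym
    (a := (0 : Fin (k+2)).succ) (b := (Fin.last k).succ.castSucc) (by simp; omega)
  rw [← hs, hσt]
  exact (P_adj p (by simp)).symm

lemma trim_sym (k : ℕ) (p : P s t (k+2)) (hsym : ∀ i, σ (p.1 i.rev) = p.1 i) (j : Fin (k+1)) :
    σ ((trimP k p).1 j.rev) = (trimP k p).1 j := by
  show σ (p.1 (j.rev.succ.castSucc)) = p.1 (j.succ.castSucc)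
  exact sym_val p hsym (a := j.rev.succ.castSucc) (b := j.succ.castSucc)
    (by simp [Fin.val_rev]; omega)

/-- The glued path. -/
def glueP (hσs : ∀ e, s (σ e) = t e) (k : ℕ) (e : E) (q : P s t k)
    (hq0 : s (q.1 0) = t e) (hql : t (q.1 (Fin.last k)) = t e) : P s t (k+2) :=
  ⟨glue σ k e q.1, fun i => by
    by_cases h0 : (i : ℕ) = 0
    · rw [glue_zero _ (by simp [h0]), glue_mid _ 0 (by omega) (by simp [h0])]
      have hidx : (⟨0, by omega⟩ : Fin (k+1)) = 0 := Fin.ext (by simp)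
      rw [hidx]
      exact hq0.symm
    · by_cases hl : (i : ℕ) = k + 1
      · rw [glue_mid _ k (by omega) (by simp [hl]), glue_last _ (by simp [hl])]
        have hidx : (⟨k, by omega⟩ : Fin (k+1)) = Fin.last k := Fin.ext (by simp)
        rw [hidx, hσs]
        exact hql
      · have hi := i.isLt
        rw [glue_mid _ ((i : ℕ) - 1) (by omega) (by simp; omega),
          glue_mid _ (i : ℕ) (by omega) (by simp)]
        exact P_adj q (by simp; omega)⟩

lemma glueP_src (hσs : ∀ e, s (σ e) = t e) (k : ℕ) (e : E) (q : P s t k)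
    (hq0 : s (q.1 0) = t e) (hql : t (q.1 (Fin.last k)) = t e) :
    s ((glueP hσs k e q hq0 hql).1 0) = s e := by
  show s (glue σ k e q.1 0) = s e
  rw [glue_zero _ (by simp)]

lemma glueP_tgt (hσs : ∀ e, s (σ e) = t e) (hσt : ∀ e, t (σ e) = s e) (k : ℕ) (e : E)
    (q : P s t k) (hq0 : s (q.1 0) = t e) (hql : t (q.1 (Fin.last k)) = t e) :
    t ((glueP hσs k e q hq0 hql).1 (Fin.last (k+2))) = s e := by
  show t (glue σ k e q.1 (Fin.last (k+2))) = s e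
  rw [glue_last _ (by simp), hσt]

lemma glueP_sym (hσ : Involutive σ) (hσs : ∀ e, s (σ e) = t e) (k : ℕ) (e : E) (q : P s t k)
    (hq0 : s (q.1 0) = t e) (hql : t (q.1 (Fin.last k)) = t e)
    (hsym : ∀ i, σ (q.1 i.rev) = q.1 i) (i : Fin (k+3)) :
    σ ((glueP hσs k e q hq0 hql).1 i.rev) = (glueP hσs k e q hq0 hql).1 i := by
  show σ (glue σ k e q.1 i.rev) = glue σ k e q.1 i
  by_cases h0 : (i : ℕ) = 0
  · rw [glue_zero _ h0, glue_last _ (by simp [Fin.val_rev, h0])]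
    exact hσ e
  · by_cases hl : (i : ℕ) = k + 2
    · rw [glue_last _ hl, glue_zero _ (by simp [Fin.val_rev, hl])]
    · have hi := i.isLt
      rw [glue_mid i ((i : ℕ) - 1) (by omega) (by omega),
        glue_mid i.rev (k + 1 - (i : ℕ)) (by omega) (by simp [Fin.val_rev]; omega)]
      exact sym_val q hsym (by simp; omega)

lemma glueP_zero (hσs : ∀ e, s (σ e) = t e) (k : ℕ) (e : E) (q : P s t k)
    (hq0 : s (q.1 0) = t e) (hql : t (q.1 (Fin.last k)) = t e) :
    (glueP hσs k e q hq0 hql).1 0 = e := by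
  show glue σ k e q.1 0 = e
  exact glue_zero _ (by simp)

lemma glueP_mid (hσs : ∀ e, s (σ e) = t e) (k : ℕ) (e : E) (q : P s t k)
    (hq0 : s (q.1 0) = t e) (hql : t (q.1 (Fin.last k)) = t e) (j : Fin (k+1)) :
    (glueP hσs k e q hq0 hql).1 (j.succ.castSucc) = q.1 j := by
  show glue σ k e q.1 (j.succ.castSucc) = q.1 j
  rw [glue_mid _ (j : ℕ) j.isLt (by simp)]

lemma glueP_eq (hσs : ∀ e, s (σ e) = t e) (k : ℕ) (p : P s t (k+2))
    (hsym : ∀ i, σ (p.1 i.rev) = p.1 i)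
    (hq0 : s ((trimP k p).1 0) = t (p.1 0)) (hql : t ((trimP k p).1 (Fin.last k)) = t (p.1 0)) :
    glueP hσs k (p.1 0) (trimP k p) hq0 hql = p := by
  refine Subtype.ext (funext fun i => ?_)
  show glue σ k (p.1 0) (trimP k p).1 i = p.1 i
  by_cases h0 : (i : ℕ) = 0
  · rw [glue_zero _ h0]
    exact congrArg p.1 (Fin.ext (by simp [h0]))
  · by_cases hl : (i : ℕ) = k + 2
    · rw [glue_last _ hl]
      exact sym_val p hsym (by simp [hl])
    · have hi := i.isLt
      rw [glue_mid _ ((i : ℕ) - 1) (by omega) (by omega)]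
      show p.1 ((⟨(i : ℕ) - 1, by omega⟩ : Fin (k+1)).succ.castSucc) = p.1 i
      exact congrArg p.1 (Fin.ext (by simp; omega))

/-- Trimming a symmetric closed path. -/
def symCCons (hσ : Involutive σ) (hσs : ∀ e, s (σ e) = t e) (hσt : ∀ e, t (σ e) = s e)
    (k : ℕ) (v : V) :
    SymC s t σ (k+2) v ≃ (e : {e : E // s e = v}) × SymC s t σ k (t e.1) where
  toFun p := ⟨⟨p.1.1 0, p.2.1⟩,
    ⟨trimP k p.1, trim_src k p.1, trim_tgt hσt k p.1 p.2.2.2, trim_sym k p.1 p.2.2.2⟩⟩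
  invFun x := ⟨glueP hσs k x.1.1 x.2.1 x.2.2.1 x.2.2.2.1,
    (glueP_src hσs k x.1.1 x.2.1 x.2.2.1 x.2.2.2.1).trans x.1.2,
    (glueP_tgt hσs hσt k x.1.1 x.2.1 x.2.2.1 x.2.2.2.1).trans x.1.2,
    glueP_sym hσ hσs k x.1.1 x.2.1 x.2.2.1 x.2.2.2.1 x.2.2.2.2⟩
  left_inv p := Subtype.ext (glueP_eq hσs k p.1 p.2.2.2
    (trim_src k p.1) (trim_tgt hσt k p.1 p.2.2.2))
  right_inv x := by
    refine Sigma.subtype_ext (Subtype.ext ?_) (Subtype.ext (funext fun j => ?_))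
    · exact glueP_zero hσs k x.1.1 x.2.1 x.2.2.1 x.2.2.2.1
    · exact glueP_mid hσs k x.1.1 x.2.1 x.2.2.1 x.2.2.2.1 j

lemma even_fixed_loops (hσ : Involutive σ) (hσs : ∀ e, s (σ e) = t e) (hσt : ∀ e, t (σ e) = s e)
    (v : V) (hfin : {e : E | s e = v ∧ t e = v}.Finite)
    (hev : Even (Nat.card {e : E | s e = v ∧ t e = v})) :
    Even (Nat.card {e : E // (s e = v ∧ t e = v) ∧ σ e = e}) := by
  haveI : Finite {e : E // s e = v ∧ t e = v} := hfin.to_subtype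
  have hginv : Involutive (fun x : {e : E // s e = v ∧ t e = v} =>
      (⟨σ x.1, ⟨(hσs x.1).trans x.2.2, (hσt x.1).trans x.2.1⟩⟩ :
        {e : E // s e = v ∧ t e = v})) := fun x => Subtype.ext (hσ x.1)
  have h2 : {x : {e : E // s e = v ∧ t e = v} //
      (⟨σ x.1, ⟨(hσs x.1).trans x.2.2, (hσt x.1).trans x.2.1⟩⟩ :
        {e : E // s e = v ∧ t e = v}) = x}
      ≃ {e : E // (s e = v ∧ t e = v) ∧ σ e = e} :=
    { toFun := fun x => ⟨x.1.1, x.1.2, congrArg Subtype.val x.2⟩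
      invFun := fun e => ⟨⟨e.1, e.2.1⟩, Subtype.ext e.2.2⟩
      left_inv := fun x => Subtype.ext (Subtype.ext rfl)
      right_inv := fun e => rfl }
  rw [← Nat.card_congr h2]
  exact (even_card_iff_fixed hginv).mp hev

lemma even_symC (hσ : Involutive σ) (hσs : ∀ e, s (σ e) = t e) (hσt : ∀ e, t (σ e) = s e)
    (hpos : ∀ e, 0 < W e) (hσW : ∀ e, W e * W (σ e) = 1)
    (hsum : ∀ v : V, HasSum (fun e : {e : E // s e = v} => W e.1) c) (hc : 0 < c)
    (hloops : ∀ v : V, {e : E | s e = v ∧ t e = v}.Finite ∧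
      Even (Nat.card {e : E | s e = v ∧ t e = v})) :
    ∀ (m k : ℕ), k = m + m → ∀ v : V, Even (Nat.card (SymC s t σ k v)) := by
  intro m
  induction m with
  | zero =>
    intro k hk v
    obtain rfl : k = 0 := by omega
    rw [Nat.card_congr (symCZero v)]
    exact even_fixed_loops hσ hσs hσt v (hloops v).1 (hloops v).2
  | succ m ih =>
    intro k hk v
    obtain rfl : k = (m + m) + 2 := by omega
    rw [Nat.card_congr (symCCons hσ hσs hσt (m+m) v)]
    haveI : Finite {e : E // s e = v} := finite_out hpos hσW hsum hc v
    haveI : ∀ e : {e : E // s e = v}, Finite (SymC s t σ (m+m) (t e.1)) :=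
      fun e => finite_symC hpos hσW hsum hc (m+m) (t e.1)
    haveI := Fintype.ofFinite {e : E // s e = v}
    haveI : ∀ e : {e : E // s e = v}, Fintype (SymC s t σ (m+m) (t e.1)) :=
      fun e => Fintype.ofFinite _
    rw [Nat.card_eq_fintype_card, Fintype.card_sigma]
    refine Finset.sum_induction _ Even (fun a b ha hb => ha.add hb) Even.zero (fun e _ => ?_)
    rw [← Nat.card_eq_fintype_card]
    exact ih (m+m) rfl (t e.1)

/-- Reversal as a self-map of closed paths based at `v`. -/
def rho (hσs : ∀ e, s (σ e) = t e) (hσt : ∀ e, t (σ e) = s e) {n : ℕ} {v : V}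
    (x : {pp : P s t n // s (pp.1 0) = v ∧ t (pp.1 (Fin.last n)) = v}) :
    {pp : P s t n // s (pp.1 0) = v ∧ t (pp.1 (Fin.last n)) = v} :=
  ⟨revPath hσs hσt x.1,
    ⟨(s_revPath hσs hσt x.1).trans x.2.2, (t_revPath hσs hσt x.1).trans x.2.1⟩⟩

lemma even_closed (hσ : Involutive σ) (hσs : ∀ e, s (σ e) = t e) (hσt : ∀ e, t (σ e) = s e)
    (hpos : ∀ e, 0 < W e) (hσW : ∀ e, W e * W (σ e) = 1)
    (hsum : ∀ v : V, HasSum (fun e : {e : E // s e = v} => W e.1) c) (hc : 0 < c)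
    (hloops : ∀ v : V, {e : E | s e = v ∧ t e = v}.Finite ∧
      Even (Nat.card {e : E | s e = v ∧ t e = v})) (m : ℕ) (v : V) :
    Even (Nat.card
      {pp : P s t (m+m) // s (pp.1 0) = v ∧ t (pp.1 (Fin.last (m+m))) = v}) := by
  haveI : Finite {p : P s t (m+m) // s (p.1 0) = v} := finite_path hpos hσW hsum hc (m+m) v
  haveI : Finite {pp : P s t (m+m) // s (pp.1 0) = v ∧ t (pp.1 (Fin.last (m+m))) = v} :=
    Finite.of_injective
      (fun x : {pp : P s t (m+m) // s (pp.1 0) = v ∧ t (pp.1 (Fin.last (m+m))) = v} =>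
        (⟨x.1, x.2.1⟩ : {p : P s t (m+m) // s (p.1 0) = v}))
      (fun a b h => by
      apply Subtype.ext
      have h2 := congrArg Subtype.val h
      exact h2)
  have hρ : Involutive (rho hσs hσt (n := m+m) (v := v)) :=
    fun x => Subtype.ext (revPath_invol hσ hσs hσt x.1)
  rw [even_card_iff_fixed hρ]
  have heqv : {x : {pp : P s t (m+m) // s (pp.1 0) = v ∧ t (pp.1 (Fin.last (m+m))) = v} //
      rho hσs hσt x = x} ≃ SymC s t σ (m+m) v :=
    { toFun := fun x => ⟨x.1.1, x.1.2.1, x.1.2.2,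
        fun i => congrFun (congrArg Subtype.val (congrArg Subtype.val x.2)) i⟩
      invFun := fun y => ⟨⟨y.1, y.2.1, y.2.2.1⟩, Subtype.ext (Subtype.ext (funext y.2.2.2))⟩
      left_inv := fun x => Subtype.ext (Subtype.ext rfl)
      right_inv := fun y => rfl }
  rw [Nat.card_congr heqv]
  exact even_symC hσ hσs hσt hpos hσW hsum hc hloops m (m+m) rfl v

end FBCaux

open FBCaux

theorem fairBalancedCost_nPaths {V E : Type*} (s t : E → V) (T : ℝ) (hT : T ≠ 0)
    (W : E → ℝ) (h : FairBalancedCost s t T W) (n : ℕ) :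
    FairBalancedCost
      (fun p : {p : Fin (n+1) → E // ∀ i : Fin n, t (p i.castSucc) = s (p i.succ)} =>
        s (p.1 0))
      (fun p : {p : Fin (n+1) → E // ∀ i : Fin n, t (p i.castSucc) = s (p i.succ)} =>
        t (p.1 (Fin.last n)))
      ((-1) ^ (n + 2) * T ^ (n + 1))
      (fun p => ∏ i, W (p.1 i)) := by
  obtain ⟨hpos, ⟨σ, hσ, hσs, hσt, hσW⟩, hsum, hloops⟩ := h
  have hc : (0:ℝ) < |T| := abs_pos.mpr hT
  refine ⟨fun p => Finset.prod_pos fun i _ => hpos _, ?_, ?_, ?_⟩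
  · exact ⟨fun p => revPath hσs hσt p, fun p => revPath_invol hσ hσs hσt p,
      fun p => s_revPath hσs hσt p, fun p => t_revPath hσs hσt p,
      fun p => prod_revPath hσs hσt hσW p⟩
  · intro v
    have habs : |(-1 : ℝ) ^ (n + 2) * T ^ (n + 1)| = |T| ^ (n + 1) := by
      rw [abs_mul, abs_pow, abs_pow, abs_neg, abs_one, one_pow, one_mul]
    rw [habs]
    exact path_hasSum hpos hsum n v
  · intro hpos' v
    have hn : Even n := by
      by_contra hodd
      rw [Nat.not_even_iff_odd] at hodd
      obtain ⟨j, hj⟩ := hodd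
      have h1 : ((-1:ℝ)) ^ (n+2) = -1 := Odd.neg_one_pow ⟨j+1, by omega⟩
      have h2 : (0:ℝ) < T ^ (n+1) := Even.pow_pos ⟨j+1, by omega⟩ hT
      rw [h1] at hpos'
      nlinarith
    have hTpos : 0 < T := by
      obtain ⟨j, hj⟩ := hn
      have h1 : ((-1:ℝ)) ^ (n+2) = 1 := Even.neg_one_pow ⟨j+1, by omega⟩
      rw [h1, one_mul] at hpos'
      exact (Odd.pow_pos_iff ⟨j, by omega⟩).mp hpos'
    have hloop := hloops hTpos
    obtain ⟨m, hm⟩ := hn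
    subst hm
    constructor
    · haveI hFP : Finite {p : P s t (m+m) // s (p.1 0) = v} :=
        finite_path hpos hσW hsum hc (m+m) v
      have h1 : {p : P s t (m+m) | s (p.1 0) = v}.Finite := @Set.toFinite _ _ hFP
      exact h1.subset (fun p hp => hp.1)
    · exact even_closed hσ hσs hσt hpos hσW hsum hc hloop m v
end

section
/- Let T be a nonzero real number and let Γ = (V, E, s, t) be a finite oriented graph admitting a fair and balanced T-cost. Then ‖Γ‖ ≤ |T|, where ‖Γ‖ denotes the operator norm of the adjacency matrix of Γ acting on the Euclidean space ℝ^V. -/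
section aux

variable {V E : Type*} [Fintype V] [DecidableEq V] [Fintype E]

/-- Weighted fiberwise sum: if the weights at each vertex sum to `c`, then
`∑ e, W e * f (s e) = c * ∑ v, f v`. -/
lemma fb_sum_fiber (s : E → V) (W : E → ℝ) (c : ℝ)
    (hW : ∀ v : V, (∑ e : {e : E // s e = v}, W e.1) = c) (f : V → ℝ) :
    ∑ e : E, W e * f (s e) = c * ∑ v : V, f v := by
  rw [← Fintype.sum_fiberwise s (fun e => W e * f (s e))]
  rw [Finset.mul_sum]
  refine Finset.sum_congr rfl fun v _ => ?_
  have : ∀ e : {e : E // s e = v}, W e.1 * f (s e.1) = W e.1 * f v := by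
    rintro ⟨e, he⟩; rw [he]
  rw [Finset.sum_congr rfl (fun e _ => this e), ← Finset.sum_mul, hW v, mul_comm]

/-- The key bilinear estimate. -/
lemma fb_bilinear (s t : E → V) (T : ℝ) (W : E → ℝ)
    (hpos : ∀ e, 0 < W e)
    (σ : E → E) (hinv : Function.Involutive σ) (hs : ∀ e, s (σ e) = t e)
    (ht : ∀ e, t (σ e) = s e) (hbal : ∀ e, W e * W (σ e) = 1)
    (hfair : ∀ v : V, (∑ e : {e : E // s e = v}, W e.1) = |T|)
    (y x : V → ℝ) :
    ∑ e : E, y (s e) * x (t e) ≤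
      |T| * Real.sqrt (∑ v, y v ^ 2) * Real.sqrt (∑ v, x v ^ 2) := by
  have key : ∑ e : E, y (s e) * x (t e) ≤
      ∑ e : E, (Real.sqrt (W e) * |y (s e)|) * (Real.sqrt (W (σ e)) * |x (t e)|) := by
    refine Finset.sum_le_sum fun e _ => ?_
    have h1 : Real.sqrt (W e) * Real.sqrt (W (σ e)) = 1 := by
      rw [← Real.sqrt_mul (hpos e).le, hbal e, Real.sqrt_one]
    calc y (s e) * x (t e) ≤ |y (s e)| * |x (t e)| := by
          rw [← abs_mul]; exact le_abs_self _
      _ = (Real.sqrt (W e) * |y (s e)|) * (Real.sqrt (W (σ e)) * |x (t e)|) := by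
          ring_nf
          rw [mul_assoc, h1, mul_one]
  have cs := Real.sum_mul_le_sqrt_mul_sqrt Finset.univ
      (fun e => Real.sqrt (W e) * |y (s e)|) (fun e => Real.sqrt (W (σ e)) * |x (t e)|)
  have e1 : ∑ e : E, (Real.sqrt (W e) * |y (s e)|) ^ 2 = |T| * ∑ v, y v ^ 2 := by
    have h : ∀ e : E, (Real.sqrt (W e) * |y (s e)|) ^ 2 = W e * (fun v => y v ^ 2) (s e) := by
      intro e
      rw [mul_pow, Real.sq_sqrt (hpos e).le, sq_abs]
    rw [Finset.sum_congr rfl (fun e _ => h e)]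
    exact fb_sum_fiber s W |T| hfair (fun v => y v ^ 2)
  have e2 : ∑ e : E, (Real.sqrt (W (σ e)) * |x (t e)|) ^ 2 = |T| * ∑ v, x v ^ 2 := by
    have reidx : ∑ e : E, (Real.sqrt (W (σ e)) * |x (t e)|) ^ 2
        = ∑ e : E, (Real.sqrt (W e) * |x (s e)|) ^ 2 := by
      refine Fintype.sum_equiv hinv.toPerm _ _ fun e => ?_
      simp only [Function.Involutive.coe_toPerm]
      rw [hs e]
    rw [reidx]
    have h : ∀ e : E, (Real.sqrt (W e) * |x (s e)|) ^ 2 = W e * (fun v => x v ^ 2) (s e) := by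
      intro e
      rw [mul_pow, Real.sq_sqrt (hpos e).le, sq_abs]
    rw [Finset.sum_congr rfl (fun e _ => h e)]
    exact fb_sum_fiber s W |T| hfair (fun v => x v ^ 2)
  calc ∑ e : E, y (s e) * x (t e)
      ≤ ∑ e : E, (Real.sqrt (W e) * |y (s e)|) * (Real.sqrt (W (σ e)) * |x (t e)|) := key
    _ ≤ Real.sqrt (∑ e : E, (Real.sqrt (W e) * |y (s e)|) ^ 2) *
        Real.sqrt (∑ e : E, (Real.sqrt (W (σ e)) * |x (t e)|) ^ 2) := cs
    _ = Real.sqrt (|T| * ∑ v, y v ^ 2) * Real.sqrt (|T| * ∑ v, x v ^ 2) := by rw [e1, e2]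
    _ = |T| * Real.sqrt (∑ v, y v ^ 2) * Real.sqrt (∑ v, x v ^ 2) := by
        rw [Real.sqrt_mul (abs_nonneg T), Real.sqrt_mul (abs_nonneg T)]
        have hTT : Real.sqrt |T| * Real.sqrt |T| = |T| := Real.mul_self_sqrt (abs_nonneg T)
        linear_combination Real.sqrt (∑ v, y v ^ 2) * Real.sqrt (∑ v, x v ^ 2) * hTT

/-- Expanding the quadratic form of the adjacency matrix as a sum over edges. -/
lemma fb_mulVec (s t : E → V) (y x : V → ℝ) :
    ∑ v, y v * (adjMatrix s t).mulVec x v = ∑ e : E, y (s e) * x (t e) := by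
  classical
  have hA : ∀ v w, adjMatrix s t v w = ∑ e : E, if s e = v ∧ t e = w then (1:ℝ) else 0 := by
    intro v w
    simp only [adjMatrix, Matrix.of_apply, Nat.card_eq_fintype_card, Fintype.card_subtype]
    rw [Finset.card_filter]
    push_cast
    rfl
  have hmv : ∀ v, (adjMatrix s t).mulVec x v = ∑ e : E, (if s e = v then x (t e) else 0) := by
    intro v
    simp only [Matrix.mulVec, dotProduct, hA, Finset.sum_mul, ite_mul, one_mul, zero_mul]
    rw [Finset.sum_comm]
    refine Finset.sum_congr rfl fun e _ => ?_
    by_cases hv : s e = v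
    · simp [hv, ite_and, Finset.sum_ite_eq, Finset.sum_ite_eq']
    · simp [hv, ite_and]
  simp only [hmv, Finset.mul_sum, mul_ite, mul_zero]
  rw [Finset.sum_comm]
  refine Finset.sum_congr rfl fun e _ => ?_
  simp [Finset.sum_ite_eq, Finset.sum_ite_eq']

end aux


theorem graphNorm_le_of_fairBalancedCost {V E : Type*} [Fintype V] [DecidableEq V] [Fintype E]
    (s t : E → V) (T : ℝ) (hT : T ≠ 0) (W : E → ℝ)
    (h : FairBalancedCost s t T W) :
    graphNorm s t ≤ |T| := by
  classical
  obtain ⟨hpos, ⟨σ, hinv, hs, ht, hbal⟩, hfair, -⟩ := h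
  have hfair' : ∀ v : V, (∑ e : {e : E // s e = v}, W e.1) = |T| :=
    fun v => (hasSum_fintype _).unique (hfair v)
  rw [graphNorm]
  refine ContinuousLinearMap.opNorm_le_bound _ (abs_nonneg T) fun x => ?_
  set z : EuclideanSpace ℝ V := Matrix.toEuclideanCLM (𝕜 := ℝ) (adjMatrix s t) x with hz
  have hzv : ∀ v, z v = (adjMatrix s t).mulVec (fun w => x w) v := fun v => rfl
  have hnormz : ‖z‖ = Real.sqrt (∑ v, z v ^ 2) := by
    rw [EuclideanSpace.norm_eq]
    congr 1
    exact Finset.sum_congr rfl fun v _ => by rw [Real.norm_eq_abs, sq_abs]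
  have hnormx : ‖x‖ = Real.sqrt (∑ v, x v ^ 2) := by
    rw [EuclideanSpace.norm_eq]
    congr 1
    exact Finset.sum_congr rfl fun v _ => by rw [Real.norm_eq_abs, sq_abs]
  have hkey : ‖z‖ ^ 2 ≤ |T| * ‖z‖ * ‖x‖ := by
    have hsq : ‖z‖ ^ 2 = ∑ v, z v ^ 2 := by
      rw [hnormz, Real.sq_sqrt (Finset.sum_nonneg fun v _ => sq_nonneg _)]
    rw [hsq, hnormz, hnormx]
    calc ∑ v, z v ^ 2 = ∑ v, z v * (adjMatrix s t).mulVec (fun w => x w) v := by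
          refine Finset.sum_congr rfl fun v _ => ?_
          rw [← hzv v, sq]
      _ = ∑ e : E, z (s e) * x (t e) := fb_mulVec s t (fun v => z v) (fun w => x w)
      _ ≤ |T| * Real.sqrt (∑ v, z v ^ 2) * Real.sqrt (∑ v, x v ^ 2) :=
          fb_bilinear s t T W hpos σ hinv hs ht hbal hfair' (fun v => z v) (fun w => x w)
  rcases eq_or_lt_of_le (norm_nonneg z) with h0 | h0
  · rw [← h0]
    positivity
  · refine le_of_mul_le_mul_right ?_ h0
    calc ‖z‖ * ‖z‖ = ‖z‖ ^ 2 := (sq ‖z‖).symm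
      _ ≤ |T| * ‖z‖ * ‖x‖ := hkey
      _ = |T| * ‖x‖ * ‖z‖ := by ring
end

section
/- Let T be a nonzero real number and let Γ = (V, E, s, t) be a finite connected oriented graph with a fair and balanced T-cost W such that ‖Γ‖ = |T|. Then W is constant on each set of parallel edges: for all edges e, f ∈ E with s(e) = s(f) and t(e) = t(f), one has W(e) = W(f). -/
open Finset in
/-- Auxiliary: the inner product `⟪A x, y⟫` for the adjacency matrix is a sum over edges. -/
lemma inner_adjCLM {V E : Type*} [Fintype V] [DecidableEq V] [Fintype E] (s t : E → V)
    (x y : EuclideanSpace ℝ V) :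
    (inner ℝ ((Matrix.toEuclideanCLM (𝕜 := ℝ) (adjMatrix s t)) x) y : ℝ)
      = ∑ e, x (t e) * y (s e) := by
  have happ : ∀ v, (Matrix.toEuclideanCLM (𝕜 := ℝ) (adjMatrix s t)) x v
      = ∑ w, adjMatrix s t v w * x w := by
    intro v
    have h2 : WithLp.equiv 2 (V → ℝ) ((Matrix.toEuclideanCLM (𝕜 := ℝ) (adjMatrix s t)) x) v
        = Matrix.toLin' (adjMatrix s t) (WithLp.equiv 2 (V → ℝ) x) v := by
      exact congrFun (Matrix.ofLp_toEuclideanCLM _ _) v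
    simpa [Matrix.toLin'_apply, Matrix.mulVec, dotProduct] using h2
  rw [PiLp.inner_apply]
  simp only [RCLike.inner_apply, starRingEnd_apply, star_trivial, happ]
  have key : ∀ p : V × V, adjMatrix s t p.1 p.2 * (x p.2 * y p.1)
      = ∑ e ∈ univ.filter (fun e => (s e, t e) = p), x (t e) * y (s e) := by
    intro p
    have hfil : (univ.filter (fun e => (s e, t e) = p))
        = univ.filter (fun e : E => s e = p.1 ∧ t e = p.2) := by
      apply filter_congr; intro e _; simp [Prod.ext_iff]
    have hcard : adjMatrix s t p.1 p.2
        = ((univ.filter (fun e : E => s e = p.1 ∧ t e = p.2)).card : ℝ) := by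
      simp [adjMatrix, Nat.card_eq_fintype_card, Fintype.card_subtype]
    rw [hfil, hcard]
    rw [Finset.sum_congr rfl (fun e he => by
      rcases Finset.mem_filter.mp he with ⟨-, h1, h2⟩
      rw [h1, h2])]
    rw [Finset.sum_const, nsmul_eq_mul]
  refine (Finset.sum_congr rfl fun v _ => mul_comm _ _).trans ?_
  calc ∑ v, (∑ w, adjMatrix s t v w * x w) * y v
      = ∑ p : V × V, adjMatrix s t p.1 p.2 * (x p.2 * y p.1) := by
        rw [Fintype.sum_prod_type]
        refine Finset.sum_congr rfl fun v _ => ?_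
        rw [Finset.sum_mul]
        exact Finset.sum_congr rfl fun w _ => by ring
    _ = ∑ p : V × V, ∑ e ∈ univ.filter (fun e => (s e, t e) = p), x (t e) * y (s e) :=
        Finset.sum_congr rfl fun p _ => key p
    _ = ∑ e, x (t e) * y (s e) :=
        Finset.sum_fiberwise_of_maps_to (fun e _ => Finset.mem_univ _) _

open Finset in
theorem cost_constant_on_parallel_edges {V E : Type*} [Fintype V] [DecidableEq V] [Fintype E]
    (s t : E → V) (hconn : GraphConnected s t) (T : ℝ) (hT : T ≠ 0) (W : E → ℝ)
    (h : FairBalancedCost s t T W) (hnorm : graphNorm s t = |T|) :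
    ∀ e f : E, s e = s f → t e = t f → W e = W f := by
  obtain ⟨hW, ⟨σ, hσinv, hσs, hσt, hσW⟩, hfair, -⟩ := h
  -- fairness as a finite sum
  have hfair' : ∀ v, ∑ e ∈ univ.filter (fun e => s e = v), W e = |T| := by
    intro v
    have h1 : ∑ e : {e : E // s e = v}, W e.1 = |T| :=
      (hasSum_fintype _).unique (hfair v)
    rw [← h1]
    exact Finset.sum_subtype _ (by simp) W
  -- the permutation given by σ
  have hreindex : ∀ g : E → ℝ, ∑ e, g (σ e) = ∑ e, g e := by
    intro g
    exact Equiv.sum_comp (hσinv.toPerm σ) g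
  -- the key weighted sum identity
  have hWsum : ∀ x : V → ℝ,
      ∑ e, (W e * x (s e) ^ 2 + W (σ e) * x (t e) ^ 2) / 2 = |T| * ∑ v, x v ^ 2 := by
    intro x
    have h1 : ∑ e, W (σ e) * x (t e) ^ 2 = ∑ e, W e * x (s e) ^ 2 := by
      calc ∑ e, W (σ e) * x (t e) ^ 2
          = ∑ e, W (σ (σ e)) * x (t (σ e)) ^ 2 := (hreindex fun e => W (σ e) * x (t e) ^ 2).symm
        _ = ∑ e, W e * x (s e) ^ 2 := by
            refine Finset.sum_congr rfl fun e _ => ?_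
            rw [hσinv e, hσt e]
    have h2 : ∑ e, W e * x (s e) ^ 2 = |T| * ∑ v, x v ^ 2 := by
      rw [← Finset.sum_fiberwise_of_maps_to (fun e (_ : e ∈ univ) => mem_univ (s e))
          (fun e => W e * x (s e) ^ 2)]
      rw [Finset.mul_sum]
      refine Finset.sum_congr rfl fun v _ => ?_
      calc ∑ e ∈ univ.filter (fun e => s e = v), W e * x (s e) ^ 2
          = ∑ e ∈ univ.filter (fun e => s e = v), W e * x v ^ 2 := by
            refine Finset.sum_congr rfl fun e he => ?_
            rw [(Finset.mem_filter.mp he).2]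
        _ = (∑ e ∈ univ.filter (fun e => s e = v), W e) * x v ^ 2 := by
            rw [Finset.sum_mul]
        _ = |T| * x v ^ 2 := by rw [hfair' v]
    calc ∑ e, (W e * x (s e) ^ 2 + W (σ e) * x (t e) ^ 2) / 2
        = ((∑ e, W e * x (s e) ^ 2) + ∑ e, W (σ e) * x (t e) ^ 2) / 2 := by
          rw [← Finset.sum_add_distrib, Finset.sum_div]
      _ = ∑ e, W e * x (s e) ^ 2 := by rw [h1]; ring
      _ = |T| * ∑ v, x v ^ 2 := h2
  -- termwise AM-GM bound
  have hterm : ∀ (x : V → ℝ) e,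
      x (t e) * x (s e) ≤ (W e * x (s e) ^ 2 + W (σ e) * x (t e) ^ 2) / 2 := by
    intro x e
    have hw := hW e
    have hw' : W (σ e) = 1 / W e := by
      field_simp
      linarith [hσW e]
    rw [hw', ← sub_nonneg]
    have : (W e * x (s e) ^ 2 + 1 / W e * x (t e) ^ 2) / 2 - x (t e) * x (s e)
        = (W e * x (s e) - x (t e)) ^ 2 / (2 * W e) := by
      field_simp
      ring
    rw [this]
    positivity
  -- global bound
  have hQbound : ∀ x : V → ℝ, ∑ e, x (t e) * x (s e) ≤ |T| * ∑ v, x v ^ 2 := by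
    intro x
    calc ∑ e, x (t e) * x (s e)
        ≤ ∑ e, (W e * x (s e) ^ 2 + W (σ e) * x (t e) ^ 2) / 2 :=
          Finset.sum_le_sum fun e _ => hterm x e
      _ = |T| * ∑ v, x v ^ 2 := hWsum x
  intro e₀ f₀ hsef htef
  have hVne : Nonempty V := ⟨s e₀⟩
  set A := Matrix.toEuclideanCLM (𝕜 := ℝ) (adjMatrix s t) with hA
  -- the compact set of nonnegative unit vectors
  set D : Set (EuclideanSpace ℝ V) := {x | ‖x‖ = 1 ∧ ∀ v, 0 ≤ x v} with hD
  have hDsub : D ⊆ Metric.sphere 0 1 := fun x hx => by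
    simpa [mem_sphere_iff_norm] using hx.1
  have hDclosed : IsClosed D := by
    have : D = Metric.sphere (0 : EuclideanSpace ℝ V) 1 ∩ ⋂ v, {x | 0 ≤ x v} := by
      ext x
      simp [hD, mem_sphere_iff_norm, Set.mem_iInter]
    rw [this]
    refine (Metric.isClosed_sphere).inter (isClosed_iInter fun v => ?_)
    exact isClosed_le continuous_const (EuclideanSpace.proj v).continuous
  have hDcompact : IsCompact D :=
    (isCompact_sphere (0 : EuclideanSpace ℝ V) 1).of_isClosed_subset hDclosed hDsub
  have hDne : D.Nonempty := by
    refine ⟨EuclideanSpace.single (s e₀) 1, ?_, fun v => ?_⟩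
    · simp [EuclideanSpace.norm_single]
    · rw [EuclideanSpace.single_apply]
      positivity
  have hQcont : Continuous fun x : EuclideanSpace ℝ V => ∑ e, x (t e) * x (s e) := by
    refine continuous_finset_sum _ fun e _ => ?_
    exact ((EuclideanSpace.proj (t e)).continuous).mul ((EuclideanSpace.proj (s e)).continuous)
  obtain ⟨x₀, hx₀D, hmax⟩ := hDcompact.exists_isMaxOn hDne hQcont.continuousOn
  obtain ⟨hx₀norm, hx₀nn⟩ := hx₀D
  set c : ℝ := ∑ e, x₀ (t e) * x₀ (s e) with hc
  have hc0 : 0 ≤ c :=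
    Finset.sum_nonneg fun e _ => mul_nonneg (hx₀nn (t e)) (hx₀nn (s e))
  have hsumsq : ∀ x : EuclideanSpace ℝ V, ∑ v, x v ^ 2 = ‖x‖ ^ 2 := by
    intro x
    rw [← real_inner_self_eq_norm_sq, PiLp.inner_apply]
    simp [pow_two]
  have hcle : c ≤ |T| := by
    have := hQbound x₀
    rw [hsumsq x₀, hx₀norm] at this
    simpa using this
  -- bound |Q x x| ≤ c ‖x‖² for every x
  have habs : ∀ x : EuclideanSpace ℝ V, |∑ e, x (t e) * x (s e)| ≤ c * ‖x‖ ^ 2 := by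
    intro x
    by_cases hx : x = 0
    · simp [hx]
    · have hxn : 0 < ‖x‖ := norm_pos_iff.mpr hx
      set a : EuclideanSpace ℝ V := (WithLp.equiv 2 (V → ℝ)).symm (fun v => |x v|) with ha
      have haapp : ∀ v, a v = |x v| := fun v => rfl
      have hanorm : ‖a‖ = ‖x‖ := by
        rw [EuclideanSpace.norm_eq, EuclideanSpace.norm_eq]
        congr 1
        exact Finset.sum_congr rfl fun v _ => by rw [haapp]; simp
      set y : EuclideanSpace ℝ V := ‖x‖⁻¹ • a with hy
      have hyapp : ∀ v, y v = ‖x‖⁻¹ * |x v| := fun v => by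
        rw [hy, PiLp.smul_apply, haapp, smul_eq_mul]
      have hyD : y ∈ D := by
        constructor
        · rw [hy, norm_smul, hanorm]
          simp [abs_of_pos hxn, inv_mul_cancel₀ hxn.ne']
        · intro v
          rw [hyapp]
          positivity
      have hym := hmax hyD
      have hQy : ∑ e, y (t e) * y (s e) = ‖x‖⁻¹ ^ 2 * ∑ e, |x (t e)| * |x (s e)| := by
        rw [Finset.mul_sum]
        refine Finset.sum_congr rfl fun e _ => ?_
        rw [hyapp, hyapp]
        ring
      have h1 : ∑ e, |x (t e)| * |x (s e)| ≤ c * ‖x‖ ^ 2 := by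
        have h2 : ‖x‖⁻¹ ^ 2 * ∑ e, |x (t e)| * |x (s e)| ≤ c := by
          rw [← hQy]; exact hym
        have h4 := mul_le_mul_of_nonneg_left h2 (le_of_lt (pow_pos hxn 2))
        rw [← mul_assoc] at h4
        have h5 : ‖x‖ ^ 2 * ‖x‖⁻¹ ^ 2 = 1 := by
          rw [← mul_pow, mul_inv_cancel₀ hxn.ne', one_pow]
        rw [h5, one_mul] at h4
        linarith [h4]
      calc |∑ e, x (t e) * x (s e)| ≤ ∑ e, |x (t e) * x (s e)| :=
            Finset.abs_sum_le_sum_abs _ _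
        _ = ∑ e, |x (t e)| * |x (s e)| := Finset.sum_congr rfl fun e _ => abs_mul _ _
        _ ≤ c * ‖x‖ ^ 2 := h1
  -- symmetry of Q
  have hQsymm : ∀ x y : V → ℝ, ∑ e, x (t e) * y (s e) = ∑ e, y (t e) * x (s e) := by
    intro x y
    calc ∑ e, x (t e) * y (s e)
        = ∑ e, x (t (σ e)) * y (s (σ e)) := (hreindex fun e => x (t e) * y (s e)).symm
      _ = ∑ e, y (t e) * x (s e) := by
          refine Finset.sum_congr rfl fun e _ => ?_
          rw [hσs e, hσt e]; ring
  -- bilinear bound via polarization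
  have hbil : ∀ x y : EuclideanSpace ℝ V, ‖x‖ = 1 → ‖y‖ = 1 →
      ∑ e, x (t e) * y (s e) ≤ c := by
    intro x y hx hy
    have h1 := habs (x + y)
    have h2 := habs (x - y)
    have hpar : ‖x + y‖ ^ 2 + ‖x - y‖ ^ 2 = 4 := by
      have := parallelogram_law_with_norm ℝ x y
      rw [hx, hy] at this
      nlinarith [this]
    have hplus : ∑ e, (x + y) (t e) * (x + y) (s e)
        = (∑ e, x (t e) * x (s e)) + (∑ e, x (t e) * y (s e))
          + (∑ e, y (t e) * x (s e)) + ∑ e, y (t e) * y (s e) := by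
      rw [← Finset.sum_add_distrib, ← Finset.sum_add_distrib, ← Finset.sum_add_distrib]
      refine Finset.sum_congr rfl fun e _ => ?_
      simp only [PiLp.add_apply]
      ring
    have hminus : ∑ e, (x - y) (t e) * (x - y) (s e)
        = (∑ e, x (t e) * x (s e)) - (∑ e, x (t e) * y (s e))
          - (∑ e, y (t e) * x (s e)) + ∑ e, y (t e) * y (s e) := by
      rw [show (∑ e, x (t e) * x (s e)) - (∑ e, x (t e) * y (s e))
          - (∑ e, y (t e) * x (s e)) + ∑ e, y (t e) * y (s e)
          = (∑ e, x (t e) * x (s e)) + (-1 : ℝ) * (∑ e, x (t e) * y (s e))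
          + (-1 : ℝ) * (∑ e, y (t e) * x (s e)) + ∑ e, y (t e) * y (s e) by ring]
      rw [Finset.mul_sum, Finset.mul_sum,
        ← Finset.sum_add_distrib, ← Finset.sum_add_distrib, ← Finset.sum_add_distrib]
      refine Finset.sum_congr rfl fun e _ => ?_
      simp only [PiLp.sub_apply]
      ring
    have h4 : 4 * ∑ e, x (t e) * y (s e)
        = (∑ e, (x + y) (t e) * (x + y) (s e)) - ∑ e, (x - y) (t e) * (x - y) (s e) := by
      rw [hplus, hminus, hQsymm y x]
      ring
    have hb1 : (∑ e, (x + y) (t e) * (x + y) (s e)) ≤ c * ‖x + y‖ ^ 2 :=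
      le_trans (le_abs_self _) h1
    have hb2 : -(∑ e, (x - y) (t e) * (x - y) (s e)) ≤ c * ‖x - y‖ ^ 2 :=
      le_trans (neg_le_abs _) h2
    nlinarith [hb1, hb2, hpar, hc0]
  -- operator norm bound
  have hopA : ‖A‖ ≤ c := by
    refine ContinuousLinearMap.opNorm_le_of_unit_norm hc0 fun x hx => ?_
    by_cases hAx : A x = 0
    · simp [hAx, hc0]
    · have hAxn : 0 < ‖A x‖ := norm_pos_iff.mpr hAx
      set y : EuclideanSpace ℝ V := ‖A x‖⁻¹ • A x with hy
      have hyn : ‖y‖ = 1 := by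
        rw [hy, norm_smul]
        simp [abs_of_pos hAxn, inv_mul_cancel₀ hAxn.ne']
      have hinner : (inner ℝ (A x) y : ℝ) = ‖A x‖ := by
        rw [hy, real_inner_smul_right, real_inner_self_eq_norm_sq]
        field_simp
      have := hbil x y hx hyn
      rw [← inner_adjCLM s t x y, ← hA, hinner] at this
      exact this
  have hceq : c = |T| := by
    refine le_antisymm hcle ?_
    calc |T| = graphNorm s t := hnorm.symm
      _ = ‖A‖ := rfl
      _ ≤ c := hopA
  -- equality analysis
  have hsum_eq : ∑ e, x₀ (t e) * x₀ (s e)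
      = ∑ e, (W e * x₀ (s e) ^ 2 + W (σ e) * x₀ (t e) ^ 2) / 2 := by
    rw [← hc, hceq, hWsum x₀, hsumsq x₀, hx₀norm]
    ring
  have heq : ∀ e, x₀ (t e) * x₀ (s e)
      = (W e * x₀ (s e) ^ 2 + W (σ e) * x₀ (t e) ^ 2) / 2 := by
    intro e
    have := (Finset.sum_eq_sum_iff_of_le (fun e _ => hterm x₀ e)).mp hsum_eq
    exact this e (Finset.mem_univ e)
  have hWx : ∀ e, W e * x₀ (s e) = x₀ (t e) := by
    intro e
    have hw := hW e
    have hw' := hσW e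
    have h2 : (W e * x₀ (s e) - x₀ (t e)) ^ 2 = 0 := by
      have := heq e
      nlinarith [this, hw, hw']
    have := pow_eq_zero_iff (n := 2) (by norm_num) |>.mp h2
    linarith [this]
  -- positivity of x₀
  have hnz : ∀ v, x₀ v ≠ 0 := by
    have hx₀ne : ∃ v, x₀ v ≠ 0 := by
      by_contra hcon
      push_neg at hcon
      have : x₀ = 0 := by
        ext v
        exact hcon v
      rw [this] at hx₀norm
      simp at hx₀norm
    obtain ⟨v₀, hv₀⟩ := hx₀ne
    intro w
    have step : ∀ a b : V, (∃ e, (s e = a ∧ t e = b) ∨ (s e = b ∧ t e = a)) →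
        x₀ a ≠ 0 → x₀ b ≠ 0 := by
      rintro a b ⟨e, he⟩ ha
      have hwe := hWx e
      rcases he with ⟨h1, h2⟩ | ⟨h1, h2⟩
      · rw [h1, h2] at hwe
        rw [← hwe]
        exact mul_ne_zero (hW e).ne' ha
      · rw [h1, h2] at hwe
        intro hb
        rw [hb, mul_zero] at hwe
        exact ha hwe.symm
    have hrel := hconn v₀ w
    induction hrel with
    | refl => exact hv₀
    | tail h1 h2 ih => exact step _ _ h2 ih
  -- conclusion
  have h1 := hWx e₀
  have h2 := hWx f₀
  rw [hsef, htef] at h1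
  have := h1.trans h2.symm
  exact mul_right_cancel₀ (hnz (s f₀)) this
end

section
/- Let Γ = (V, E, s, t) be a finite connected symmetric oriented graph and let W be a fair and balanced (−‖Γ‖)-cost on Γ. Then there exists c : V → ℝ with c_v > 0 for all v such that W(e) = c_{t(e)}/c_{s(e)} for every edge e ∈ E, and moreover A(Γ)·c = ‖Γ‖·c. -/
theorem cost_eq_perron_of_norm_cost {V E : Type*} [Fintype V] [DecidableEq V] [Fintype E]
    (s t : E → V)
    (hsym : ∃ σ : E → E, Function.Involutive σ ∧ (∀ e, s (σ e) = t e) ∧ ∀ e, t (σ e) = s e)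
    (hconn : GraphConnected s t) (W : E → ℝ)
    (h : FairBalancedCost s t (-(graphNorm s t)) W) :
    ∃ c : V → ℝ, (∀ v, 0 < c v) ∧ (∀ e, W e = c (t e) / c (s e)) ∧
      (adjMatrix s t).mulVec c = graphNorm s t • c := by
  classical
  obtain ⟨σ₀, hσ₀inv, hσ₀s, hσ₀t⟩ := hsym
  obtain ⟨hWpos, ⟨σ, hσinv, hσs, hσt, hσW⟩, hfairsum, -⟩ := h
  have hN0 : (0:ℝ) ≤ graphNorm s t := norm_nonneg _
  -- fairness in Finset form
  have hfair : ∀ v : V, ∑ e ∈ Finset.univ.filter (fun e => s e = v), W e = graphNorm s t := by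
    intro v
    have h3 : |(-(graphNorm s t))| = ∑ e : {e : E // s e = v}, W e.1 :=
      (hfairsum v).unique (hasSum_fintype _)
    rw [Finset.sum_subtype (p := fun e => s e = v) _ (by simp) W]
    rw [← h3, abs_neg, abs_of_nonneg hN0]
  rcases isEmpty_or_nonempty E with hE | hE
  · -- no edges: the adjacency matrix is zero and the norm is zero
    have hA : adjMatrix s t = 0 := by
      ext v w
      simp [adjMatrix, Nat.card_of_isEmpty]
    have hN : graphNorm s t = 0 := by
      rw [graphNorm, hA, map_zero, norm_zero]
    refine ⟨fun _ => 1, fun v => one_pos, fun e => (hE.elim e), ?_⟩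
    rw [hA, Matrix.zero_mulVec, hN, zero_smul]
  · obtain ⟨e₀⟩ := hE
    have : Nonempty V := ⟨s e₀⟩
    have hNpos : 0 < graphNorm s t := by
      have h1 : W e₀ ≤ ∑ e ∈ Finset.univ.filter (fun e => s e = s e₀), W e :=
        Finset.single_le_sum (fun e _ => (hWpos e).le) (by simp)
      have := hfair (s e₀)
      have := hWpos e₀
      linarith
    -- the adjacency matrix acting on vectors
    have hmulVec : ∀ (x : V → ℝ) (v : V),
        (adjMatrix s t).mulVec x v = ∑ e ∈ Finset.univ.filter (fun e => s e = v), x (t e) := by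
      intro x v
      have h1 : ∀ w : V, adjMatrix s t v w
          = ((Finset.univ.filter (fun e => s e = v ∧ t e = w)).card : ℝ) := by
        intro w
        simp [adjMatrix, Nat.card_eq_fintype_card, Fintype.card_subtype]
      have h0 : (adjMatrix s t).mulVec x v = ∑ w, adjMatrix s t v w * x w := by
        simp [Matrix.mulVec, dotProduct]
      have h2 : ∑ e ∈ Finset.univ.filter (fun e => s e = v), x (t e)
          = ∑ w : V, ∑ e ∈ (Finset.univ.filter (fun e => s e = v)).filter (fun e => t e = w),
              x (t e) :=
        (Finset.sum_fiberwise_of_maps_to (fun e _ => Finset.mem_univ (t e)) _).symm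
      rw [h0, h2]
      refine Finset.sum_congr rfl fun w _ => ?_
      rw [Finset.filter_filter]
      have h3 : ∀ e ∈ Finset.univ.filter (fun e => s e = v ∧ t e = w), x (t e) = x w := by
        intro e he
        rw [(Finset.mem_filter.mp he).2.2]
      rw [Finset.sum_congr rfl h3, Finset.sum_const, h1 w, nsmul_eq_mul]
    have hfiber : ∀ f : E → ℝ,
        ∑ v : V, ∑ e ∈ Finset.univ.filter (fun e => s e = v), f e = ∑ e, f e :=
      fun f => Finset.sum_fiberwise_of_maps_to (fun e _ => Finset.mem_univ (s e)) f
    -- summing the weights against squares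
    have hWsum : ∀ x : V → ℝ, ∑ e, W e * x (s e) ^ 2 = graphNorm s t * ∑ v, x v ^ 2 := by
      intro x
      rw [← hfiber (fun e => W e * x (s e) ^ 2), Finset.mul_sum]
      refine Finset.sum_congr rfl fun v _ => ?_
      rw [← hfair v, Finset.sum_mul]
      refine Finset.sum_congr rfl fun e he => ?_
      rw [(Finset.mem_filter.mp he).2]
    have hσsum : ∀ x : V → ℝ, ∑ e, W (σ e) * x (t e) ^ 2 = graphNorm s t * ∑ v, x v ^ 2 := by
      intro x
      rw [← hWsum x]
      exact Fintype.sum_equiv (hσinv.toPerm σ) _ _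
        (fun e => by simp only [Function.Involutive.coe_toPerm]; rw [hσs e])
    -- Cauchy-Schwarz with weights
    have hCS : ∀ x y : V → ℝ, (∑ e, x (s e) * y (t e)) ^ 2
        ≤ (graphNorm s t * ∑ v, x v ^ 2) * (graphNorm s t * ∑ v, y v ^ 2) := by
      intro x y
      have h1 : ∀ e, x (s e) * y (t e)
          = (Real.sqrt (W e) * x (s e)) * (Real.sqrt (W (σ e)) * y (t e)) := by
        intro e
        have hs1 : Real.sqrt (W e) * Real.sqrt (W (σ e)) = 1 := by
          rw [← Real.sqrt_mul (hWpos e).le, hσW e, Real.sqrt_one]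
        calc x (s e) * y (t e)
            = (Real.sqrt (W e) * Real.sqrt (W (σ e))) * (x (s e) * y (t e)) := by
              rw [hs1, one_mul]
          _ = _ := by ring
      calc (∑ e, x (s e) * y (t e)) ^ 2
          = (∑ e, (Real.sqrt (W e) * x (s e)) * (Real.sqrt (W (σ e)) * y (t e))) ^ 2 := by
            rw [Finset.sum_congr rfl fun e _ => h1 e]
        _ ≤ (∑ e, (Real.sqrt (W e) * x (s e)) ^ 2)
              * (∑ e, (Real.sqrt (W (σ e)) * y (t e)) ^ 2) :=
            Finset.sum_mul_sq_le_sq_mul_sq _ _ _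
        _ = (graphNorm s t * ∑ v, x v ^ 2) * (graphNorm s t * ∑ v, y v ^ 2) := by
            rw [← hWsum x, ← hσsum y]
            congr 1
            · exact Finset.sum_congr rfl fun e _ => by
                rw [mul_pow, Real.sq_sqrt (hWpos e).le]
            · exact Finset.sum_congr rfl fun e _ => by
                rw [mul_pow, Real.sq_sqrt (hWpos (σ e)).le]
    -- the Euclidean operator
    have hTapp : ∀ (ξ : EuclideanSpace ℝ V) (v : V),
        (Matrix.toEuclideanCLM (𝕜 := ℝ) (adjMatrix s t) ξ) v
          = (adjMatrix s t).mulVec (fun w => ξ w) v := fun ξ v => rfl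
    have hTnorm : ‖Matrix.toEuclideanCLM (𝕜 := ℝ) (adjMatrix s t)‖ = graphNorm s t := rfl
    set Tm : EuclideanSpace ℝ V →L[ℝ] EuclideanSpace ℝ V :=
      Matrix.toEuclideanCLM (𝕜 := ℝ) (adjMatrix s t) with hTmdef
    have hinner : ∀ a b : EuclideanSpace ℝ V,
        (inner ℝ (Tm a) b : ℝ)
          = ∑ e, a (t e) * b (s e) := by
      intro a b
      have h1 : (inner ℝ (Tm a) b : ℝ)
          = ∑ v, (Tm a) v * b v := by
        simp [PiLp.inner_apply, RCLike.inner_apply, mul_comm]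
      rw [h1]
      have h2 : ∀ v, (Tm a) v * b v
          = ∑ e ∈ Finset.univ.filter (fun e => s e = v), a (t e) * b (s e) := by
        intro v
        rw [hTapp, hmulVec, Finset.sum_mul]
        refine Finset.sum_congr rfl fun e he => ?_
        rw [(Finset.mem_filter.mp he).2]
      rw [Finset.sum_congr rfl fun v _ => h2 v, hfiber]
    have hnormsq : ∀ ξ : EuclideanSpace ℝ V, ‖ξ‖ ^ 2 = ∑ v, ξ v ^ 2 := by
      intro ξ
      rw [EuclideanSpace.norm_eq, Real.sq_sqrt (by positivity)]
      simp [sq_abs]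
    have hsymm : ∀ a b : EuclideanSpace ℝ V,
        (inner ℝ (Tm a) b : ℝ)
          = (inner ℝ (Tm b) a : ℝ) := by
      intro a b
      rw [hinner, hinner]
      exact Fintype.sum_equiv (hσ₀inv.toPerm σ₀) _ _
        (fun e => by simp only [Function.Involutive.coe_toPerm]; rw [hσ₀s e, hσ₀t e]; ring)
    -- norm attainment
    obtain ⟨x₀, hx₀n, hTx₀⟩ : ∃ x : EuclideanSpace ℝ V, ‖x‖ = 1 ∧
        ‖Tm x‖ = graphNorm s t := by
      have hsph : (Metric.sphere (0 : EuclideanSpace ℝ V) 1).Nonempty := by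
        refine ⟨EuclideanSpace.single (Classical.arbitrary V) 1, ?_⟩
        simp [EuclideanSpace.norm_single]
      obtain ⟨x₀, hx₀mem, hmax⟩ := (isCompact_sphere (0 : EuclideanSpace ℝ V) 1).exists_isMaxOn
        hsph (Continuous.norm ((Tm).continuous)).continuousOn
      have hx₀ : ‖x₀‖ = 1 := by simpa using hx₀mem
      refine ⟨x₀, hx₀, le_antisymm
        (by simpa [hx₀, hTnorm] using (Tm).le_opNorm x₀) ?_⟩
      rw [← hTnorm]
      refine ContinuousLinearMap.opNorm_le_bound _ (norm_nonneg _) fun y => ?_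
      rcases eq_or_ne y 0 with rfl | hy
      · simp
      · have hyn : ‖y‖ ≠ 0 := norm_ne_zero_iff.mpr hy
        have hmem : (‖y‖⁻¹ • y) ∈ Metric.sphere (0 : EuclideanSpace ℝ V) 1 := by
          simp [norm_smul, abs_of_nonneg, inv_mul_cancel₀ hyn]
        have hb := hmax hmem
        simp only [Set.mem_setOf_eq, map_smul, norm_smul, norm_inv, norm_norm] at hb
        calc ‖Tm y‖
            = ‖y‖ * (‖y‖⁻¹ * ‖Tm y‖) := by
              field_simp
          _ ≤ ‖y‖ * ‖Tm x₀‖ := by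
              apply mul_le_mul_of_nonneg_left _ (norm_nonneg y)
              simpa using hb
          _ = ‖Tm x₀‖ * ‖y‖ := mul_comm _ _
    -- square trick: T (T x₀) = N² x₀
    have h1 : (inner ℝ (Tm
        (Tm x₀)) x₀ : ℝ) = graphNorm s t ^ 2 := by
      rw [hsymm, real_inner_self_eq_norm_sq, hTx₀]
    have h2 : ‖Tm
        (Tm x₀)‖ ≤ graphNorm s t ^ 2 := by
      calc ‖Tm
            (Tm x₀)‖
          ≤ ‖Tm‖
              * ‖Tm x₀‖ :=
            ContinuousLinearMap.le_opNorm _ _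
        _ = graphNorm s t ^ 2 := by rw [hTnorm, hTx₀, sq]
    have h3 : Tm
        (Tm x₀) = (graphNorm s t ^ 2) • x₀ := by
      have hexp : ‖Tm
            (Tm x₀) - (graphNorm s t ^ 2) • x₀‖ ^ 2
          = ‖Tm
              (Tm x₀)‖ ^ 2
            - 2 * (graphNorm s t ^ 2)
              * (inner ℝ (Tm
                  (Tm x₀)) x₀ : ℝ)
            + (graphNorm s t ^ 2) ^ 2 := by
        rw [norm_sub_sq_real, real_inner_smul_right, norm_smul, hx₀n]
        rw [Real.norm_eq_abs, abs_of_nonneg (sq_nonneg _)]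
        ring
      have hle : ‖Tm
            (Tm x₀) - (graphNorm s t ^ 2) • x₀‖ ^ 2
          ≤ 0 := by
        rw [hexp, h1]
        nlinarith [norm_nonneg (Tm
          (Tm x₀))]
      have hz : ‖Tm
            (Tm x₀) - (graphNorm s t ^ 2) • x₀‖ = 0 := by
        have := sq_nonneg ‖Tm
          (Tm x₀) - (graphNorm s t ^ 2) • x₀‖
        nlinarith [norm_nonneg (Tm
          (Tm x₀) - (graphNorm s t ^ 2) • x₀)]
      rw [← sub_eq_zero]
      exact norm_eq_zero.mp hz
    -- a nonzero vector with extremal Rayleigh quotient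
    obtain ⟨ξ, hξ0, hcase⟩ : ∃ ξ : EuclideanSpace ℝ V, ξ ≠ 0 ∧
        ((inner ℝ (Tm ξ) ξ : ℝ)
            = graphNorm s t * ‖ξ‖ ^ 2 ∨
          (inner ℝ (Tm ξ) ξ : ℝ)
            = -(graphNorm s t * ‖ξ‖ ^ 2)) := by
      by_cases hu : Tm x₀ + graphNorm s t • x₀ = 0
      · refine ⟨x₀, ?_, Or.inr ?_⟩
        · intro h0
          rw [h0, norm_zero] at hx₀n
          norm_num at hx₀n
        · have hyx : Tm x₀
              = (-(graphNorm s t)) • x₀ := by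
            rw [neg_smul, ← add_eq_zero_iff_eq_neg]
            exact hu
          rw [hyx, real_inner_smul_left, real_inner_self_eq_norm_sq, hx₀n]
          ring
      · refine ⟨Tm x₀ + graphNorm s t • x₀, hu,
          Or.inl ?_⟩
        have hTu : Tm
              (Tm x₀ + graphNorm s t • x₀)
            = graphNorm s t • (Tm x₀
                + graphNorm s t • x₀) := by
          rw [map_add, map_smul, h3, smul_add, smul_smul, sq, add_comm]
        rw [hTu, real_inner_smul_left, real_inner_self_eq_norm_sq]
    -- pass to absolute values
    set ξa : V → ℝ := fun v => |ξ v| with hξa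
    have hxx0 : ∀ v, 0 ≤ ξa v := fun v => abs_nonneg _
    have hQeq : ∑ v, ξa v ^ 2 = ∑ v, ξ v ^ 2 := by
      refine Finset.sum_congr rfl fun v _ => ?_
      rw [hξa]
      exact sq_abs _
    have hQpos : 0 < ∑ v, ξ v ^ 2 := by
      rw [← hnormsq ξ]
      exact pow_pos (norm_pos_iff.mpr hξ0) 2
    have hip : |∑ e, ξ (t e) * ξ (s e)| = graphNorm s t * ∑ v, ξ v ^ 2 := by
      rw [← hinner ξ ξ, ← hnormsq ξ]
      rcases hcase with hc | hc
      · rw [hc, abs_of_nonneg (by positivity)]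
      · rw [hc, abs_neg, abs_of_nonneg (by positivity)]
    have hS_ge : graphNorm s t * ∑ v, ξ v ^ 2 ≤ ∑ e, ξa (s e) * ξa (t e) := by
      calc graphNorm s t * ∑ v, ξ v ^ 2 = |∑ e, ξ (t e) * ξ (s e)| := hip.symm
        _ ≤ ∑ e, |ξ (t e) * ξ (s e)| := Finset.abs_sum_le_sum_abs _ _
        _ = ∑ e, ξa (s e) * ξa (t e) := by
            refine Finset.sum_congr rfl fun e _ => ?_
            rw [abs_mul, hξa]
            ring
    have hS_le : (∑ e, ξa (s e) * ξa (t e)) ^ 2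
        ≤ (graphNorm s t * ∑ v, ξ v ^ 2) ^ 2 := by
      have := hCS ξa ξa
      rw [hQeq] at this
      calc (∑ e, ξa (s e) * ξa (t e)) ^ 2
          ≤ (graphNorm s t * ∑ v, ξ v ^ 2) * (graphNorm s t * ∑ v, ξ v ^ 2) := this
        _ = (graphNorm s t * ∑ v, ξ v ^ 2) ^ 2 := (sq _).symm
    have hSeq : ∑ e, ξa (s e) * ξa (t e) = graphNorm s t * ∑ v, ξ v ^ 2 := by
      have hNQ : 0 ≤ graphNorm s t * ∑ v, ξ v ^ 2 := by positivity
      nlinarith [hS_ge, hS_le]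
    -- equality in Cauchy-Schwarz
    have ha2 : ∑ e, (Real.sqrt (W e) * ξa (s e)) ^ 2 = graphNorm s t * ∑ v, ξ v ^ 2 := by
      rw [← hQeq, ← hWsum ξa]
      exact Finset.sum_congr rfl fun e _ => by rw [mul_pow, Real.sq_sqrt (hWpos e).le]
    have hb2 : ∑ e, (Real.sqrt (W (σ e)) * ξa (t e)) ^ 2 = graphNorm s t * ∑ v, ξ v ^ 2 := by
      rw [← hQeq, ← hσsum ξa]
      exact Finset.sum_congr rfl fun e _ => by rw [mul_pow, Real.sq_sqrt (hWpos (σ e)).le]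
    have hab : ∑ e, (Real.sqrt (W e) * ξa (s e)) * (Real.sqrt (W (σ e)) * ξa (t e))
        = ∑ e, ξa (s e) * ξa (t e) := by
      refine Finset.sum_congr rfl fun e _ => ?_
      have hs1 : Real.sqrt (W e) * Real.sqrt (W (σ e)) = 1 := by
        rw [← Real.sqrt_mul (hWpos e).le, hσW e, Real.sqrt_one]
      calc (Real.sqrt (W e) * ξa (s e)) * (Real.sqrt (W (σ e)) * ξa (t e))
          = (Real.sqrt (W e) * Real.sqrt (W (σ e))) * (ξa (s e) * ξa (t e)) := by ring
        _ = ξa (s e) * ξa (t e) := by rw [hs1, one_mul]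
    have hzero : ∑ e, (Real.sqrt (W e) * ξa (s e) - Real.sqrt (W (σ e)) * ξa (t e)) ^ 2 = 0 := by
      have hexp : ∀ e : E, (Real.sqrt (W e) * ξa (s e) - Real.sqrt (W (σ e)) * ξa (t e)) ^ 2
          = (Real.sqrt (W e) * ξa (s e)) ^ 2 + (Real.sqrt (W (σ e)) * ξa (t e)) ^ 2
            - 2 * ((Real.sqrt (W e) * ξa (s e)) * (Real.sqrt (W (σ e)) * ξa (t e))) :=
        fun e => by ring
      rw [Finset.sum_congr rfl fun e _ => hexp e, Finset.sum_sub_distrib,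
        Finset.sum_add_distrib, ← Finset.mul_sum, ha2, hb2, hab, hSeq]
      ring
    have hae : ∀ e : E, Real.sqrt (W e) * ξa (s e) = Real.sqrt (W (σ e)) * ξa (t e) := by
      intro e
      have h4 := (Finset.sum_eq_zero_iff_of_nonneg (fun e _ => sq_nonneg _)).mp hzero e
        (Finset.mem_univ e)
      have h5 := (pow_eq_zero_iff two_ne_zero).mp h4
      linarith [h5]
    have hkey : ∀ e : E, W e * ξa (s e) = ξa (t e) := by
      intro e
      have hs1 : Real.sqrt (W e) * Real.sqrt (W (σ e)) = 1 := by
        rw [← Real.sqrt_mul (hWpos e).le, hσW e, Real.sqrt_one]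
      calc W e * ξa (s e)
          = Real.sqrt (W e) * (Real.sqrt (W e) * ξa (s e)) := by
            rw [← mul_assoc, Real.mul_self_sqrt (hWpos e).le]
        _ = Real.sqrt (W e) * (Real.sqrt (W (σ e)) * ξa (t e)) := by rw [hae e]
        _ = (Real.sqrt (W e) * Real.sqrt (W (σ e))) * ξa (t e) := by ring
        _ = ξa (t e) := by rw [hs1, one_mul]
    -- positivity everywhere via connectivity
    obtain ⟨v₁, -, hv₁⟩ : ∃ v₁ ∈ Finset.univ, ξa v₁ ^ 2 ≠ 0 := by
      apply Finset.exists_ne_zero_of_sum_ne_zero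
      rw [hQeq]
      exact ne_of_gt hQpos
    have hv₁pos : 0 < ξa v₁ :=
      lt_of_le_of_ne (hxx0 v₁) (Ne.symm (fun hc => hv₁ (by rw [hc]; norm_num)))
    have hpos : ∀ w, 0 < ξa w := by
      intro w
      induction hconn v₁ w with
      | refl => exact hv₁pos
      | tail _ hbc ih =>
        obtain ⟨e, ⟨hs', ht'⟩ | ⟨hs', ht'⟩⟩ := hbc
        · rw [← ht', ← hkey e, hs']
          exact mul_pos (hWpos e) ih
        · rcases (hxx0 (s e)).lt_or_eq with hlt | heq
          · rw [← hs']; exact hlt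
          · exfalso
            have h6 : ξa (t e) = 0 := by rw [← hkey e, ← heq, mul_zero]
            rw [ht'] at h6
            rw [h6] at ih
            exact lt_irrefl 0 ih
    -- conclusion
    refine ⟨ξa, hpos, ?_, ?_⟩
    · intro e
      rw [eq_div_iff (ne_of_gt (hpos (s e)))]
      exact hkey e
    · funext v
      rw [hmulVec ξa v]
      have h7 : ∀ e ∈ Finset.univ.filter (fun e => s e = v), ξa (t e) = W e * ξa v := by
        intro e he
        rw [← hkey e, (Finset.mem_filter.mp he).2]
      rw [Finset.sum_congr rfl h7, ← Finset.sum_mul, hfair v]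
      simp [Pi.smul_apply, smul_eq_mul]
end

section
/- Let Γ = (V, E, s, t) be a finite connected oriented graph which is a symmetric tree: Γ has no loops, for each pair of distinct vertices v, w there is at most one edge from v to w, the edge set is invariant under exchanging source and target (there is an edge from v to w if and only if there is one from w to v), and the number of edges equals 2·(#V − 1). If W is a fair and balanced T-cost on Γ for some nonzero real T, then there exists c : V → ℝ with c_v > 0 for all v such that W(e) = c_{t(e)}/c_{s(e)} for every edge e, and A(Γ)·c = |T|·c. -/
section MyAux
open SimpleGraph

def myDartProd {V : Type*} {G : SimpleGraph V} (f : V → V → ℝ) {a b : V} (p : G.Walk a b) : ℝ :=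
  (p.darts.map fun d => f d.toProd.1 d.toProd.2).prod

@[simp] lemma myDartProd_nil {V : Type*} {G : SimpleGraph V} (f : V → V → ℝ) (a : V) :
    myDartProd f (.nil : G.Walk a a) = 1 := rfl

@[simp] lemma myDartProd_cons {V : Type*} {G : SimpleGraph V} (f : V → V → ℝ) {a b u : V}
    (h : G.Adj a b) (p : G.Walk b u) :
    myDartProd f (.cons h p) = f a b * myDartProd f p := by
  simp [myDartProd]

@[simp] lemma myDartProd_append {V : Type*} {G : SimpleGraph V} (f : V → V → ℝ) {a b u : V}
    (p : G.Walk a b) (q : G.Walk b u) :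
    myDartProd f (p.append q) = myDartProd f p * myDartProd f q := by
  simp [myDartProd, Walk.darts_append]

lemma myDartProd_pos {V : Type*} {G : SimpleGraph V} {f : V → V → ℝ}
    (hf : ∀ x y, 0 < f x y) {a b : V} (p : G.Walk a b) : 0 < myDartProd f p := by
  induction p with
  | nil => norm_num [myDartProd]
  | cons h p ih => simpa using mul_pos (hf _ _) ih

lemma my_card_le_edgeFinset {V : Type*} [Fintype V] [DecidableEq V] (G : SimpleGraph V)
    [Fintype G.edgeSet] (hc : G.Connected) :
    Fintype.card V ≤ G.edgeFinset.card + 1 := by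
  have : Nonempty V := hc.nonempty
  inhabit V
  choose f hf using fun w => (hc.preconnected w default).exists_walk_length_eq_dist
  have key : Finset.card ({default} : Finset V)ᶜ ≤ G.edgeFinset.card := by
    apply Finset.card_le_card_of_injOn (fun w => s(w, (f w).getVert 1))
    · intro w hw
      have hne : w ≠ default := by simpa using hw
      have hnil : ¬ (f w).Nil := Walk.not_nil_of_ne hne
      simpa using ((f w).adj_snd hnil)
    · intro a ha b hb hab
      have hnea : a ≠ default := by simpa using ha
      have hneb : b ≠ default := by simpa using hb
      have hnila : ¬ (f a).Nil := Walk.not_nil_of_ne hnea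
      have hnilb : ¬ (f b).Nil := Walk.not_nil_of_ne hneb
      rw [Sym2.eq_iff] at hab
      rcases hab with ⟨h1, _⟩ | ⟨h1, h2⟩
      · exact h1
      · exfalso
        have ta : G.dist b default ≤ (f a).tail.length := by
          have := G.dist_le ((f a).tail.copy h2 rfl)
          simpa using this
        have tb : G.dist a default ≤ (f b).tail.length := by
          have := G.dist_le ((f b).tail.copy h1.symm rfl)
          simpa using this
        have la : (f a).tail.length + 1 = G.dist a default := by
          rw [Walk.length_tail_add_one hnila, hf a]
        have lb : (f b).tail.length + 1 = G.dist b default := by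
          rw [Walk.length_tail_add_one hnilb, hf b]
        omega
  have hcompl : Finset.card ({default} : Finset V)ᶜ + 1 = Fintype.card V := by
    rw [Finset.card_compl, Finset.card_singleton, Nat.sub_add_cancel Fintype.card_pos]
  omega

lemma my_acyclic_of_card {V : Type*} [Fintype V] [DecidableEq V] (G : SimpleGraph V)
    [Fintype G.edgeSet] (hc : G.Connected) (hcard : G.edgeFinset.card + 1 = Fintype.card V) :
    G.IsAcyclic := by
  intro u c hcyc
  have h3 := hcyc.three_le_length
  have hne : c.edges ≠ [] := by
    intro h
    have := c.length_edges
    rw [h] at this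
    simp at this
    omega
  obtain ⟨e, he⟩ := List.exists_mem_of_ne_nil _ hne
  induction e with
  | _ v w =>
  have hadj : G.Adj v w := c.adj_of_mem_edges he
  have hreach : (G \ fromEdgeSet {s(v, w)}).Reachable v w :=
    (adj_and_reachable_delete_edges_iff_exists_cycle.mpr ⟨u, c, hcyc, he⟩).2
  set G' := G \ fromEdgeSet {s(v, w)} with hG'
  have hadj' : ∀ x y, G.Adj x y → G'.Reachable x y := by
    intro x y hxy
    by_cases hxy' : s(x, y) = s(v, w)
    · rw [Sym2.eq_iff] at hxy'
      rcases hxy' with ⟨rfl, rfl⟩ | ⟨rfl, rfl⟩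
      · exact hreach
      · exact hreach.symm
    · refine Adj.reachable ?_
      rw [hG']
      simp only [sdiff_adj, fromEdgeSet_adj, Set.mem_singleton_iff]
      exact ⟨hxy, fun hh => hxy' hh.1⟩
  have hconn' : G'.Connected := by
    haveI : Nonempty V := hc.nonempty
    refine ⟨fun x y => ?_⟩
    have hr := hc.preconnected x y
    rw [SimpleGraph.reachable_iff_reflTransGen] at hr
    induction hr with
    | refl => exact Reachable.refl _
    | tail _ h2 ih => exact ih.trans (hadj' _ _ h2)
  haveI : Fintype G'.edgeSet := Set.Finite.fintype (Set.toFinite _)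
  have hEF : G'.edgeFinset = G.edgeFinset.erase s(v, w) := by
    ext q
    simp only [mem_edgeFinset, Finset.mem_erase, hG', edgeSet_sdiff, edgeSet_fromEdgeSet,
      Set.mem_diff, Set.mem_setOf_eq, Set.mem_singleton_iff]
    constructor
    · rintro ⟨hq, hq2⟩
      refine ⟨fun hh => hq2 ⟨hh, ?_⟩, hq⟩
      rw [hh]
      simp [hadj.ne]
    · rintro ⟨hq1, hq2⟩
      exact ⟨hq2, fun hh => hq1 hh.1⟩
  have hmem : s(v, w) ∈ G.edgeFinset := by simpa using hadj
  have hcard' : G'.edgeFinset.card = G.edgeFinset.card - 1 := by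
    rw [hEF, Finset.card_erase_of_mem hmem]
  have hle := my_card_le_edgeFinset G' hconn'
  have hpos : 1 ≤ G.edgeFinset.card := Finset.card_pos.mpr ⟨_, hmem⟩
  omega

lemma myDartProd_walk_indep {V : Type*} {G : SimpleGraph V} (hac : G.IsAcyclic)
    {f : V → V → ℝ} (hbal : ∀ a b, G.Adj a b → f a b * f b a = 1)
    {a b : V} (p q : G.Walk a b) (hq : q.IsPath) :
    myDartProd f p = myDartProd f q := by
  induction p with
  | nil =>
    rw [Walk.isPath_iff_eq_nil.mp hq]
  | @cons a w b h p ih =>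
    classical
    have hP : (p.toPath : G.Walk w b).IsPath := p.toPath.2
    have ihP := ih (p.toPath : G.Walk w b) hP
    set P : G.Walk w b := (p.toPath : G.Walk w b) with hPdef
    by_cases ha : a ∈ P.support
    · have htake : (P.takeUntil a ha).IsPath := hP.takeUntil ha
      have hdrop : (P.dropUntil a ha).IsPath := hP.dropUntil ha
      have hsingle : P.takeUntil a ha = (Path.singleton h.symm : G.Walk w a) := by
        have := hac.path_unique ⟨P.takeUntil a ha, htake⟩ (Path.singleton h.symm)
        exact congrArg Subtype.val this
      have hq' : P.dropUntil a ha = q := by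
        have := hac.path_unique ⟨P.dropUntil a ha, hdrop⟩ ⟨q, hq⟩
        exact congrArg Subtype.val this
      have hspec := P.take_spec ha
      calc myDartProd f (Walk.cons h p)
          = f a w * myDartProd f P := by simp [ihP]
        _ = f a w * (myDartProd f (P.takeUntil a ha) * myDartProd f (P.dropUntil a ha)) := by
            rw [← myDartProd_append, hspec]
        _ = f a w * (f w a * myDartProd f q) := by
            rw [hsingle, hq']; simp [Path.singleton]
        _ = myDartProd f q := by
            rw [← mul_assoc, hbal a w h, one_mul]
    · have hcons : (Walk.cons h P).IsPath := hP.cons ha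
      have : Walk.cons h P = q := by
        have := hac.path_unique ⟨Walk.cons h P, hcons⟩ ⟨q, hq⟩
        exact congrArg Subtype.val this
      rw [← this]
      simp [ihP]

open scoped Classical in
noncomputable def myCostFun {V E : Type*} (s t : E → V) (W : E → ℝ) : V → V → ℝ :=
  fun a b => if h : ∃ e, s e = a ∧ t e = b then W h.choose else 1

lemma myCostFun_pos {V E : Type*} (s t : E → V) {W : E → ℝ} (hW : ∀ e, 0 < W e) (a b : V) :
    0 < myCostFun s t W a b := by
  classical
  rw [myCostFun]
  split
  · exact hW _
  · norm_num

lemma myCostFun_edge {V E : Type*} {s t : E → V} (W : E → ℝ)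
    (hsimple : ∀ e f : E, s e = s f → t e = t f → e = f) (e : E) :
    myCostFun s t W (s e) (t e) = W e := by
  classical
  have hex : ∃ e', s e' = s e ∧ t e' = t e := ⟨e, rfl, rfl⟩
  rw [myCostFun]
  rw [dif_pos hex, hsimple hex.choose e hex.choose_spec.1 hex.choose_spec.2]

end MyAux

theorem tree_cost_eq_perron {V E : Type*} [Fintype V] [DecidableEq V] [Fintype E]
    (s t : E → V) (hconn : GraphConnected s t)
    (hloop : ∀ e : E, s e ≠ t e)
    (hsimple : ∀ e f : E, s e = s f → t e = t f → e = f)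
    (hsym : ∀ e : E, ∃ f : E, s f = t e ∧ t f = s e)
    (hcard : Fintype.card E = 2 * (Fintype.card V - 1))
    (T : ℝ) (hT : T ≠ 0) (W : E → ℝ) (h : FairBalancedCost s t T W) :
    ∃ c : V → ℝ, (∀ v, 0 < c v) ∧ (∀ e, W e = c (t e) / c (s e)) ∧
      (adjMatrix s t).mulVec c = |T| • c := by
  classical
  obtain ⟨hWpos, ⟨σ, hσinv, hσs, hσt, hσW⟩, hfair, _⟩ := h
  -- trivial case: no vertices
  rcases isEmpty_or_nonempty V with hV | hV
  · refine ⟨fun _ => 1, fun v => (IsEmpty.false v).elim, fun e => (IsEmpty.false (s e)).elim, ?_⟩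
    funext v
    exact (IsEmpty.false v).elim
  inhabit V
  -- the associated simple graph
  set G : SimpleGraph V := SimpleGraph.fromRel (fun a b => ∃ e, s e = a ∧ t e = b) with hGdef
  have hAdj : ∀ a b, G.Adj a b ↔ ∃ e, s e = a ∧ t e = b := by
    intro a b
    rw [hGdef, SimpleGraph.fromRel_adj]
    constructor
    · rintro ⟨hne, ⟨e, he1, he2⟩ | ⟨e, he1, he2⟩⟩
      · exact ⟨e, he1, he2⟩
      · obtain ⟨f, hf1, hf2⟩ := hsym e
        exact ⟨f, by rw [hf1, he2], by rw [hf2, he1]⟩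
    · rintro ⟨e, he1, he2⟩
      exact ⟨by rw [← he1, ← he2]; exact hloop e, Or.inl ⟨e, he1, he2⟩⟩
  haveI : Fintype G.edgeSet := Set.Finite.fintype (Set.toFinite _)
  have hGconn : G.Connected := by
    refine ⟨fun x y => ?_⟩
    rw [SimpleGraph.reachable_iff_reflTransGen]
    refine Relation.ReflTransGen.mono ?_ x y (hconn x y)
    rintro a b ⟨e, ⟨he1, he2⟩ | ⟨he1, he2⟩⟩
    · exact (hAdj a b).mpr ⟨e, he1, he2⟩
    · exact ((hAdj b a).mpr ⟨e, he1, he2⟩).symm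
  -- counting: #E = 2 * #edges(G)
  have hfiber : ∀ q ∈ G.edgeFinset,
      (Finset.univ.filter fun e : E => s(s e, t e) = q).card = 2 := by
    intro q hq
    induction q with
    | _ v w =>
    have hvw : G.Adj v w := by simpa using hq
    obtain ⟨e₁, he₁s, he₁t⟩ := (hAdj v w).mp hvw
    obtain ⟨e₂, he₂s, he₂t⟩ := hsym e₁
    rw [he₁t] at he₂s
    rw [he₁s] at he₂t
    have hne : e₁ ≠ e₂ := by
      intro hh
      apply hvw.ne
      rw [← he₁s, hh, he₂s]
    have hset : (Finset.univ.filter fun e : E => s(s e, t e) = s(v, w)) = {e₁, e₂} := by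
      ext e
      simp only [Finset.mem_filter, Finset.mem_univ, true_and, Sym2.eq_iff,
        Finset.mem_insert, Finset.mem_singleton]
      constructor
      · rintro (⟨hh1, hh2⟩ | ⟨hh1, hh2⟩)
        · exact Or.inl (hsimple e e₁ (by rw [hh1, he₁s]) (by rw [hh2, he₁t]))
        · exact Or.inr (hsimple e e₂ (by rw [hh1, he₂s]) (by rw [hh2, he₂t]))
      · rintro (rfl | rfl)
        · exact Or.inl ⟨he₁s, he₁t⟩
        · exact Or.inr ⟨he₂s, he₂t⟩
    rw [hset, Finset.card_insert_of_notMem (by simpa using hne), Finset.card_singleton]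
  have hcount : Fintype.card E = 2 * G.edgeFinset.card := by
    have hmaps : ∀ e : E, (fun e : E => s(s e, t e)) e ∈ G.edgeFinset := by
      intro e
      simp only [SimpleGraph.mem_edgeFinset, SimpleGraph.mem_edgeSet]
      exact (hAdj (s e) (t e)).mpr ⟨e, rfl, rfl⟩
    calc Fintype.card E = (Finset.univ : Finset E).card := rfl
      _ = ∑ q ∈ G.edgeFinset, (Finset.univ.filter fun e : E => s(s e, t e) = q).card :=
          Finset.card_eq_sum_card_fiberwise fun e _ => hmaps e
      _ = ∑ _q ∈ G.edgeFinset, 2 := Finset.sum_congr rfl hfiber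
      _ = 2 * G.edgeFinset.card := by rw [Finset.sum_const, smul_eq_mul, mul_comm]
  have hedgecard : G.edgeFinset.card + 1 = Fintype.card V := by
    have h1 : 1 ≤ Fintype.card V := Fintype.card_pos
    omega
  have hac : G.IsAcyclic := my_acyclic_of_card G hGconn hedgecard
  -- the multiplicative weight function
  set f : V → V → ℝ := myCostFun s t W with hfdef
  have hfpos : ∀ a b, 0 < f a b := myCostFun_pos s t hWpos
  have hfedge : ∀ e, f (s e) (t e) = W e := fun e => myCostFun_edge W hsimple e
  have hbal : ∀ a b, G.Adj a b → f a b * f b a = 1 := by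
    intro a b hab
    obtain ⟨e, rfl, rfl⟩ := (hAdj a b).mp hab
    have h2 : f (t e) (s e) = W (σ e) := by
      have := hfedge (σ e)
      rwa [hσs, hσt] at this
    rw [hfedge e, h2, hσW e]
  -- the vertex weights
  set c : V → ℝ := fun v =>
    myDartProd f (((hGconn.preconnected default v).some.toPath : G.Path default v) :
      G.Walk default v) with hcdef
  have hcpos : ∀ v, 0 < c v := fun v => myDartProd_pos hfpos _
  have hcedge : ∀ e : E, c (t e) = W e * c (s e) := by
    intro e
    have hadj : G.Adj (s e) (t e) := (hAdj (s e) (t e)).mpr ⟨e, rfl, rfl⟩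
    have := myDartProd_walk_indep hac hbal
      ((((hGconn.preconnected default (s e)).some.toPath : G.Path default (s e)) :
          G.Walk default (s e)).append (SimpleGraph.Walk.cons hadj SimpleGraph.Walk.nil))
      (((hGconn.preconnected default (t e)).some.toPath : G.Path default (t e)) :
          G.Walk default (t e))
      ((hGconn.preconnected default (t e)).some.toPath.2)
    rw [myDartProd_append, myDartProd_cons, myDartProd_nil, mul_one, hfedge] at this
    have hcv : ∀ v, c v = myDartProd f
        (((hGconn.preconnected default v).some.toPath : SimpleGraph.Path G default v) :
          SimpleGraph.Walk G default v) := fun v => rfl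
    rw [hcv (t e), hcv (s e), ← this]
    ring
  refine ⟨c, hcpos, ?_, ?_⟩
  · intro e
    rw [hcedge e, mul_div_assoc, div_self (hcpos (s e)).ne', mul_one]
  · funext v
    have hsum : ∑ e : {e : E // s e = v}, W e.1 = |T| :=
      (hasSum_fintype fun e : {e : E // s e = v} => W e.1).unique (hfair v)
    have hsubty : ∑ e ∈ Finset.univ.filter (fun e : E => s e = v), W e = |T| := by
      rw [Finset.sum_subtype (p := fun e : E => s e = v) _
        (fun e => by simp [Finset.mem_filter]) W]
      exact hsum
    have hrow : ∑ w, (Nat.card {e : E // s e = v ∧ t e = w} : ℝ) * c w = |T| * c v := by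
      have hstep1 : ∀ w, (Nat.card {e : E // s e = v ∧ t e = w} : ℝ) * c w =
          ∑ e ∈ (Finset.univ.filter fun e : E => s e = v).filter (fun e => t e = w),
            c (t e) := by
        intro w
        rw [Finset.filter_filter]
        rw [Nat.card_eq_fintype_card, Fintype.card_subtype]
        rw [Finset.sum_congr rfl (fun e he => by
          rw [(Finset.mem_filter.mp he).2.2])]
        rw [Finset.sum_const, nsmul_eq_mul]
      calc ∑ w, (Nat.card {e : E // s e = v ∧ t e = w} : ℝ) * c w
          = ∑ w, ∑ e ∈ (Finset.univ.filter fun e : E => s e = v).filter (fun e => t e = w),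
              c (t e) := Finset.sum_congr rfl fun w _ => hstep1 w
        _ = ∑ e ∈ Finset.univ.filter (fun e : E => s e = v), c (t e) :=
            Finset.sum_fiberwise_of_maps_to (fun e _ => Finset.mem_univ _) _
        _ = ∑ e ∈ Finset.univ.filter (fun e : E => s e = v), W e * c v := by
            refine Finset.sum_congr rfl fun e he => ?_
            rw [hcedge e, (Finset.mem_filter.mp he).2]
        _ = (∑ e ∈ Finset.univ.filter (fun e : E => s e = v), W e) * c v := by
            rw [Finset.sum_mul]
        _ = |T| * c v := by rw [hsubty]
    have hgoal : ((adjMatrix s t).mulVec c) v = |T| * c v := by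
      calc ((adjMatrix s t).mulVec c) v
          = ∑ w, (Nat.card {e : E // s e = v ∧ t e = w} : ℝ) * c w := by
            simp [adjMatrix, Matrix.mulVec, dotProduct]
        _ = |T| * c v := hrow
    simpa using hgoal
end

section
/- Let 0 < q < 1 and let a : ℤ → ℝ be a function with a_m > 0 for all m and a_m + 1/a_{m−1} = q + q⁻¹ for every m ∈ ℤ. Then for every m ∈ ℤ and every integer n ≥ 1 one has a_m ≤ [n+1]_q/[n]_q and 1/a_m ≤ [n+1]_q/[n]_q. Consequently q ≤ a_m ≤ q⁻¹ for all m ∈ ℤ. -/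
/-- The `q`-integer `[n]_q = (q^{-n} - q^n)/(q^{-1} - q)`. -/
noncomputable def qInt (q : ℝ) (n : ℕ) : ℝ := (q ^ (-(n : ℤ)) - q ^ (n : ℤ)) / (q⁻¹ - q)

theorem weights_bounded_by_qint_ratios (q : ℝ) (hq0 : 0 < q) (hq1 : q < 1)
    (a : ℤ → ℝ) (hpos : ∀ m, 0 < a m)
    (hrec : ∀ m : ℤ, a m + 1 / a (m - 1) = q + q⁻¹) :
    (∀ m : ℤ, ∀ n : ℕ, 1 ≤ n →
      a m ≤ qInt q (n + 1) / qInt q n ∧ 1 / a m ≤ qInt q (n + 1) / qInt q n) ∧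
    (∀ m : ℤ, q ≤ a m ∧ a m ≤ q⁻¹) := by
  have hq : q ≠ 0 := ne_of_gt hq0
  have hmul : q * q⁻¹ = 1 := mul_inv_cancel₀ hq
  have hqi : 1 < q⁻¹ := by nlinarith
  have hd : 0 < q⁻¹ - q := by linarith
  have hqe : ∀ n : ℕ, qInt q n = ((q ^ n)⁻¹ - q ^ n) / (q⁻¹ - q) := by
    intro n
    simp [qInt, zpow_neg, zpow_natCast]
  have hqpos : ∀ n : ℕ, 1 ≤ n → 0 < qInt q n := by
    intro n hn
    rw [hqe]
    apply div_pos _ hd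
    have h1 : q ^ n < 1 := pow_lt_one₀ hq0.le hq1 (by omega)
    have h2 : 0 < q ^ n := pow_pos hq0 n
    have h3 : 1 < (q ^ n)⁻¹ := by
      have h4 : q ^ n * (q ^ n)⁻¹ = 1 := mul_inv_cancel₀ (ne_of_gt h2)
      have h5 : 0 < (q ^ n)⁻¹ := inv_pos.mpr h2
      nlinarith
    linarith
  have hqone : ∀ n : ℕ, 1 ≤ n → 1 ≤ qInt q n := by
    intro n hn
    rw [hqe]
    rw [le_div_iff₀ hd, one_mul]
    have h1 : q ^ n ≤ q := by
      calc q ^ n ≤ q ^ 1 := pow_le_pow_of_le_one hq0.le hq1.le hn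
      _ = q := pow_one q
    have h2 : 0 < q ^ n := pow_pos hq0 n
    have h3 : q⁻¹ ≤ (q ^ n)⁻¹ := by
      apply inv_anti₀ h2 h1
    linarith
  have hrecq : ∀ n : ℕ, qInt q (n + 2) + qInt q n = (q + q⁻¹) * qInt q (n + 1) := by
    intro n
    have hn0 : q ^ n ≠ 0 := pow_ne_zero n hq
    rw [hqe, hqe, hqe, ← add_div, ← mul_div_assoc]
    congr 1
    field_simp [pow_succ]
    ring
  have hgap : ∀ n : ℕ, qInt q (n + 1) - q⁻¹ * qInt q n = q ^ n := by
    intro n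
    have hn0 : q ^ n ≠ 0 := pow_ne_zero n hq
    rw [hqe, hqe, mul_div_assoc', div_sub_div_same, div_eq_iff (ne_of_gt hd)]
    field_simp [pow_succ]
    ring
  -- main induction
  have key : ∀ n : ℕ, 1 ≤ n → ∀ m : ℤ,
      a m ≤ qInt q (n + 1) / qInt q n ∧ 1 / a m ≤ qInt q (n + 1) / qInt q n := by
    intro n hn
    induction n, hn using Nat.le_induction with
    | base =>
      intro m
      have h1 : qInt q 1 = 1 := by
        rw [hqe]; simp [div_self (ne_of_gt hd)]
      have h2 : qInt q 2 = q + q⁻¹ := by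
        rw [hqe]
        rw [div_eq_iff (ne_of_gt hd)]
        field_simp
        ring
      rw [h1, h2, div_one]
      constructor
      · have := hrec m
        have h3 : 0 < 1 / a (m - 1) := one_div_pos.mpr (hpos (m - 1))
        linarith
      · have := hrec (m + 1)
        simp only [add_sub_cancel_right] at this
        have h3 : 0 < a (m + 1) := hpos (m + 1)
        linarith
    | succ n hn ih =>
      intro m
      have hQn : 0 < qInt q n := hqpos n hn
      have hQn1 : 0 < qInt q (n + 1) := hqpos (n + 1) (by omega)
      have hRform : qInt q (n + 1 + 1) / qInt q (n + 1)
          = q + q⁻¹ - qInt q n / qInt q (n + 1) := by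
        have h := hrecq n
        have h2 : qInt q (n + 1 + 1) = (q + q⁻¹) * qInt q (n + 1) - qInt q n := by
          have e : n + 1 + 1 = n + 2 := rfl
          rw [e]; linarith
        rw [h2, sub_div, mul_div_assoc, div_self (ne_of_gt hQn1), mul_one]
      constructor
      · -- a m ≤ R (n+1)
        have hprev := (ih (m - 1)).1
        have hap : 0 < a (m - 1) := hpos (m - 1)
        have hR : 0 < qInt q (n + 1) / qInt q n := div_pos hQn1 hQn
        have h4 : qInt q n / qInt q (n + 1) ≤ 1 / a (m - 1) := by
          rw [div_le_div_iff₀ hQn1 hap]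
          rw [le_div_iff₀ hQn] at hprev
          nlinarith
        have := hrec m
        rw [hRform]
        linarith
      · -- 1/a m ≤ R (n+1)
        have hprev := (ih (m + 1)).2
        have hap : 0 < a (m + 1) := hpos (m + 1)
        have h4 : qInt q n / qInt q (n + 1) ≤ a (m + 1) := by
          rw [div_le_iff₀ hQn1]
          rw [div_le_div_iff₀ hap hQn] at hprev
          nlinarith
        have := hrec (m + 1)
        simp only [add_sub_cancel_right] at this
        rw [hRform]
        linarith
  refine ⟨fun m n hn => key n hn m, fun m => ?_⟩
  -- R n ≤ q⁻¹ + q^n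
  have hRle : ∀ n : ℕ, 1 ≤ n → qInt q (n + 1) / qInt q n ≤ q⁻¹ + q ^ n := by
    intro n hn
    have hQn : 0 < qInt q n := hqpos n hn
    rw [div_le_iff₀ hQn]
    have h1 := hgap n
    have h2 : 0 < q ^ n := pow_pos hq0 n
    have h3 := hqone n hn
    nlinarith
  have hb : ∀ x : ℝ, (∀ n : ℕ, 1 ≤ n → x ≤ q⁻¹ + q ^ n) → x ≤ q⁻¹ := by
    intro x hx
    by_contra h
    push_neg at h
    obtain ⟨n, hn⟩ := exists_pow_lt_of_lt_one (by linarith : (0:ℝ) < x - q⁻¹) hq1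
    have h2 : q ^ (n + 1) ≤ q ^ n := pow_le_pow_of_le_one hq0.le hq1.le (by omega)
    have := hx (n + 1) (by omega)
    linarith
  have ha1 : a m ≤ q⁻¹ := by
    apply hb
    intro n hn
    exact le_trans (key n hn m).1 (hRle n hn)
  have ha2 : 1 / a m ≤ q⁻¹ := by
    apply hb
    intro n hn
    exact le_trans (key n hn m).2 (hRle n hn)
  refine ⟨?_, ha1⟩
  have hap := hpos m
  rw [div_le_iff₀ hap] at ha2
  nlinarith
end

section
/- Let 0 < q < 1 and let a : ℤ → ℝ be a function with a_m > 0 for all m and a_m + 1/a_{m−1} = q + q⁻¹ for every m ∈ ℤ. Then exactly one of the following holds: (i) a_m = q for all m ∈ ℤ; (ii) a_m = q⁻¹ for all m ∈ ℤ; (iii) there exists a unique real number x such that a_m = (q^{x+m+1} + q^{−x−m−1})/(q^{x+m} + q^{−x−m}) for all m ∈ ℤ. -/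
open Real

private lemma hG_pos' {q t : ℝ} (hq0 : 0 < q) (ht : 0 < t) :
    0 < (q*t + (q*t)⁻¹)/(t + t⁻¹) := by positivity

private lemma hG_gt' {q t : ℝ} (hq0 : 0 < q) (hq1 : q < 1) (ht : 0 < t) :
    q < (q*t + (q*t)⁻¹)/(t + t⁻¹) := by
  have hqi : q < q⁻¹ := by rw [inv_eq_one_div, lt_div_iff₀ hq0]; nlinarith
  rw [lt_div_iff₀ (by positivity)]
  rw [mul_inv]
  have := mul_lt_mul_of_pos_right hqi (inv_pos.mpr ht)
  nlinarith

private lemma hG_lt' {q t : ℝ} (hq0 : 0 < q) (hq1 : q < 1) (ht : 0 < t) :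
    (q*t + (q*t)⁻¹)/(t + t⁻¹) < q⁻¹ := by
  have hqi : q < q⁻¹ := by rw [inv_eq_one_div, lt_div_iff₀ hq0]; nlinarith
  rw [div_lt_iff₀ (by positivity)]
  rw [mul_inv]
  have := mul_lt_mul_of_pos_right hqi ht
  nlinarith

private lemma hG_rec' {q t : ℝ} (hq0 : 0 < q) (ht : 0 < t) :
    (q*(q*t) + (q*(q*t))⁻¹)/(q*t + (q*t)⁻¹) + ((q*t + (q*t)⁻¹)/(t + t⁻¹))⁻¹ = q + q⁻¹ := by
  have h1 : q*t + (q*t)⁻¹ ≠ 0 := by positivity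
  have h2 : t + t⁻¹ ≠ 0 := by positivity
  have h3 : q ≠ 0 := hq0.ne'
  have h4 : t ≠ 0 := ht.ne'
  field_simp
  ring

private lemma hG_inj' {q t t' : ℝ} (hq0 : 0 < q) (hq1 : q < 1) (ht : 0 < t) (ht' : 0 < t')
    (h : (q*t + (q*t)⁻¹)/(t + t⁻¹) = (q*t' + (q*t')⁻¹)/(t' + t'⁻¹)) : t = t' := by
  have h3 : q ≠ 0 := hq0.ne'
  have h4 : t ≠ 0 := ht.ne'
  have h5 : t' ≠ 0 := ht'.ne'
  have h2 : t + t⁻¹ ≠ 0 := by positivity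
  have h2' : t' + t'⁻¹ ≠ 0 := by positivity
  field_simp at h
  have key : (t^2 - t'^2) * ((q^2 - 1) * (q*t*t')) = 0 := by linear_combination (q*t*t') * h
  have hx1 : (q:ℝ)^2 - 1 ≠ 0 := by nlinarith
  have hx2 : q*t*t' ≠ 0 := by positivity
  have h6 : t^2 - t'^2 = 0 := by
    rcases mul_eq_zero.mp key with h' | h'
    · exact h'
    · exact absurd h' (mul_ne_zero hx1 hx2)
  nlinarith [h6, sq_nonneg (t - t')]

private lemma gap_step' {q d : ℝ} (hq0 : 0 < q) (hd0 : 0 < d) (hdq : d < q) :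
    (q - d) * (q*q)⁻¹ ≤ d⁻¹ - q⁻¹ := by
  have h : d⁻¹ - q⁻¹ = (q - d) * (q*d)⁻¹ := by
    rw [mul_inv]
    field_simp
  rw [h]
  have hle : (q*q)⁻¹ ≤ (q*d)⁻¹ := by
    apply inv_anti₀ (mul_pos hq0 hd0)
    nlinarith
  exact mul_le_mul_of_nonneg_left hle (by linarith)

private lemma form_eq' {q : ℝ} (hq0 : 0 < q) (x : ℝ) (m : ℤ) :
    (q ^ (x + m + 1) + q ^ (-x - m - 1)) / (q ^ (x + (m : ℝ)) + q ^ (-x - m))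
      = (q * q ^ (x + (m:ℝ)) + (q * q ^ (x + (m:ℝ)))⁻¹) /
        (q ^ (x + (m:ℝ)) + (q ^ (x + (m:ℝ)))⁻¹) := by
  have h1 : q ^ (x + (m:ℝ) + 1) = q * q ^ (x + (m:ℝ)) := by
    rw [Real.rpow_add hq0, Real.rpow_one]; ring
  have h2 : q ^ (-x - (m:ℝ)) = (q ^ (x + (m:ℝ)))⁻¹ := by
    rw [show -x - (m:ℝ) = -(x + (m:ℝ)) by ring, Real.rpow_neg hq0.le]
  have h3 : q ^ (-x - (m:ℝ) - 1) = (q * q ^ (x + (m:ℝ)))⁻¹ := by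
    rw [show -x - (m:ℝ) - 1 = -(x + (m:ℝ) + 1) by ring, Real.rpow_neg hq0.le, h1]
  rw [h1, h2, h3]

theorem trichotomy_of_weights_on_Ainfinf (q : ℝ) (hq0 : 0 < q) (hq1 : q < 1)
    (a : ℤ → ℝ) (hpos : ∀ m, 0 < a m)
    (hrec : ∀ m : ℤ, a m + 1 / a (m - 1) = q + q⁻¹) :
    ((∀ m : ℤ, a m = q) ∧ ¬(∀ m : ℤ, a m = q⁻¹) ∧
      ¬(∃! x : ℝ, ∀ m : ℤ,
        a m = (q ^ (x + m + 1) + q ^ (-x - m - 1)) / (q ^ (x + (m : ℝ)) + q ^ (-x - m)))) ∨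
    (¬(∀ m : ℤ, a m = q) ∧ (∀ m : ℤ, a m = q⁻¹) ∧
      ¬(∃! x : ℝ, ∀ m : ℤ,
        a m = (q ^ (x + m + 1) + q ^ (-x - m - 1)) / (q ^ (x + (m : ℝ)) + q ^ (-x - m)))) ∨
    (¬(∀ m : ℤ, a m = q) ∧ ¬(∀ m : ℤ, a m = q⁻¹) ∧
      (∃! x : ℝ, ∀ m : ℤ,
        a m = (q ^ (x + m + 1) + q ^ (-x - m - 1)) / (q ^ (x + (m : ℝ)) + q ^ (-x - m)))) := by
  have hq : q ≠ 0 := hq0.ne'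
  have hqi : q < q⁻¹ := by rw [inv_eq_one_div, lt_div_iff₀ hq0]; nlinarith
  -- basic bounds and recurrences
  have hub : ∀ m : ℤ, a m < q + q⁻¹ := by
    intro m
    have h := hrec m
    have h2 := hpos (m-1)
    have h3 : 0 < 1 / a (m-1) := by positivity
    linarith
  have hfwd : ∀ m : ℤ, a (m+1) = q + q⁻¹ - (a m)⁻¹ := by
    intro m
    have h := hrec (m+1)
    rw [add_sub_cancel_right, one_div] at h
    linarith
  have hbwd : ∀ m : ℤ, a (m-1) = (q + q⁻¹ - a m)⁻¹ := by
    intro m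
    have h := hrec m
    rw [one_div] at h
    have h2 : (a (m-1))⁻¹ = q + q⁻¹ - a m := by linarith
    rw [← h2, inv_inv]
  -- lower bound: q ≤ a m
  have hlow : ∀ m : ℤ, q ≤ a m := by
    by_contra hcon
    push_neg at hcon
    obtain ⟨m₀, hm₀⟩ := hcon
    set ε := q - a m₀ with hε_def
    have hε : 0 < ε := by simp [hε_def]; linarith
    have key : ∀ k : ℕ, ε * ((q*q)⁻¹)^k ≤ q - a (m₀ + k) := by
      intro k
      induction k with
      | zero => simp [hε_def]
      | succ k ih =>
        have hc : (0:ℝ) < ((q*q)⁻¹)^k := by positivity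
        have hb0 : 0 < a (m₀ + k) := hpos _
        have hbq : a (m₀ + k) < q := by nlinarith
        have hcast : (m₀ + ((k:ℤ)+1)) = (m₀ + k) + 1 := by ring
        have hnext : a (m₀ + ((k:ℕ)+1 : ℕ)) = q + q⁻¹ - (a (m₀ + k))⁻¹ := by
          push_cast
          rw [hcast]
          exact hfwd _
        rw [hnext]
        have hgap := gap_step' hq0 hb0 hbq
        have h1 : ε * ((q*q)⁻¹)^k * (q*q)⁻¹ ≤ (q - a (m₀+k)) * (q*q)⁻¹ :=
          mul_le_mul_of_nonneg_right ih (by positivity)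
        calc ε * ((q*q)⁻¹)^(k+1) = ε * ((q*q)⁻¹)^k * (q*q)⁻¹ := by ring
          _ ≤ (q - a (m₀+k)) * (q*q)⁻¹ := h1
          _ ≤ (a (m₀+k))⁻¹ - q⁻¹ := hgap
          _ = q - (q + q⁻¹ - (a (m₀+k))⁻¹) := by ring
    have hgt1 : 1 < (q*q)⁻¹ := by
      rw [lt_inv_comm₀ one_pos (by positivity)]
      nlinarith
    obtain ⟨k, hk⟩ := pow_unbounded_of_one_lt (q / ε) hgt1
    have h1 := key k
    have h2 : 0 < a (m₀ + k) := hpos _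
    have h3 : q / ε * ε < ((q*q)⁻¹)^k * ε := mul_lt_mul_of_pos_right hk hε
    rw [div_mul_cancel₀ _ hε.ne'] at h3
    nlinarith
  -- upper bound: a m ≤ q⁻¹
  have hhigh : ∀ m : ℤ, a m ≤ q⁻¹ := by
    by_contra hcon
    push_neg at hcon
    obtain ⟨m₀, hm₀⟩ := hcon
    set δ := a m₀ - q⁻¹ with hδ_def
    have hδ : 0 < δ := by simp [hδ_def]; linarith
    have key : ∀ k : ℕ, δ * ((q*q)⁻¹)^k ≤ a (m₀ - k) - q⁻¹ := by
      intro k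
      induction k with
      | zero => simp [hδ_def]
      | succ k ih =>
        have hc : (0:ℝ) < ((q*q)⁻¹)^k := by positivity
        set b := a (m₀ - k) with hb_def
        have hbq : q⁻¹ < b := by nlinarith
        have hbu : b < q + q⁻¹ := hub _
        set d := q + q⁻¹ - b with hd_def
        have hd0 : 0 < d := by simp [hd_def]; linarith
        have hdq : d < q := by simp [hd_def]; linarith
        have hcast : (m₀ - ((k:ℤ)+1)) = (m₀ - k) - 1 := by ring
        have hnext : a (m₀ - ((k:ℕ)+1 : ℕ)) = d⁻¹ := by
          push_cast
          rw [hcast, hbwd (m₀ - k)]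
        rw [hnext]
        have hgap := gap_step' hq0 hd0 hdq
        have hqd : q - d = b - q⁻¹ := by simp [hd_def]; ring
        have h1 : δ * ((q*q)⁻¹)^k * (q*q)⁻¹ ≤ (b - q⁻¹) * (q*q)⁻¹ :=
          mul_le_mul_of_nonneg_right ih (by positivity)
        calc δ * ((q*q)⁻¹)^(k+1) = δ * ((q*q)⁻¹)^k * (q*q)⁻¹ := by ring
          _ ≤ (b - q⁻¹) * (q*q)⁻¹ := h1
          _ = (q - d) * (q*q)⁻¹ := by rw [hqd]
          _ ≤ d⁻¹ - q⁻¹ := hgap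
    have hgt1 : 1 < (q*q)⁻¹ := by
      rw [lt_inv_comm₀ one_pos (by positivity)]
      nlinarith
    obtain ⟨k, hk⟩ := pow_unbounded_of_one_lt (q / δ) hgt1
    have h1 := key k
    have h2 : a (m₀ - k) < q + q⁻¹ := hub _
    have h3 : q / δ * δ < ((q*q)⁻¹)^k * δ := mul_lt_mul_of_pos_right hk hδ
    rw [div_mul_cancel₀ _ hδ.ne'] at h3
    nlinarith
  -- no x can represent constant solutions: formula is strictly between q and q⁻¹
  have hform_gt : ∀ x : ℝ, ∀ m : ℤ,
      q < (q ^ (x + m + 1) + q ^ (-x - m - 1)) / (q ^ (x + (m : ℝ)) + q ^ (-x - m)) := by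
    intro x m
    rw [form_eq' hq0 x m]
    exact hG_gt' hq0 hq1 (Real.rpow_pos_of_pos hq0 _)
  have hform_lt : ∀ x : ℝ, ∀ m : ℤ,
      (q ^ (x + m + 1) + q ^ (-x - m - 1)) / (q ^ (x + (m : ℝ)) + q ^ (-x - m)) < q⁻¹ := by
    intro x m
    rw [form_eq' hq0 x m]
    exact hG_lt' hq0 hq1 (Real.rpow_pos_of_pos hq0 _)
  rcases eq_or_lt_of_le (hlow 0) with h0q | h0q
  · -- a 0 = q : constant q
    left
    have hall : ∀ m : ℤ, a m = q := by
      intro m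
      induction m using Int.induction_on with
      | zero => exact h0q.symm
      | succ n ih => rw [hfwd, ih]; field_simp; ring
      | pred n ih => rw [show -(n:ℤ) - 1 = (-(n:ℤ)) - 1 by ring, hbwd, ih]; field_simp; ring
    refine ⟨hall, ?_, ?_⟩
    · intro h
      have := (hall 0).symm.trans (h 0)
      linarith
    · rintro ⟨x, hx, -⟩
      have h1 := hx 0
      have h2 := hform_gt x 0
      rw [← h1, hall 0] at h2
      exact lt_irrefl _ h2
  rcases eq_or_lt_of_le (hhigh 0) with h0q' | h0q'
  · -- a 0 = q⁻¹ : constant q⁻¹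
    right; left
    have hall : ∀ m : ℤ, a m = q⁻¹ := by
      intro m
      induction m using Int.induction_on with
      | zero => exact h0q'
      | succ n ih => rw [hfwd, ih]; field_simp; ring
      | pred n ih => rw [show -(n:ℤ) - 1 = (-(n:ℤ)) - 1 by ring, hbwd, ih]; field_simp; ring
    refine ⟨?_, hall, ?_⟩
    · intro h
      have := (hall 0).symm.trans (h 0)
      linarith
    · rintro ⟨x, hx, -⟩
      have h1 := hx 0
      have h2 := hform_lt x 0
      rw [← h1, hall 0] at h2
      exact lt_irrefl _ h2
  · -- q < a 0 < q⁻¹ : unique x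
    right; right
    refine ⟨fun h => by have := h 0; linarith, fun h => by have := h 0; linarith, ?_⟩
    -- construct x
    set s := (q⁻¹ - a 0)/(a 0 - q) with hs_def
    have hs : 0 < s := div_pos (by linarith) (by linarith)
    set r := Real.sqrt s with hr_def
    have hrpos : 0 < r := Real.sqrt_pos.mpr hs
    set x := Real.logb q r with hx_def
    have hqx : q ^ x = r := Real.rpow_logb hq0 hq1.ne hrpos
    -- value at 0 matches
    have hGr : (q*r + (q*r)⁻¹)/(r + r⁻¹) = a 0 := by
      have hr2 : r * r = s := Real.mul_self_sqrt hs.le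
      have step1 : (q*r + (q*r)⁻¹)/(r + r⁻¹) = (q*(r*r) + q⁻¹)/(r*r + 1) := by
        rw [mul_inv]
        have h1 : r + r⁻¹ ≠ 0 := by positivity
        have h2 : r*r + 1 ≠ 0 := by positivity
        field_simp
      rw [step1, hr2]
      have hne : a 0 - q ≠ 0 := by linarith
      rw [div_eq_iff (ne_of_gt (by linarith : (0:ℝ) < s + 1)), hs_def]
      field_simp
      ring
    -- abbreviate F
    set F : ℤ → ℝ := fun m =>
      (q * q ^ (x + (m:ℝ)) + (q * q ^ (x + (m:ℝ)))⁻¹) /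
        (q ^ (x + (m:ℝ)) + (q ^ (x + (m:ℝ)))⁻¹) with hF_def
    have hFpos : ∀ m : ℤ, 0 < F m := fun m =>
      hG_pos' hq0 (Real.rpow_pos_of_pos hq0 _)
    have hFfwd : ∀ m : ℤ, F (m+1) = q + q⁻¹ - (F m)⁻¹ := by
      intro m
      have ht : (0:ℝ) < q ^ (x + (m:ℝ)) := Real.rpow_pos_of_pos hq0 _
      have hcast : q ^ (x + ((m+1 : ℤ):ℝ)) = q * q ^ (x + (m:ℝ)) := by
        push_cast
        rw [show x + ((m:ℝ) + 1) = (x + (m:ℝ)) + 1 by ring, Real.rpow_add hq0,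
          Real.rpow_one]
        ring
      have := hG_rec' (t := q ^ (x + (m:ℝ))) hq0 ht
      simp only [hF_def, hcast]
      linarith
    have hFbwd : ∀ m : ℤ, F (m-1) = (q + q⁻¹ - F m)⁻¹ := by
      intro m
      have h := hFfwd (m-1)
      rw [sub_add_cancel] at h
      have hne : F (m-1) ≠ 0 := (hFpos _).ne'
      have : (F (m-1))⁻¹ = q + q⁻¹ - F m := by linarith
      rw [← this, inv_inv]
    have hF0 : F 0 = a 0 := by
      simp only [hF_def]
      rw [show x + (((0:ℤ)):ℝ) = x by push_cast; ring, hqx]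
      exact hGr
    have hall : ∀ m : ℤ, a m = F m := by
      intro m
      induction m using Int.induction_on with
      | zero => exact hF0.symm
      | succ n ih => rw [hfwd, hFfwd, ih]
      | pred n ih =>
        rw [show -(n:ℤ) - 1 = (-(n:ℤ)) - 1 by ring, hbwd, hFbwd, ih]
    refine ⟨x, ?_, ?_⟩
    · intro m
      rw [form_eq' hq0 x m]
      exact hall m
    · intro y hy
      have h1 := hy 0
      rw [form_eq' hq0 y 0] at h1
      have h2 := hall 0
      simp only [hF_def] at h2
      have h3 : (q * q ^ (y + ((0:ℤ):ℝ)) + (q * q ^ (y + ((0:ℤ):ℝ)))⁻¹) /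
          (q ^ (y + ((0:ℤ):ℝ)) + (q ^ (y + ((0:ℤ):ℝ)))⁻¹)
          = (q * q ^ (x + ((0:ℤ):ℝ)) + (q * q ^ (x + ((0:ℤ):ℝ)))⁻¹) /
          (q ^ (x + ((0:ℤ):ℝ)) + (q ^ (x + ((0:ℤ):ℝ)))⁻¹) := by
        rw [← h1, h2]
      have heq : q ^ (y + ((0:ℤ):ℝ)) = q ^ (x + ((0:ℤ):ℝ)) :=
        hG_inj' hq0 hq1 (Real.rpow_pos_of_pos hq0 _) (Real.rpow_pos_of_pos hq0 _) h3
      have hlog : (y + ((0:ℤ):ℝ)) * Real.log q = (x + ((0:ℤ):ℝ)) * Real.log q := by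
        rw [← Real.log_rpow hq0, ← Real.log_rpow hq0, heq]
      have hlq : Real.log q ≠ 0 := (Real.log_neg hq0 hq1).ne
      have := mul_right_cancel₀ hlq hlog
      simpa using this
end

section
/- Let 0 < q < 1 and define f : ℝ → ℝ by f(x) = (q^{x+1} + q^{−x−1})/(q^x + q^{−x}). Then f is strictly increasing and maps ℝ bijectively onto the open interval (q, q⁻¹). -/
theorem strictMono_range_weight_param (q : ℝ) (hq0 : 0 < q) (hq1 : q < 1) :
    StrictMono (fun x : ℝ => (q ^ (x + 1) + q ^ (-x - 1)) / (q ^ x + q ^ (-x))) ∧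
    Set.range (fun x : ℝ => (q ^ (x + 1) + q ^ (-x - 1)) / (q ^ x + q ^ (-x)))
      = Set.Ioo q q⁻¹ := by
  have hlogq : Real.log q < 0 := Real.log_neg hq0 hq1
  have hinv : 1 < q⁻¹ := (one_lt_inv₀ hq0).2 hq1
  have hd : 0 < q⁻¹ - q := by linarith
  have key : ∀ x : ℝ, (q ^ (x + 1) + q ^ (-x - 1)) / (q ^ x + q ^ (-x))
      = q + (q⁻¹ - q) / (q ^ (2 * x) + 1) := by
    intro x
    have ha : (0 : ℝ) < q ^ x := Real.rpow_pos_of_pos hq0 x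
    have h1 : q ^ (x + 1) = q ^ x * q := by
      rw [Real.rpow_add hq0, Real.rpow_one]
    have h2 : q ^ (-x - 1) = (q ^ x)⁻¹ * q⁻¹ := by
      rw [show -x - 1 = -x + (-1) by ring, Real.rpow_add hq0, Real.rpow_neg hq0.le,
        Real.rpow_neg_one]
    have h3 : q ^ (-x) = (q ^ x)⁻¹ := Real.rpow_neg hq0.le x
    have h4 : q ^ (2 * x) = q ^ x * q ^ x := by
      rw [show (2 : ℝ) * x = x + x by ring, Real.rpow_add hq0]
    rw [h1, h2, h3, h4]
    have h5 : (0 : ℝ) < q ^ x * q ^ x + 1 := by positivity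
    field_simp
    ring
  have hmono : StrictMono
      (fun x : ℝ => (q ^ (x + 1) + q ^ (-x - 1)) / (q ^ x + q ^ (-x))) := by
    intro x y hxy
    simp only [key]
    have ht : q ^ (2 * y) < q ^ (2 * x) :=
      Real.rpow_lt_rpow_of_exponent_gt hq0 hq1 (by linarith)
    have hpy : (0 : ℝ) < q ^ (2 * y) + 1 := by positivity
    have h := div_lt_div_of_pos_left hd hpy
      (show q ^ (2 * y) + 1 < q ^ (2 * x) + 1 by linarith)
    linarith
  refine ⟨hmono, ?_⟩
  ext y
  simp only [Set.mem_range, Set.mem_Ioo]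
  constructor
  · rintro ⟨x, rfl⟩
    simp only [key]
    have ht : (0 : ℝ) < q ^ (2 * x) := Real.rpow_pos_of_pos hq0 _
    have hden : (0 : ℝ) < q ^ (2 * x) + 1 := by linarith
    have hpos : 0 < (q⁻¹ - q) / (q ^ (2 * x) + 1) := div_pos hd hden
    constructor
    · linarith
    · have h1 : (q⁻¹ - q) / (q ^ (2 * x) + 1) < q⁻¹ - q := by
        rw [div_lt_iff₀ hden]
        nlinarith
      linarith
  · rintro ⟨hy1, hy2⟩
    have hyq : 0 < y - q := by linarith
    have ht : 0 < (q⁻¹ - y) / (y - q) := div_pos (by linarith) hyq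
    set t : ℝ := (q⁻¹ - y) / (y - q) with htdef
    refine ⟨Real.log t / (2 * Real.log q), ?_⟩
    simp only [key]
    have hqx : q ^ (2 * (Real.log t / (2 * Real.log q))) = t := by
      rw [Real.rpow_def_of_pos hq0]
      rw [show Real.log q * (2 * (Real.log t / (2 * Real.log q))) = Real.log t by
        field_simp [hlogq.ne]]
      exact Real.exp_log ht
    rw [hqx]
    have hsum : t + 1 = (q⁻¹ - q) / (y - q) := by
      rw [htdef]
      field_simp
      ring
    rw [hsum, div_div_cancel₀ hd.ne']
    ring
end

section
/- Let 0 < t ≤ 1, let N be a positive integer, and let a : ℤ/Nℤ → ℝ be a function with a_i > 0 for all i and a_i + 1/a_{i−1} = t + t⁻¹ for every i ∈ ℤ/Nℤ. Then either a_i = t for all i, or a_i = t⁻¹ for all i. -/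
theorem cyclic_weights_constant (t : ℝ) (ht0 : 0 < t) (ht1 : t ≤ 1)
    (N : ℕ) (hN : 0 < N) (a : ZMod N → ℝ) (hpos : ∀ i, 0 < a i)
    (hrec : ∀ i : ZMod N, a i + 1 / a (i - 1) = t + t⁻¹) :
    (∀ i, a i = t) ∨ (∀ i, a i = t⁻¹) := by
  haveI : NeZero N := ⟨hN.ne'⟩
  obtain ⟨m, hm⟩ := Finite.exists_min a
  have h1 : t + t⁻¹ ≤ a m + 1 / a m := by
    have h := hrec m
    have hle : 1 / a (m - 1) ≤ 1 / a m :=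
      one_div_le_one_div_of_le (hpos m) (hm (m - 1))
    linarith
  have h2 : a m + 1 / a m ≤ t + t⁻¹ := by
    have h : a (m + 1) + 1 / a m = t + t⁻¹ := by simpa using hrec (m + 1)
    have := hm (m + 1)
    linarith
  have heq : a m + 1 / a m = t + t⁻¹ := le_antisymm h2 h1
  have hcases : a m = t ∨ a m = t⁻¹ := by
    have h0 := (hpos m).ne'
    have ht := ht0.ne'
    have h : (a m - t) * (a m - t⁻¹) = 0 := by
      field_simp at heq ⊢
      nlinarith [heq]
    rcases mul_eq_zero.1 h with h | h
    · left; linarith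
    · right
      have : a m = t⁻¹ := by linarith
      exact this
  -- propagation
  have step : ∀ (c : ℝ), t + t⁻¹ - 1 / c = c → ∀ i, a i = c → a (i + 1) = c := by
    intro c hc i hi
    have h := hrec (i + 1)
    simp only [add_sub_cancel_right] at h
    rw [hi] at h
    linarith
  have prop : ∀ (c : ℝ), t + t⁻¹ - 1 / c = c → a m = c → ∀ j, a j = c := by
    intro c hc hmc j
    have key : ∀ k : ℕ, a (m + (k : ZMod N)) = c := by
      intro k
      induction k with
      | zero => simpa using hmc
      | succ n ih =>
        have := step c hc (m + (n : ZMod N)) ih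
        push_cast
        rw [← add_assoc]
        exact this
    have := key (j - m).val
    rwa [ZMod.natCast_val, ZMod.cast_id, add_sub_cancel] at this
  rcases hcases with h | h
  · left
    refine prop t ?_ h
    rw [one_div]
    ring
  · right
    refine prop t⁻¹ ?_ h
    rw [one_div, inv_inv]
    ring
end

section
/- Let q be a real number with 0 < |q| ≤ 1, and let Γ be the oriented graph with two distinct vertices v and w and exactly two edges: one edge from v to w and one edge from w to v. Then Γ admits no fair and balanced (q + q⁻¹)-cost. -/
theorem no_fairBalancedCost_on_two_cycle (q : ℝ) (hq0 : 0 < |q|) (hq1 : |q| ≤ 1) :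
    ¬ ∃ W : Fin 2 → ℝ,
      FairBalancedCost (fun e : Fin 2 => e) (fun e : Fin 2 => e + 1) (q + q⁻¹) W := by
  rintro ⟨W, hpos, ⟨σ, hinv, hs, ht, hbal⟩, hsum, -⟩
  have hq : q ≠ 0 := by
    intro h; rw [h, abs_zero] at hq0; exact lt_irrefl 0 hq0
  -- for each vertex v, W v = |q + q⁻¹|
  have hW : ∀ v : Fin 2, W v = |q + q⁻¹| := by
    intro v
    have h1 : HasSum (fun e : {e : Fin 2 // e = v} => W e.1) (W v) := by
      have := hasSum_fintype (fun e : {e : Fin 2 // e = v} => W e.1)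
      convert this using 1
      rw [Finset.sum_eq_single (⟨v, rfl⟩ : {e : Fin 2 // e = v})]
      · intro b _ hb
        exact absurd (Subtype.ext b.2) hb
      · intro h; exact absurd (Finset.mem_univ _) h
    exact h1.unique (hsum v)
  -- σ 0 = 1
  have hσ0 : σ 0 = 1 := hs 0
  have hb := hbal 0
  rw [hσ0, hW 0, hW 1] at hb
  -- |q + q⁻¹| ≥ 2
  have h2 : (2 : ℝ) ≤ |q + q⁻¹| := by
    have habs : |q + q⁻¹| = |q| + |q|⁻¹ := by
      rw [← abs_inv]
      rcases lt_or_gt_of_ne hq with h | h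
      · have h1 : q⁻¹ < 0 := by
          rw [inv_lt_zero]; exact h
        rw [abs_of_neg h, abs_of_neg h1, abs_of_neg (by linarith)]; ring
      · have h1 : 0 < q⁻¹ := inv_pos.2 h
        rw [abs_of_pos h, abs_of_pos h1, abs_of_pos (by linarith)]
    rw [habs]
    have := inv_pos.2 hq0
    nlinarith [sq_nonneg (|q| - 1), mul_inv_cancel₀ (ne_of_gt hq0)]
  nlinarith
end

section
/- Let 0 < t ≤ 1 and let T be a real number with |T| = t + t⁻¹. Let Γ be the oriented graph D_∞^* with vertex set {∗, ∗̃} ∪ {1, 2, 3, …} and the following edges (and no others): one edge in each direction between ∗ and 1, one edge in each direction between ∗̃ and 1, and one edge in each direction between n and n+1 for every integer n ≥ 1. Then Γ carries exactly one fair and balanced T-cost W, namely: W(∗ → 1) = W(∗̃ → 1) = t + t⁻¹, W(1 → ∗) = W(1 → ∗̃) = (t + t⁻¹)⁻¹, and for every n ≥ 1, W(n → n+1) = (t^{n+1} + t^{−n−1})/(t^n + t^{−n}) and W(n+1 → n) = (t^n + t^{−n})/(t^{n+1} + t^{−n−1}). -/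
/-- Vertices of the graph `D_∞^*`: `Sum.inl b` are the two endpoints `∗`, `∗̃`,
and `Sum.inr n` is the vertex `n + 1`. -/
abbrev DInfStarV : Type := Bool ⊕ ℕ

/-- Edges of `D_∞^*`: `Sum.inl (b, false)` goes from the endpoint `b` to the vertex `1`,
`Sum.inl (b, true)` goes from the vertex `1` to the endpoint `b`, `Sum.inr (n, false)`
goes from the vertex `n + 1` to the vertex `n + 2`, and `Sum.inr (n, true)` in the
opposite direction. -/
abbrev DInfStarE : Type := (Bool × Bool) ⊕ (ℕ × Bool)

def dInfS : DInfStarE → DInfStarV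
  | .inl (b, false) => .inl b
  | .inl (_, true) => .inr 0
  | .inr (n, false) => .inr n
  | .inr (n, true) => .inr (n + 1)

def dInfT : DInfStarE → DInfStarV
  | .inl (_, false) => .inr 0
  | .inl (b, true) => .inl b
  | .inr (n, false) => .inr (n + 1)
  | .inr (n, true) => .inr n


section DInfAux

lemma dInf_key {t : ℝ} (ht : t ≠ 0) (k : ℕ) :
    (t + t⁻¹) * (t ^ (k + 1) + t⁻¹ ^ (k + 1)) =
      (t ^ (k + 2) + t⁻¹ ^ (k + 2)) + (t ^ k + t⁻¹ ^ k) := by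
  have h : t * t⁻¹ = 1 := mul_inv_cancel₀ ht
  linear_combination ((t⁻¹) ^ k + t ^ k) * h

lemma dInf_hasSum_src_iff (v : DInfStarV) (S : Finset DInfStarE)
    (h : ∀ e, dInfS e = v ↔ e ∈ S) (f : DInfStarE → ℝ) (a : ℝ) :
    HasSum (fun e : {e : DInfStarE // dInfS e = v} => f e.1) a ↔ ∑ e ∈ S, f e = a := by
  set g : DInfStarE → ℝ := fun e => if dInfS e = v then f e else 0 with hg
  have hsupp : Function.support g ⊆ {e | dInfS e = v} := by
    intro e he
    by_contra h'
    simp only [Set.mem_setOf_eq] at h'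
    exact he (by simp [hg, if_neg h'])
  have h1 : HasSum (fun e : {e : DInfStarE // dInfS e = v} => f e.1) a ↔ HasSum g a := by
    constructor
    · intro hs
      exact (hasSum_subtype_iff_of_support_subset hsupp).mp
        (hs.congr_fun (fun e => by simp [hg, Function.comp, if_pos e.2]))
    · intro hs
      exact ((hasSum_subtype_iff_of_support_subset hsupp).mpr hs).congr_fun
        (fun e => (if_pos e.2).symm)
  have h2 : HasSum g (∑ e ∈ S, g e) :=
    hasSum_sum_of_ne_finset_zero (by
      intro e heS
      simp only [hg, ite_eq_right_iff]
      intro hv; exact absurd ((h e).1 hv) heS)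
  have h3 : ∑ e ∈ S, g e = ∑ e ∈ S, f e :=
    Finset.sum_congr rfl (fun e he => if_pos ((h e).2 he))
  constructor
  · intro hs
    rw [← h3]
    exact (h2.unique (h1.mp hs))
  · intro hs
    exact h1.mpr (by rw [← hs, ← h3]; exact h2)

lemma dInf_srcS_inl (b : Bool) :
    ∀ e, dInfS e = Sum.inl b ↔ e ∈ ({Sum.inl (b, false)} : Finset DInfStarE) := by
  rintro (⟨b', _|_⟩ | ⟨m, _|_⟩) <;> simp [dInfS]

lemma dInf_srcS_zero : ∀ e, dInfS e = Sum.inr 0 ↔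
    e ∈ ({.inl (true, true), .inl (false, true), .inr (0, false)} : Finset DInfStarE) := by
  rintro (⟨b', _|_⟩ | ⟨m, _|_⟩) <;> simp [dInfS]

lemma dInf_srcS_succ (n : ℕ) : ∀ e, dInfS e = Sum.inr (n + 1) ↔
    e ∈ ({.inr (n + 1, false), .inr (n, true)} : Finset DInfStarE) := by
  rintro (⟨b', _|_⟩ | ⟨m, _|_⟩) <;> simp [dInfS] <;> omega

lemma dInf_noLoop (e : DInfStarE) : dInfS e ≠ dInfT e := by
  rcases e with ⟨b, _|_⟩ | ⟨m, _|_⟩ <;> simp [dInfS, dInfT]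

lemma dInf_edgeTo_inl (b : Bool) (e : DInfStarE) (h1 : dInfS e = .inr 0)
    (h2 : dInfT e = .inl b) : e = .inl (b, true) := by
  rcases e with ⟨b', _|_⟩ | ⟨m, _|_⟩ <;> simp_all [dInfS, dInfT]

lemma dInf_edgeBack (n : ℕ) (e : DInfStarE) (h1 : dInfS e = .inr (n + 1))
    (h2 : dInfT e = .inr n) : e = .inr (n, true) := by
  rcases e with ⟨b', _|_⟩ | ⟨m, _|_⟩ <;> simp_all [dInfS, dInfT] <;> omega

end DInfAux

/-- The canonical cost on `D_∞^*`:  `W(∗ → 1) = t + t⁻¹`, `W(1 → ∗) = (t + t⁻¹)⁻¹`,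
`W(n → n+1) = (t^{n+1} + t^{-n-1})/(t^n + t^{-n})` and its reciprocal in the other
direction (vertex `n` being `Sum.inr (n - 1)`). -/
noncomputable def dInfW (t : ℝ) : DInfStarE → ℝ
  | .inl (_, false) => t + t⁻¹
  | .inl (_, true) => (t + t⁻¹)⁻¹
  | .inr (n, false) => (t ^ (n + 2) + t⁻¹ ^ (n + 2)) / (t ^ (n + 1) + t⁻¹ ^ (n + 1))
  | .inr (n, true) => (t ^ (n + 1) + t⁻¹ ^ (n + 1)) / (t ^ (n + 2) + t⁻¹ ^ (n + 2))

theorem dInfStar_unique_fairBalancedCost (t : ℝ) (ht0 : 0 < t) (ht1 : t ≤ 1)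
    (T : ℝ) (hT : |T| = t + t⁻¹) :
    FairBalancedCost dInfS dInfT T (dInfW t) ∧
    ∀ W : DInfStarE → ℝ, FairBalancedCost dInfS dInfT T W → W = dInfW t := by
  have ht : t ≠ 0 := ne_of_gt ht0
  have htt : t * t⁻¹ = 1 := mul_inv_cancel₀ ht
  have hc1 : (0:ℝ) < t + t⁻¹ := by positivity
  have hc1' : t + t⁻¹ ≠ 0 := ne_of_gt hc1
  have hck : ∀ k : ℕ, (0:ℝ) < t ^ k + t⁻¹ ^ k := fun k => by positivity
  have hck' : ∀ k : ℕ, t ^ k + t⁻¹ ^ k ≠ (0:ℝ) := fun k => ne_of_gt (hck k)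
  constructor
  · refine ⟨?_, ?_, ?_, ?_⟩
    · rintro (⟨b, _|_⟩ | ⟨n, _|_⟩) <;> simp only [dInfW] <;> positivity
    · refine ⟨Sum.map (fun p => (p.1, !p.2)) (fun p => (p.1, !p.2)), ?_, ?_, ?_, ?_⟩
      · rintro (⟨b, x⟩ | ⟨n, x⟩) <;> simp
      · rintro (⟨b, _|_⟩ | ⟨n, _|_⟩) <;> rfl
      · rintro (⟨b, _|_⟩ | ⟨n, _|_⟩) <;> rfl
      · rintro (⟨b, _|_⟩ | ⟨n, _|_⟩)
        · exact mul_inv_cancel₀ hc1'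
        · exact inv_mul_cancel₀ hc1'
        · show (t ^ (n + 2) + t⁻¹ ^ (n + 2)) / (t ^ (n + 1) + t⁻¹ ^ (n + 1)) *
            ((t ^ (n + 1) + t⁻¹ ^ (n + 1)) / (t ^ (n + 2) + t⁻¹ ^ (n + 2))) = 1
          rw [div_mul_div_comm, mul_comm, div_self (by positivity)]
        · show (t ^ (n + 1) + t⁻¹ ^ (n + 1)) / (t ^ (n + 2) + t⁻¹ ^ (n + 2)) *
            ((t ^ (n + 2) + t⁻¹ ^ (n + 2)) / (t ^ (n + 1) + t⁻¹ ^ (n + 1))) = 1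
          rw [div_mul_div_comm, mul_comm, div_self (by positivity)]
    · rintro (b | (_ | n))
      · rw [dInf_hasSum_src_iff _ _ (dInf_srcS_inl b), Finset.sum_singleton, hT]
        rfl
      · rw [dInf_hasSum_src_iff _ _ dInf_srcS_zero,
          Finset.sum_insert (by decide), Finset.sum_insert (by decide),
          Finset.sum_singleton, hT]
        show (t + t⁻¹)⁻¹ + ((t + t⁻¹)⁻¹ + (t ^ (0 + 2) + t⁻¹ ^ (0 + 2)) / (t ^ (0 + 1) + t⁻¹ ^ (0 + 1))) = t + t⁻¹
        norm_num
        field_simp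
        ring
      · rw [dInf_hasSum_src_iff _ _ (dInf_srcS_succ n),
          Finset.sum_pair (by simp), hT]
        show (t ^ (n + 1 + 2) + t⁻¹ ^ (n + 1 + 2)) / (t ^ (n + 1 + 1) + t⁻¹ ^ (n + 1 + 1)) +
            (t ^ (n + 1) + t⁻¹ ^ (n + 1)) / (t ^ (n + 2) + t⁻¹ ^ (n + 2)) = t + t⁻¹
        have key := dInf_key ht (n + 1)
        rw [show n + 1 + 1 = n + 2 from rfl] at key ⊢
        rw [← add_div, div_eq_iff (hck' (n + 2))]
        linear_combination key - (2 * t ^ (n + 1) + 2 * t⁻¹ ^ (n + 1)) * htt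
    · intro _ v
      have hempty : {e : DInfStarE | dInfS e = v ∧ dInfT e = v} = ∅ := by
        ext e
        simp only [Set.mem_setOf_eq, Set.mem_empty_iff_false, iff_false, not_and]
        intro h1 h2
        exact dInf_noLoop e (h1.trans h2.symm)
      rw [hempty]
      exact ⟨Set.finite_empty, by simp⟩
  · rintro W ⟨hpos, ⟨σ, hσinv, hσs, hσt, hσw⟩, hfair, -⟩
    have hrecip : ∀ e, W (σ e) = (W e)⁻¹ := fun e => eq_inv_of_mul_eq_one_right (hσw e)
    have hσ_inl : ∀ b, σ (.inl (b, false)) = .inl (b, true) := fun b =>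
      dInf_edgeTo_inl b _ (by rw [hσs]; rfl) (by rw [hσt]; rfl)
    have hσ_inr : ∀ n, σ (.inr (n, false)) = .inr (n, true) := fun n =>
      dInf_edgeBack n _ (by rw [hσs]; rfl) (by rw [hσt]; rfl)
    have hWinl : ∀ b, W (.inl (b, false)) = t + t⁻¹ := by
      intro b
      have h := (dInf_hasSum_src_iff _ _ (dInf_srcS_inl b) W |T|).mp (hfair (.inl b))
      rw [Finset.sum_singleton, hT] at h
      exact h
    have hWinl' : ∀ b, W (.inl (b, true)) = (t + t⁻¹)⁻¹ := by
      intro b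
      rw [← hσ_inl b, hrecip, hWinl]
    have hWfwd : ∀ n, W (.inr (n, false)) =
        (t ^ (n + 2) + t⁻¹ ^ (n + 2)) / (t ^ (n + 1) + t⁻¹ ^ (n + 1)) := by
      intro n
      induction n with
      | zero =>
        have h := (dInf_hasSum_src_iff _ _ dInf_srcS_zero W |T|).mp (hfair (.inr 0))
        rw [Finset.sum_insert (by decide), Finset.sum_insert (by decide),
          Finset.sum_singleton, hT, hWinl' true, hWinl' false] at h
        have hval : (t + t⁻¹) - ((t + t⁻¹)⁻¹ + (t + t⁻¹)⁻¹) =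
            (t ^ (0 + 2) + t⁻¹ ^ (0 + 2)) / (t ^ (0 + 1) + t⁻¹ ^ (0 + 1)) := by
          norm_num
          rw [eq_div_iff (by positivity)]
          field_simp
          ring
        linarith [hval]
      | succ n ih =>
        have h := (dInf_hasSum_src_iff _ _ (dInf_srcS_succ n) W |T|).mp (hfair (.inr (n + 1)))
        rw [Finset.sum_pair (by simp), hT] at h
        have hback : W (.inr (n, true)) =
            (t ^ (n + 1) + t⁻¹ ^ (n + 1)) / (t ^ (n + 2) + t⁻¹ ^ (n + 2)) := by
          rw [← hσ_inr n, hrecip, ih, inv_div]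
        rw [hback] at h
        have hval : (t + t⁻¹) - (t ^ (n + 1) + t⁻¹ ^ (n + 1)) / (t ^ (n + 2) + t⁻¹ ^ (n + 2)) =
            (t ^ (n + 1 + 2) + t⁻¹ ^ (n + 1 + 2)) / (t ^ (n + 1 + 1) + t⁻¹ ^ (n + 1 + 1)) := by
          have key := dInf_key ht (n + 1)
          rw [show n + 1 + 1 = n + 2 from rfl] at key ⊢
          rw [sub_eq_iff_eq_add, ← add_div, eq_comm, div_eq_iff (hck' (n + 2))]
          linear_combination key - (2 * t ^ (n + 1) + 2 * t⁻¹ ^ (n + 1)) * htt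
        linarith [hval]
    have hWback : ∀ n, W (.inr (n, true)) =
        (t ^ (n + 1) + t⁻¹ ^ (n + 1)) / (t ^ (n + 2) + t⁻¹ ^ (n + 2)) := by
      intro n
      rw [← hσ_inr n, hrecip, hWfwd, inv_div]
    funext e
    rcases e with ⟨b, _|_⟩ | ⟨n, _|_⟩
    · exact (hWinl b).trans rfl
    · exact (hWinl' b).trans rfl
    · exact (hWfwd n).trans rfl
    · exact (hWback n).trans rfl
end

section
/- Let 0 < t < 1 and let Γ be the oriented graph E₆^{(1)} with seven vertices b₁, b₂, b₃, b₄, b₅, m₁, m₂ and exactly one edge in each direction between each of the pairs (b₁,b₂), (b₂,b₃), (b₃,b₄), (b₄,b₅), (b₃,m₁), (m₁,m₂), and no other edges. Then Γ admits no fair and balanced T-cost for any real T with |T| = t + t⁻¹. (For t = 1, i.e. |T| = 2, such a cost exists.) -/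
/-- The six undirected edges of the graph `E₆⁽¹⁾`: vertices `0,…,4` form the long arm
`b₁,…,b₅`, vertex `5` is `m₁` (attached to `b₃ = 2`) and vertex `6` is `m₂`. -/
def e6Pairs : Fin 6 → Fin 7 × Fin 7
  | 0 => (0, 1)
  | 1 => (1, 2)
  | 2 => (2, 3)
  | 3 => (3, 4)
  | 4 => (2, 5)
  | 5 => (5, 6)

def e6S : Fin 6 × Bool → Fin 7
  | (i, false) => (e6Pairs i).1
  | (i, true) => (e6Pairs i).2

def e6T : Fin 6 × Bool → Fin 7
  | (i, false) => (e6Pairs i).2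
  | (i, true) => (e6Pairs i).1

lemma e6_hasSum_iff (W : Fin 6 × Bool → ℝ) (v : Fin 7) (a : ℝ) :
    HasSum (fun e : {e : Fin 6 × Bool // e6S e = v} => W e.1) a ↔
    ∑ e ∈ Finset.univ.filter (fun e => e6S e = v), W e = a := by
  have key : ∑ e ∈ Finset.univ.filter (fun e => e6S e = v), W e
      = ∑ e : {e : Fin 6 × Bool // e6S e = v}, W e.1 :=
    Finset.sum_subtype _ (fun x => by simp) W
  constructor
  · intro h
    rw [key]
    exact (hasSum_fintype _).unique h
  · intro h
    rw [key] at h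
    exact h ▸ hasSum_fintype _

noncomputable def e6w : Fin 6 → ℝ
  | 0 => 2
  | 1 => 3/2
  | 2 => 2/3
  | 3 => 1/2
  | 4 => 2/3
  | 5 => 1/2

noncomputable def e6W : Fin 6 × Bool → ℝ := fun e =>
  if e.2 then (e6w e.1)⁻¹ else e6w e.1

lemma e6_rev : ∀ f e : Fin 6 × Bool, e6S f = e6T e → e6T f = e6S e → f = (e.1, !e.2) := by
  decide

set_option maxHeartbeats 1000000 in
theorem e6_no_fairBalancedCost (t : ℝ) (ht0 : 0 < t) (ht1 : t < 1) :
    (∀ T : ℝ, |T| = t + t⁻¹ → ¬ ∃ W : Fin 6 × Bool → ℝ, FairBalancedCost e6S e6T T W) ∧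
    (∀ T : ℝ, |T| = 2 → ∃ W : Fin 6 × Bool → ℝ, FairBalancedCost e6S e6T T W) := by
  constructor
  · rintro T hT ⟨W, hpos, ⟨σ, hinv, hσs, hσt, hbal⟩, hfair, _⟩
    obtain ⟨S, hSdef⟩ : ∃ S : ℝ, S = t + t⁻¹ := ⟨_, rfl⟩
    rw [← hSdef] at hT
    have hS2 : 2 < S := by
      have h1 : 0 < (t - 1) ^ 2 := by
        have : t - 1 ≠ 0 := by intro h; linarith [sub_eq_zero.1 h]
        positivity
      have h2 : t * t⁻¹ = 1 := mul_inv_cancel₀ ht0.ne'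
      rw [hSdef]
      nlinarith [inv_pos.2 ht0]
    -- balanced: W (i,false) * W (i,true) = 1
    have hrev : ∀ e : Fin 6 × Bool, σ e = (e.1, !e.2) := fun e =>
      e6_rev (σ e) e (hσs e) (hσt e)
    have hprod : ∀ i : Fin 6, W (i, false) * W (i, true) = 1 := by
      intro i
      have := hbal (i, false)
      rwa [hrev (i, false)] at this
    -- vertex sums
    have hsum : ∀ v : Fin 7,
        ∑ e ∈ Finset.univ.filter (fun e => e6S e = v), W e = S := by
      intro v
      have := (e6_hasSum_iff W v |T|).1 (hfair v)
      rwa [hT] at this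
    have h0 := hsum 0
    have h1 := hsum 1
    have h2 := hsum 2
    have h3 := hsum 3
    have h4 := hsum 4
    have h5 := hsum 5
    have h6 := hsum 6
    rw [Finset.sum_filter] at h0 h1 h2 h3 h4 h5 h6
    simp [Finset.sum_filter, Fintype.sum_prod_type, Fin.sum_univ_six, e6S, e6Pairs]
      at h0 h1 h2 h3 h4 h5 h6
    have p0 := hprod 0
    have p1 := hprod 1
    have p2 := hprod 2
    have p3 := hprod 3
    have p4 := hprod 4
    have p5 := hprod 5
    have w0 := hpos (0, false); have w0' := hpos (0, true)
    have w1 := hpos (1, false); have w1' := hpos (1, true)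
    have w2 := hpos (2, false); have w2' := hpos (2, true)
    have w3 := hpos (3, false); have w3' := hpos (3, true)
    have w4 := hpos (4, false); have w4' := hpos (4, true)
    have w5 := hpos (5, false); have w5' := hpos (5, true)
    -- derive contradiction
    have hS0 : (0:ℝ) < S := by linarith
    have e3f : W (3, false) * S = 1 := by rw [h4] at p3; exact p3
    have e2t : W (2, true) = S - W (3, false) := by linarith
    rw [e2t] at p2
    have ea : W (2, false) * (S * S - 1) = S := by
      linear_combination S * p2 + W (2, false) * e3f
    have e5f : W (5, false) * S = 1 := by rw [h6] at p5; exact p5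
    have e4t : W (4, true) = S - W (5, false) := by linarith
    rw [e4t] at p4
    have ec : W (4, false) * (S * S - 1) = S := by
      linear_combination S * p4 + W (4, false) * e5f
    have e0t : W (0, true) * S = 1 := by rw [h0] at p0; linarith [p0]
    have e1f : W (1, false) = S - W (0, true) := by linarith
    rw [e1f] at p1
    have eb : W (1, true) * (S * S - 1) = S := by
      linear_combination S * p1 + W (1, true) * e0t
    have hfin : S * (S * S - 1) = 3 * S := by
      linear_combination ea + eb + ec - (S * S - 1) * h2
    have h4' : (2:ℝ) * 2 < S * S := mul_lt_mul hS2 hS2.le (by norm_num) (by linarith)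
    have hgt : S * 4 < S * (S * S) :=
      mul_lt_mul_of_pos_left (by linarith) hS0
    linarith [hfin, hgt]
  · intro T hT
    refine ⟨e6W, ?_, ?_, ?_, ?_⟩
    · intro e; fin_cases e <;> norm_num [e6W, e6w]
    · refine ⟨fun e => (e.1, !e.2), fun e => by simp, ?_, ?_, ?_⟩
      · intro e; fin_cases e <;> rfl
      · intro e; fin_cases e <;> rfl
      · intro e; fin_cases e <;> norm_num [e6W, e6w]
    · intro v
      apply (e6_hasSum_iff _ v _).2
      rw [hT]
      fin_cases v <;>
        · rw [Finset.sum_filter]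
          simp [Finset.sum_filter, Fintype.sum_prod_type, Fin.sum_univ_six, e6S, e6Pairs]
          norm_num [e6W, e6w]
    · intro _ v
      constructor
      · exact Set.toFinite _
      · have key : ∀ (v : Fin 7) (e : Fin 6 × Bool), ¬(e6S e = v ∧ e6T e = v) := by decide
        have : {e : Fin 6 × Bool | e6S e = v ∧ e6T e = v} = ∅ := by
          ext e; simp [key v e]
        rw [this]; simp
end

section
/- Let −1 < q < 0 and set t = −q ∈ (0,1). Define r : ℕ → ℝ by r_n = Σ_{k=0}^{2n} (−1)^k t^{k−n}. Then: (a) r_n > 0 for all n ∈ ℕ; (b) r_{n+1} + r_{n−1} = (t + t⁻¹)·r_n for all n ≥ 1; (c) 1 + r_1/r_0 = t + t⁻¹. Consequently, the oriented graph A_∞' with vertex set ℕ, exactly one loop at the vertex 0, and exactly one edge in each direction between n and n+1 for every n ∈ ℕ, endowed with the cost W(loop) = 1, W(n → n+1) = r_{n+1}/r_n, W(n+1 → n) = r_n/r_{n+1}, carries W as a fair and balanced (q + q⁻¹)-cost. -/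
/-- `r n = ∑_{k=0}^{2n} (-1)^k t^{k-n}`. -/
noncomputable def rSeq (t : ℝ) (n : ℕ) : ℝ :=
  ∑ k ∈ Finset.range (2 * n + 1), (-1 : ℝ) ^ k * t ^ ((k : ℤ) - (n : ℤ))

/-- Edges of the graph `A_∞'`: `Sum.inl ()` is the loop at `0`, `Sum.inr (n, false)`
goes from `n` to `n + 1` and `Sum.inr (n, true)` from `n + 1` to `n`. -/
abbrev AInfPrimeE : Type := Unit ⊕ (ℕ × Bool)

def aInfS : AInfPrimeE → ℕ
  | .inl _ => 0
  | .inr (n, false) => n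
  | .inr (n, true) => n + 1

def aInfT : AInfPrimeE → ℕ
  | .inl _ => 0
  | .inr (n, false) => n + 1
  | .inr (n, true) => n

noncomputable def aInfW (t : ℝ) : AInfPrimeE → ℝ
  | .inl _ => 1
  | .inr (n, false) => rSeq t (n + 1) / rSeq t n
  | .inr (n, true) => rSeq t n / rSeq t (n + 1)

lemma rSeq_closed (t : ℝ) (ht : 0 < t) (n : ℕ) :
    rSeq t n = (t ^ (2 * n + 1) + 1) / ((1 + t) * t ^ n) := by
  have ht0 : t ≠ 0 := ne_of_gt ht
  have h1t : (1 : ℝ) + t ≠ 0 := by positivity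
  have h1 : rSeq t n = (∑ k ∈ Finset.range (2 * n + 1), (-t) ^ k) * (t ^ n)⁻¹ := by
    rw [Finset.sum_mul]
    refine Finset.sum_congr rfl fun k hk => ?_
    rw [zpow_sub₀ ht0, zpow_natCast, zpow_natCast, neg_pow]
    ring
  have h2 : (∑ k ∈ Finset.range (2 * n + 1), (-t) ^ k)
      = ((-t) ^ (2 * n + 1) - 1) / (-t - 1) := by
    rw [geom_sum_eq (by nlinarith : (-t : ℝ) ≠ 1)]
  have h3 : (-t : ℝ) ^ (2 * n + 1) = -(t ^ (2 * n + 1)) :=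
    Odd.neg_pow ⟨n, by ring⟩ t
  rw [h1, h2, h3]
  have htn : (t : ℝ) ^ n ≠ 0 := pow_ne_zero _ ht0
  have h2t : -t - 1 ≠ 0 := by intro h; apply h1t; linarith
  field_simp
  ring

lemma rSeq_pos (t : ℝ) (ht : 0 < t) (n : ℕ) : 0 < rSeq t n := by
  rw [rSeq_closed t ht]
  positivity

lemma rSeq_rec (t : ℝ) (ht : 0 < t) (m : ℕ) :
    rSeq t (m + 2) + rSeq t m = (t + t⁻¹) * rSeq t (m + 1) := by
  have ht0 : t ≠ 0 := ne_of_gt ht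
  have h1t : (1 : ℝ) + t ≠ 0 := by positivity
  have htn : (t : ℝ) ^ m ≠ 0 := pow_ne_zero _ ht0
  rw [rSeq_closed t ht, rSeq_closed t ht, rSeq_closed t ht]
  field_simp
  ring

lemma rSeq_zero (t : ℝ) : rSeq t 0 = 1 := by
  simp [rSeq]

lemma rSeq_one_div (t : ℝ) (ht : 0 < t) : 1 + rSeq t 1 / rSeq t 0 = t + t⁻¹ := by
  have ht0 : t ≠ 0 := ne_of_gt ht
  have h1t : (1 : ℝ) + t ≠ 0 := by positivity
  rw [rSeq_zero, rSeq_closed t ht 1]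
  field_simp
  ring

lemma hasSum_vertex (t : ℝ) (ht : 0 < t) (v : ℕ) :
    HasSum (fun e : {e : AInfPrimeE // aInfS e = v} => aInfW t e.1) (t + t⁻¹) := by
  have key : HasSum (Set.indicator {e : AInfPrimeE | aInfS e = v} (aInfW t)) (t + t⁻¹) := by
    cases v with
    | zero =>
      have hne : (Sum.inl () : AInfPrimeE) ≠ Sum.inr (0, false) := by simp
      have := hasSum_sum_of_ne_finset_zero (s := ({Sum.inl (), Sum.inr (0, false)} : Finset AInfPrimeE))
        (L := SummationFilter.unconditional _) (f := Set.indicator {e : AInfPrimeE | aInfS e = 0} (aInfW t)) ?_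
      · rwa [Finset.sum_pair hne, Set.indicator_of_mem (by simp [aInfS]),
          Set.indicator_of_mem (by simp [aInfS]),
          show aInfW t (Sum.inl ()) + aInfW t (Sum.inr (0, false)) = t + t⁻¹ by
            simpa [aInfW] using rSeq_one_div t ht] at this
      · rintro (⟨⟩ | ⟨n, _ | _⟩) hb
        · simp at hb
        · apply Set.indicator_of_notMem
          simp only [Set.mem_setOf_eq, aInfS]
          rintro rfl
          simp at hb
        · apply Set.indicator_of_notMem
          simp [aInfS]
    | succ m =>
      have hne : (Sum.inr (m + 1, false) : AInfPrimeE) ≠ Sum.inr (m, true) := by simp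
      have := hasSum_sum_of_ne_finset_zero
        (s := ({Sum.inr (m + 1, false), Sum.inr (m, true)} : Finset AInfPrimeE))
        (L := SummationFilter.unconditional _) (f := Set.indicator {e : AInfPrimeE | aInfS e = m + 1} (aInfW t)) ?_
      · rwa [Finset.sum_pair hne, Set.indicator_of_mem (by simp [aInfS]),
          Set.indicator_of_mem (by simp [aInfS]),
          show aInfW t (Sum.inr (m + 1, false)) + aInfW t (Sum.inr (m, true)) = t + t⁻¹ by
            have h1 : rSeq t (m + 1) ≠ 0 := ne_of_gt (rSeq_pos t ht _)
            simp only [aInfW]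
            rw [← add_div, rSeq_rec t ht m, mul_div_assoc, div_self h1, mul_one]] at this
      · rintro (⟨⟩ | ⟨n, _ | _⟩) hb
        · apply Set.indicator_of_notMem; simp [aInfS]
        · apply Set.indicator_of_notMem
          simp only [Set.mem_setOf_eq, aInfS]
          rintro rfl
          simp at hb
        · apply Set.indicator_of_notMem
          simp only [Set.mem_setOf_eq, aInfS, add_left_inj]
          rintro rfl
          simp at hb
  exact (hasSum_subtype_iff_indicator).2 key

theorem aInfPrime_fairBalancedCost (q : ℝ) (hq0 : -1 < q) (hq1 : q < 0) :
    (∀ n : ℕ, 0 < rSeq (-q) n) ∧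
    (∀ n : ℕ, 1 ≤ n →
      rSeq (-q) (n + 1) + rSeq (-q) (n - 1) = (-q + (-q)⁻¹) * rSeq (-q) n) ∧
    (1 + rSeq (-q) 1 / rSeq (-q) 0 = -q + (-q)⁻¹) ∧
    FairBalancedCost aInfS aInfT (q + q⁻¹) (aInfW (-q)) := by
  have ht : (0 : ℝ) < -q := by linarith
  have hr : ∀ n, 0 < rSeq (-q) n := rSeq_pos _ ht
  have habs : |q + q⁻¹| = -q + (-q)⁻¹ := by
    have hqi : q⁻¹ < 0 := inv_neg''.mpr hq1
    rw [abs_of_neg (by linarith), inv_neg]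
    ring
  refine ⟨hr, ?_, rSeq_one_div _ ht, ?_, ?_, ?_, ?_⟩
  · intro n hn
    obtain ⟨m, rfl⟩ := Nat.exists_eq_add_of_le hn
    simpa [Nat.add_sub_cancel, add_comm, add_assoc, add_left_comm] using rSeq_rec (-q) ht m
  · -- positivity of W
    rintro (⟨⟩ | ⟨n, _ | _⟩) <;> simp only [aInfW] <;>
      first
        | exact one_pos
        | exact div_pos (hr _) (hr _)
  · -- involution
    refine ⟨fun e => match e with
      | .inl u => .inl u
      | .inr (n, b) => .inr (n, !b), ?_, ?_, ?_, ?_⟩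
    · rintro (⟨⟩ | ⟨n, b⟩) <;> simp
    · rintro (⟨⟩ | ⟨n, _ | _⟩) <;> rfl
    · rintro (⟨⟩ | ⟨n, _ | _⟩) <;> rfl
    · rintro (⟨⟩ | ⟨n, _ | _⟩) <;> simp only [Bool.not_false, Bool.not_true, aInfW]
      · norm_num
      · rw [div_mul_div_comm, mul_comm, div_self (mul_pos (hr _) (hr _)).ne']
      · rw [div_mul_div_comm, mul_comm, div_self (mul_pos (hr _) (hr _)).ne']
  · -- fair
    intro v
    rw [habs]
    exact hasSum_vertex (-q) ht v
  · -- positivity clause is vacuous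
    intro hT
    exfalso
    have hqi : q⁻¹ < 0 := inv_neg''.mpr hq1
    linarith
end

section
/- Let n be a positive integer and let M be an n × n complex matrix with M · conj(M) = −1ₙ, where conj(M) denotes the entrywise complex conjugate of M and 1ₙ the identity matrix. Then n is even, and the complex dimension of the eigenspace ker(Mᴴ·M − 1ₙ) of Mᴴ·M for the eigenvalue 1 is even (here Mᴴ denotes the conjugate transpose). -/
open Matrix

lemma even_aux (m : ℕ) (C : Matrix (Fin m) (Fin m) ℂ)
    (hC : C * C.map (starRingEnd ℂ) = -(1 : Matrix (Fin m) (Fin m) ℂ)) : Even m := by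
  by_contra hodd
  rw [Nat.not_even_iff_odd] at hodd
  have hdet := congrArg Matrix.det hC
  have hmapdet : (C.map (starRingEnd ℂ)).det = (starRingEnd ℂ) C.det := by
    rw [← RingHom.mapMatrix_apply, ← RingHom.map_det]
  rw [Matrix.det_mul, Matrix.det_neg, Matrix.det_one, mul_one, Fintype.card_fin,
    hodd.neg_one_pow, hmapdet, Complex.mul_conj] at hdet
  have h2 : Complex.normSq C.det = -1 := by exact_mod_cast hdet
  nlinarith [Complex.normSq_nonneg C.det]

open Matrix in
theorem even_dim_of_antilinear_sqrt_neg_one (n : ℕ) (hn : 0 < n)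
    (M : Matrix (Fin n) (Fin n) ℂ)
    (h : M * M.map (starRingEnd ℂ) = -(1 : Matrix (Fin n) (Fin n) ℂ)) :
    Even n ∧
    Even (Module.finrank ℂ
      (LinearMap.ker (Mᴴ * M - (1 : Matrix (Fin n) (Fin n) ℂ)).mulVecLin)) := by
  classical
  set N := M.map (starRingEnd ℂ) with hN
  refine ⟨even_aux n M h, ?_⟩
  have hcc : ∀ A : Matrix (Fin n) (Fin n) ℂ,
      (A.map (starRingEnd ℂ)).map (starRingEnd ℂ) = A := by
    intro A
    funext i j
    simp [Matrix.map_apply]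
  -- basic invertibility facts
  have hMinv : M * (-N) = 1 := by rw [mul_neg, h, neg_neg]
  have hMi : M⁻¹ = -N := inv_eq_right_inv hMinv
  have hN' : N = -M⁻¹ := by rw [hMi, neg_neg]
  have hdetM : IsUnit M.det := isUnit_det_of_right_inverse hMinv
  have hMM : M * M⁻¹ = 1 := mul_nonsing_inv M hdetM
  have hNM : N * M = -1 := by
    have h1 : (-N) * M = 1 := mul_eq_one_comm.mp hMinv
    rw [neg_mul] at h1
    exact neg_eq_iff_eq_neg.mp h1
  have hNconj : N.map (starRingEnd ℂ) = M := hcc M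
  have hMiconj : M⁻¹.map (starRingEnd ℂ) = -M := by
    rw [hMi, ← RingHom.mapMatrix_apply, map_neg, RingHom.mapMatrix_apply, hNconj]
  -- the antilinear map
  set g : (Fin n → ℂ) → (Fin n → ℂ) := fun x => M⁻¹.mulVec (star x) with hg
  have hstarmul : ∀ (A : Matrix (Fin n) (Fin n) ℂ) (v : Fin n → ℂ),
      star (A.mulVec v) = (A.map (starRingEnd ℂ)).mulVec (star v) := by
    intro A v
    funext i
    simp [Matrix.mulVec, dotProduct, Pi.star_apply, map_sum, Matrix.map_apply]
  have hgg : ∀ x, g (g x) = -x := by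
    intro x
    rw [hg]
    simp only
    rw [hstarmul, star_star, Matrix.mulVec_mulVec, hMiconj, hMi, neg_mul_neg, hNM,
      Matrix.neg_mulVec, Matrix.one_mulVec]
  set K := LinearMap.ker (Mᴴ * M - (1 : Matrix (Fin n) (Fin n) ℂ)).mulVecLin with hK
  have hmem : ∀ x, x ∈ K ↔ (Mᴴ * M).mulVec x = x := by
    intro x
    rw [hK, LinearMap.mem_ker, Matrix.mulVecLin_apply, Matrix.sub_mulVec,
      Matrix.one_mulVec, sub_eq_zero]
  -- conjugate transpose relations
  have hHt : Mᴴ = Nᵀ := rfl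
  have hHmapconj : (Mᴴ * M).map (starRingEnd ℂ) = Mᵀ * N := by
    rw [Matrix.map_mul, hHt, ← Matrix.transpose_map, hcc]
  have hdetMT : IsUnit Mᵀ.det := by rwa [Matrix.det_transpose]
  have hMTMT : Mᵀ⁻¹ * Mᵀ = 1 := nonsing_inv_mul Mᵀ hdetMT
  have hMH : Mᴴ = -Mᵀ⁻¹ := by
    rw [hHt, hN', Matrix.transpose_neg, Matrix.transpose_nonsing_inv]
  -- kernel invariance
  have hKg : ∀ x, x ∈ K → g x ∈ K := by
    intro x hx
    rw [hmem] at hx ⊢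
    have hz : (Mᵀ * N).mulVec (star x) = star x := by
      rw [← hHmapconj, ← hstarmul, hx]
    rw [hN'] at hz
    -- (Mᵀ * -M⁻¹) z = z  ⇒  (Mᵀ * M⁻¹) z = -z
    have hz2 : (Mᵀ * M⁻¹).mulVec (star x) = -(star x) := by
      rw [mul_neg, Matrix.neg_mulVec] at hz
      exact neg_eq_iff_eq_neg.mp hz
    have hz3 : M⁻¹.mulVec (star x) = -(Mᵀ⁻¹.mulVec (star x)) := by
      have := congrArg (fun v => Mᵀ⁻¹.mulVec v) hz2
      simp only [Matrix.mulVec_mulVec] at this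
      rw [← mul_assoc, hMTMT, one_mul, Matrix.mulVec_neg] at this
      exact this
    rw [hg]
    simp only
    rw [Matrix.mulVec_mulVec, mul_assoc, hMM, mul_one, hMH, Matrix.neg_mulVec, hz3]
  -- pass to the kernel subspace
  set d := Module.finrank ℂ K with hd
  have : FiniteDimensional ℂ K := inferInstance
  set b : Module.Basis (Fin d) ℂ K := Module.finBasis ℂ K with hb
  set gK : K → K := fun v => ⟨g v, hKg v v.2⟩ with hgK
  set C : Matrix (Fin d) (Fin d) ℂ := fun i j => b.repr (gK (b j)) i with hC
  -- expansion of elements of K in the basis, at the level of ambient vectors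
  have hrepr : ∀ v : K, (v : Fin n → ℂ) = ∑ i, b.repr v i • ((b i : K) : Fin n → ℂ) := by
    intro v
    have := b.sum_repr v
    have h2 := congrArg (Submodule.subtype K) this
    rw [map_sum] at h2
    simp only [Submodule.coe_subtype, SetLike.val_smul, _root_.map_smul] at h2
    exact h2.symm
  -- conjugate linearity of g on finite sums
  have hgsum : ∀ (a : Fin d → ℂ) (v : Fin d → (Fin n → ℂ)),
      g (∑ i, a i • v i) = ∑ i, (starRingEnd ℂ) (a i) • g (v i) := by
    intro a v
    rw [hg]
    simp only
    rw [star_sum]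
    have hss : ∀ i, star (a i • v i) = (starRingEnd ℂ) (a i) • star (v i) := by
      intro i
      funext j
      simp [Pi.star_apply, Pi.smul_apply]
    simp only [hss]
    rw [← Matrix.mulVecLin_apply, map_sum]
    apply Finset.sum_congr rfl
    intro i _
    rw [Matrix.mulVecLin_apply, Matrix.mulVec_smul]
  -- key identity: C * conj C = -1
  have hCC : C * C.map (starRingEnd ℂ) = -(1 : Matrix (Fin d) (Fin d) ℂ) := by
    ext i j
    -- compute g (g (b j)) two ways
    have e1 : g ((gK (b j) : K) : Fin n → ℂ) = -((b j : K) : Fin n → ℂ) := by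
      rw [hgK]; simp only; exact hgg _
    have e2 : g ((gK (b j) : K) : Fin n → ℂ)
        = ∑ k, (starRingEnd ℂ) (C k j) • ((gK (b k) : K) : Fin n → ℂ) := by
      rw [hrepr (gK (b j)), hgsum]
    have e3 : ((∑ k, (starRingEnd ℂ) (C k j) • gK (b k) : K) : Fin n → ℂ)
        = ((-(b j) : K) : Fin n → ℂ) := by
      push_cast
      rw [← e2, e1]
    have e4 : (∑ k, (starRingEnd ℂ) (C k j) • gK (b k) : K) = -(b j) :=
      Subtype.ext e3
    have e5 := congrArg (fun v => b.repr v i) e4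
    simp only [map_sum, _root_.map_smul, map_neg, Finsupp.coe_neg, Finsupp.coe_smul,
      Finsupp.coe_finset_sum, Finset.sum_apply, Pi.smul_apply, Pi.neg_apply,
      smul_eq_mul, Module.Basis.repr_self] at e5
    rw [Matrix.mul_apply, Matrix.neg_apply, Matrix.one_apply]
    calc ∑ k, C i k * (C.map (starRingEnd ℂ)) k j
        = ∑ k, (starRingEnd ℂ) (C k j) * b.repr (gK (b k)) i := by
          apply Finset.sum_congr rfl
          intro k _
          rw [Matrix.map_apply, hC, mul_comm]
      _ = -(Finsupp.single j 1 : Fin d →₀ ℂ) i := e5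
      _ = -(if i = j then 1 else 0) := by
          rw [Finsupp.single_apply]
          simp [eq_comm]
  have := even_aux d C hCC
  rwa [hd] at this
end
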